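/- arXiv:2012.10678 — 13 statements merged into one kernel-verified Lean document; each statement's English description precedes it below -/
import Mathlib

section
/- Suppose the distribution functions f₋₁, f₀, f₁ : ℤ × ℕ → ℝ satisfy the MRT-LB evolution equations for all j ∈ ℤ and n ∈ ℕ, and let φⱼⁿ be the associated macroscopic variable. Then for every j ∈ ℤ and every n ≥ 2, the macroscopic variable satisfies the explicit four-level finite-difference scheme φⱼⁿ⁺¹ = α₁φⱼ₋₁ⁿ + α₂φⱼⁿ + α₁φⱼ₊₁ⁿ + β₁φⱼ₋₁ⁿ⁻¹ + β₂φⱼⁿ⁻¹ + β₁φⱼ₊₁ⁿ⁻¹ + γφⱼⁿ⁻² + s₁s₂·Δt·R, where α₁ = 1 − s₁/2 − ω₀s₂/2, α₂ = (ω₀−1)s₂ + 1, β₁ = ω₀s₁s₂/2 − s₁s₂/2 − ω₀s₂/2 + s₁/2 + s₂ − 1, β₂ = −ω₀s₁s₂ + ω₀s₂ + s₁ − 1, γ = (s₁−1)(s₂−1). -/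
/-!
In the moments `φ`, `f₁ - f₋₁`, `f₀`, the collision raises the mass by `Δt R`, multiplies the
momentum by `1 - s₁` and relaxes `f₀` towards `ω₀ φ`; streaming then sends the post-collision
populations `f₋₁`, `f₁` of site `j` to `j - 1`, `j + 1`. Eliminating the momentum over two time
steps leaves a three-level scheme for `φ` forced by the second space difference `D f₀`. Since
`D f₀ (n + 1) = (1 - s₂) D f₀ n + ω₀ s₂ D φ n`, the source cancelling, subtracting `1 - s₂` times
the three-level scheme at the previous time eliminates `f₀` as well.
-/

def secondDiff (g : ℤ → ℕ → ℝ) (j : ℤ) (n : ℕ) : ℝ :=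
  g (j - 1) n - 2 * g j n + g (j + 1) n

section

variable {Δt R ω₀ ω₁ s₁ s₂ : ℝ} {fm f0 f1 φ : ℤ → ℕ → ℝ}

theorem fm_streamed_eq (hω₁ : ω₁ = (1 - ω₀) / 2)
    (hφ : ∀ (j : ℤ) (n : ℕ), φ j n = fm j n + f0 j n + f1 j n + (Δt / 2) * R)
    (hevm : ∀ (j : ℤ) (n : ℕ), fm j (n + 1) =
      fm (j + 1) n - (s₁ / 2) * (fm (j + 1) n - f1 (j + 1) n)
        + (s₂ / 2) * f0 (j + 1) n - (ω₀ * s₂ / 2) * φ (j + 1) n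
        + (ω₁ + ω₀ * s₂ / 4) * Δt * R)
    (hev0 : ∀ (j : ℤ) (n : ℕ), f0 j (n + 1) =
      (1 - s₂) * f0 j n + ω₀ * s₂ * φ j n + ω₀ * (1 - s₂ / 2) * Δt * R)
    (j : ℤ) (n : ℕ) :
    fm (j - 1) (n + 1) =
      (φ j n + Δt * R / 2 - f0 j (n + 1) - (1 - s₁) * (f1 j n - fm j n)) / 2 := by
  rw [hevm, sub_add_cancel, hev0, hφ, hω₁]
  ring

theorem f1_streamed_eq (hω₁ : ω₁ = (1 - ω₀) / 2)
    (hφ : ∀ (j : ℤ) (n : ℕ), φ j n = fm j n + f0 j n + f1 j n + (Δt / 2) * R)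
    (hev0 : ∀ (j : ℤ) (n : ℕ), f0 j (n + 1) =
      (1 - s₂) * f0 j n + ω₀ * s₂ * φ j n + ω₀ * (1 - s₂ / 2) * Δt * R)
    (hevp : ∀ (j : ℤ) (n : ℕ), f1 j (n + 1) =
      f1 (j - 1) n + (s₁ / 2) * (fm (j - 1) n - f1 (j - 1) n)
        + (s₂ / 2) * f0 (j - 1) n - (ω₀ * s₂ / 2) * φ (j - 1) n
        + (ω₁ + ω₀ * s₂ / 4) * Δt * R)
    (j : ℤ) (n : ℕ) :
    f1 (j + 1) (n + 1) =
      (φ j n + Δt * R / 2 - f0 j (n + 1) + (1 - s₁) * (f1 j n - fm j n)) / 2 := by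
  rw [hevp, add_sub_cancel_right, hev0, hφ, hω₁]
  ring

theorem phi_add_two_eq
    (hφ : ∀ (j : ℤ) (n : ℕ), φ j n = fm j n + f0 j n + f1 j n + (Δt / 2) * R)
    (hfm : ∀ (j : ℤ) (n : ℕ), fm (j - 1) (n + 1) =
      (φ j n + Δt * R / 2 - f0 j (n + 1) - (1 - s₁) * (f1 j n - fm j n)) / 2)
    (hf1 : ∀ (j : ℤ) (n : ℕ), f1 (j + 1) (n + 1) =
      (φ j n + Δt * R / 2 - f0 j (n + 1) + (1 - s₁) * (f1 j n - fm j n)) / 2)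
    (j : ℤ) (n : ℕ) :
    φ j (n + 2) =
      (1 - s₁ / 2) * (φ (j - 1) (n + 1) + φ (j + 1) (n + 1)) - (1 - s₁) * φ j n
        + s₁ * Δt * R - (secondDiff f0 j (n + 2) + (1 - s₁) * secondDiff f0 j (n + 1)) / 2 := by
  unfold secondDiff
  -- `ring_nf` also normalises shifted indices such as `j + 1 - 1`
  linear_combination (norm := ring_nf) hφ j (n + 2) + hfm (j + 1) (n + 1) + hf1 (j - 1) (n + 1)
    - (1 - s₁) / 2 * (hφ (j - 1) (n + 1) + hφ (j + 1) (n + 1))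
    - (1 - s₁) * (hfm j n + hf1 j n)

theorem secondDiff_f0_succ
    (hev0 : ∀ (j : ℤ) (n : ℕ), f0 j (n + 1) =
      (1 - s₂) * f0 j n + ω₀ * s₂ * φ j n + ω₀ * (1 - s₂ / 2) * Δt * R)
    (j : ℤ) (n : ℕ) :
    secondDiff f0 j (n + 1) = (1 - s₂) * secondDiff f0 j n + ω₀ * s₂ * secondDiff φ j n := by
  simp only [secondDiff, hev0]
  ring

theorem phi_add_three_eq {q : ℤ → ℕ → ℝ}
    (h3 : ∀ (j : ℤ) (n : ℕ), φ j (n + 2) =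
      (1 - s₁ / 2) * (φ (j - 1) (n + 1) + φ (j + 1) (n + 1)) - (1 - s₁) * φ j n
        + s₁ * Δt * R - (secondDiff q j (n + 2) + (1 - s₁) * secondDiff q j (n + 1)) / 2)
    (hq : ∀ (j : ℤ) (n : ℕ),
      secondDiff q j (n + 1) = (1 - s₂) * secondDiff q j n + ω₀ * s₂ * secondDiff φ j n)
    (j : ℤ) (n : ℕ) :
    φ j (n + 3) =
        (1 - s₁ / 2 - ω₀ * s₂ / 2) * φ (j - 1) (n + 2)
        + ((ω₀ - 1) * s₂ + 1) * φ j (n + 2)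
        + (1 - s₁ / 2 - ω₀ * s₂ / 2) * φ (j + 1) (n + 2)
        + (ω₀ * s₁ * s₂ / 2 - s₁ * s₂ / 2 - ω₀ * s₂ / 2 + s₁ / 2 + s₂ - 1) * φ (j - 1) (n + 1)
        + (-(ω₀ * s₁ * s₂) + ω₀ * s₂ + s₁ - 1) * φ j (n + 1)
        + (ω₀ * s₁ * s₂ / 2 - s₁ * s₂ / 2 - ω₀ * s₂ / 2 + s₁ / 2 + s₂ - 1) * φ (j + 1) (n + 1)
        + (s₁ - 1) * (s₂ - 1) * φ j n
        + s₁ * s₂ * Δt * R := by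
  linear_combination (norm := skip) h3 j (n + 1) - (1 - s₂) * h3 j n
    - (hq j (n + 2) + (1 - s₁) * hq j (n + 1)) / 2
  unfold secondDiff
  ring

end

theorem mrt_lb_four_level_scheme_general
    (Δt R ω₀ s₁ s₂ : ℝ)
    (fm f0 f1 : ℤ → ℕ → ℝ) (φ : ℤ → ℕ → ℝ) (ω₁ : ℝ)
    (hω₁ : ω₁ = (1 - ω₀) / 2)
    (hφ : ∀ (j : ℤ) (n : ℕ),
      φ j n = fm j n + f0 j n + f1 j n + (Δt / 2) * R)
    (hevm : ∀ (j : ℤ) (n : ℕ), fm j (n + 1) =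
      fm (j + 1) n - (s₁ / 2) * (fm (j + 1) n - f1 (j + 1) n)
        + (s₂ / 2) * f0 (j + 1) n - (ω₀ * s₂ / 2) * φ (j + 1) n
        + (ω₁ + ω₀ * s₂ / 4) * Δt * R)
    (hev0 : ∀ (j : ℤ) (n : ℕ), f0 j (n + 1) =
      (1 - s₂) * f0 j n + ω₀ * s₂ * φ j n + ω₀ * (1 - s₂ / 2) * Δt * R)
    (hevp : ∀ (j : ℤ) (n : ℕ), f1 j (n + 1) =
      f1 (j - 1) n + (s₁ / 2) * (fm (j - 1) n - f1 (j - 1) n)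
        + (s₂ / 2) * f0 (j - 1) n - (ω₀ * s₂ / 2) * φ (j - 1) n
        + (ω₁ + ω₀ * s₂ / 4) * Δt * R) :
    ∀ (j : ℤ) (n : ℕ), 2 ≤ n →
      φ j (n + 1) =
        (1 - s₁ / 2 - ω₀ * s₂ / 2) * φ (j - 1) n
        + ((ω₀ - 1) * s₂ + 1) * φ j n
        + (1 - s₁ / 2 - ω₀ * s₂ / 2) * φ (j + 1) n
        + (ω₀ * s₁ * s₂ / 2 - s₁ * s₂ / 2 - ω₀ * s₂ / 2 + s₁ / 2 + s₂ - 1) *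
            φ (j - 1) (n - 1)
        + (-(ω₀ * s₁ * s₂) + ω₀ * s₂ + s₁ - 1) * φ j (n - 1)
        + (ω₀ * s₁ * s₂ / 2 - s₁ * s₂ / 2 - ω₀ * s₂ / 2 + s₁ / 2 + s₂ - 1) *
            φ (j + 1) (n - 1)
        + (s₁ - 1) * (s₂ - 1) * φ j (n - 2)
        + s₁ * s₂ * Δt * R := by
  intro j n hn
  obtain ⟨m, rfl⟩ := Nat.exists_eq_add_of_le' hn
  have hfm := fm_streamed_eq hω₁ hφ hevm hev0
  have hf1 := f1_streamed_eq hω₁ hφ hev0 hevp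
  exact phi_add_three_eq (phi_add_two_eq hφ hfm hf1) (secondDiff_f0_succ hev0) j m

/-- The MRT-LB evolution equations imply the explicit four-level
finite-difference scheme for the macroscopic variable `φ`. -/
theorem mrt_lb_four_level_scheme
    (Δt R ω₀ s₁ s₂ : ℝ) (hΔt : 0 < Δt)
    (fm f0 f1 : ℤ → ℕ → ℝ) (φ : ℤ → ℕ → ℝ) (ω₁ : ℝ)
    (hω₁ : ω₁ = (1 - ω₀) / 2)
    (hφ : ∀ (j : ℤ) (n : ℕ),
      φ j n = fm j n + f0 j n + f1 j n + (Δt / 2) * R)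
    (hevm : ∀ (j : ℤ) (n : ℕ), fm j (n + 1) =
      fm (j + 1) n - (s₁ / 2) * (fm (j + 1) n - f1 (j + 1) n)
        + (s₂ / 2) * f0 (j + 1) n - (ω₀ * s₂ / 2) * φ (j + 1) n
        + (ω₁ + ω₀ * s₂ / 4) * Δt * R)
    (hev0 : ∀ (j : ℤ) (n : ℕ), f0 j (n + 1) =
      (1 - s₂) * f0 j n + ω₀ * s₂ * φ j n + ω₀ * (1 - s₂ / 2) * Δt * R)
    (hevp : ∀ (j : ℤ) (n : ℕ), f1 j (n + 1) =
      f1 (j - 1) n + (s₁ / 2) * (fm (j - 1) n - f1 (j - 1) n)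
        + (s₂ / 2) * f0 (j - 1) n - (ω₀ * s₂ / 2) * φ (j - 1) n
        + (ω₁ + ω₀ * s₂ / 4) * Δt * R) :
    ∀ (j : ℤ) (n : ℕ), 2 ≤ n →
      φ j (n + 1) =
        (1 - s₁ / 2 - ω₀ * s₂ / 2) * φ (j - 1) n
        + ((ω₀ - 1) * s₂ + 1) * φ j n
        + (1 - s₁ / 2 - ω₀ * s₂ / 2) * φ (j + 1) n
        + (ω₀ * s₁ * s₂ / 2 - s₁ * s₂ / 2 - ω₀ * s₂ / 2 + s₁ / 2 + s₂ - 1) *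
            φ (j - 1) (n - 1)
        + (-(ω₀ * s₁ * s₂) + ω₀ * s₂ + s₁ - 1) * φ j (n - 1)
        + (ω₀ * s₁ * s₂ / 2 - s₁ * s₂ / 2 - ω₀ * s₂ / 2 + s₁ / 2 + s₂ - 1) *
            φ (j + 1) (n - 1)
        + (s₁ - 1) * (s₂ - 1) * φ j (n - 2)
        + s₁ * s₂ * Δt * R :=
  mrt_lb_four_level_scheme_general Δt R ω₀ s₁ s₂ fm f0 f1 φ ω₁ hω₁ hφ hevm hev0 hevp
end

section
/- Suppose the distribution functions f₋₁, f₀, f₁ : ℤ × ℕ → ℝ satisfy the MRT-LB evolution equations for all j ∈ ℤ and n ∈ ℕ, and let φⱼⁿ be the associated macroscopic variable. Then for every j ∈ ℤ and every n ≥ 1, one has φⱼⁿ⁺¹ = (s₁/2 + s₂/2 − 1)·(f₀(j−1,n) − 2f₀(j,n) + f₀(j+1,n)) + (1 − s₁/2 − ω₀s₂/2)·φⱼ₊₁ⁿ + ω₀s₂·φⱼⁿ + (1 − s₁/2 − ω₀s₂/2)·φⱼ₋₁ⁿ + (s₁−1)·φⱼⁿ⁻¹ + s₁·Δt·R. -/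
/-!
The two populations that leave site `j` at time `n - 1`, `f₋₁(j-1, n)` and `f₁(j+1, n)`,
together with `f₀(j, n)` carry the whole of `φⱼⁿ⁻¹` plus the source `Δt·R` (the collision
conserves `φ`, since `2ω₁ + ω₀ = 1`). Expanding `φⱼⁿ⁺¹` by one step of the scheme and
rewriting `f₋₁(j±1, n)`, `f₁(j±1, n)` through `φ_{j±1}ⁿ` leaves exactly
`(s₁ - 1)(f₋₁(j-1, n) + f₁(j+1, n))`, which this conservation law turns into `φⱼⁿ⁻¹`.
-/

theorem mrt_lb_collision_conserves (Δt R ω₀ s₁ s₂ ω₁ : ℝ) (fm f0 f1 φ : ℤ → ℕ → ℝ)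
    (hω₁ : ω₁ = (1 - ω₀) / 2)
    (hφ : ∀ (j : ℤ) (n : ℕ), φ j n = fm j n + f0 j n + f1 j n + (Δt / 2) * R)
    (hevm : ∀ (j : ℤ) (n : ℕ), fm j (n + 1) =
      fm (j + 1) n - (s₁ / 2) * (fm (j + 1) n - f1 (j + 1) n)
        + (s₂ / 2) * f0 (j + 1) n - (ω₀ * s₂ / 2) * φ (j + 1) n
        + (ω₁ + ω₀ * s₂ / 4) * Δt * R)
    (hev0 : ∀ (j : ℤ) (n : ℕ), f0 j (n + 1) =
      (1 - s₂) * f0 j n + ω₀ * s₂ * φ j n + ω₀ * (1 - s₂ / 2) * Δt * R)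
    (hevp : ∀ (j : ℤ) (n : ℕ), f1 j (n + 1) =
      f1 (j - 1) n + (s₁ / 2) * (fm (j - 1) n - f1 (j - 1) n)
        + (s₂ / 2) * f0 (j - 1) n - (ω₀ * s₂ / 2) * φ (j - 1) n
        + (ω₁ + ω₀ * s₂ / 4) * Δt * R)
    (j : ℤ) (n : ℕ) :
    fm (j - 1) (n + 1) + f0 j (n + 1) + f1 (j + 1) (n + 1) = φ j n + (Δt / 2) * R := by
  rw [hevm, hev0, hevp, sub_add_cancel, add_sub_cancel_right, hφ j n, hω₁]
  ring

theorem mrt_lb_intermediate_scheme_general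
    (Δt R ω₀ s₁ s₂ : ℝ)
    (fm f0 f1 : ℤ → ℕ → ℝ) (φ : ℤ → ℕ → ℝ) (ω₁ : ℝ)
    (hω₁ : ω₁ = (1 - ω₀) / 2)
    (hφ : ∀ (j : ℤ) (n : ℕ),
      φ j n = fm j n + f0 j n + f1 j n + (Δt / 2) * R)
    (hevm : ∀ (j : ℤ) (n : ℕ), fm j (n + 1) =
      fm (j + 1) n - (s₁ / 2) * (fm (j + 1) n - f1 (j + 1) n)
        + (s₂ / 2) * f0 (j + 1) n - (ω₀ * s₂ / 2) * φ (j + 1) n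
        + (ω₁ + ω₀ * s₂ / 4) * Δt * R)
    (hev0 : ∀ (j : ℤ) (n : ℕ), f0 j (n + 1) =
      (1 - s₂) * f0 j n + ω₀ * s₂ * φ j n + ω₀ * (1 - s₂ / 2) * Δt * R)
    (hevp : ∀ (j : ℤ) (n : ℕ), f1 j (n + 1) =
      f1 (j - 1) n + (s₁ / 2) * (fm (j - 1) n - f1 (j - 1) n)
        + (s₂ / 2) * f0 (j - 1) n - (ω₀ * s₂ / 2) * φ (j - 1) n
        + (ω₁ + ω₀ * s₂ / 4) * Δt * R) :
    ∀ (j : ℤ) (n : ℕ), 1 ≤ n →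
      φ j (n + 1) =
        (s₁ / 2 + s₂ / 2 - 1) * (f0 (j - 1) n - 2 * f0 j n + f0 (j + 1) n)
        + (1 - s₁ / 2 - ω₀ * s₂ / 2) * φ (j + 1) n
        + ω₀ * s₂ * φ j n
        + (1 - s₁ / 2 - ω₀ * s₂ / 2) * φ (j - 1) n
        + (s₁ - 1) * φ j (n - 1)
        + s₁ * Δt * R := by
  intro j n hn
  obtain ⟨m, rfl⟩ : ∃ m, n = m + 1 := Nat.exists_eq_add_of_le' hn
  have hconserved :=
    mrt_lb_collision_conserves Δt R ω₀ s₁ s₂ ω₁ fm f0 f1 φ hω₁ hφ hevm hev0 hevp j m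
  rw [Nat.add_sub_cancel, hφ j (m + 1 + 1), hevm j (m + 1), hev0 j (m + 1), hevp j (m + 1),
    hφ (j + 1) (m + 1), hφ (j - 1) (m + 1), hω₁]
  linear_combination (s₁ - 1) * hconserved

/-- From the MRT-LB evolution equations, for every `j` and `n ≥ 1`,
the macroscopic variable satisfies Eq. (2-16) of the paper. -/
theorem mrt_lb_intermediate_scheme
    (Δt R ω₀ s₁ s₂ : ℝ) (hΔt : 0 < Δt)
    (fm f0 f1 : ℤ → ℕ → ℝ) (φ : ℤ → ℕ → ℝ) (ω₁ : ℝ)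
    (hω₁ : ω₁ = (1 - ω₀) / 2)
    (hφ : ∀ (j : ℤ) (n : ℕ),
      φ j n = fm j n + f0 j n + f1 j n + (Δt / 2) * R)
    (hevm : ∀ (j : ℤ) (n : ℕ), fm j (n + 1) =
      fm (j + 1) n - (s₁ / 2) * (fm (j + 1) n - f1 (j + 1) n)
        + (s₂ / 2) * f0 (j + 1) n - (ω₀ * s₂ / 2) * φ (j + 1) n
        + (ω₁ + ω₀ * s₂ / 4) * Δt * R)
    (hev0 : ∀ (j : ℤ) (n : ℕ), f0 j (n + 1) =
      (1 - s₂) * f0 j n + ω₀ * s₂ * φ j n + ω₀ * (1 - s₂ / 2) * Δt * R)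
    (hevp : ∀ (j : ℤ) (n : ℕ), f1 j (n + 1) =
      f1 (j - 1) n + (s₁ / 2) * (fm (j - 1) n - f1 (j - 1) n)
        + (s₂ / 2) * f0 (j - 1) n - (ω₀ * s₂ / 2) * φ (j - 1) n
        + (ω₁ + ω₀ * s₂ / 4) * Δt * R) :
    ∀ (j : ℤ) (n : ℕ), 1 ≤ n →
      φ j (n + 1) =
        (s₁ / 2 + s₂ / 2 - 1) * (f0 (j - 1) n - 2 * f0 j n + f0 (j + 1) n)
        + (1 - s₁ / 2 - ω₀ * s₂ / 2) * φ (j + 1) n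
        + ω₀ * s₂ * φ j n
        + (1 - s₁ / 2 - ω₀ * s₂ / 2) * φ (j - 1) n
        + (s₁ - 1) * φ j (n - 1)
        + s₁ * Δt * R :=
  mrt_lb_intermediate_scheme_general Δt R ω₀ s₁ s₂ fm f0 f1 φ ω₁ hω₁ hφ hevm hev0 hevp
end

section
/- Suppose the distribution functions f₋₁, f₀, f₁ : ℤ × ℕ → ℝ satisfy the MRT-LB evolution equations for all j ∈ ℤ and n ∈ ℕ, let φⱼⁿ be the associated macroscopic variable, and define the second difference D(j,n) = f₀(j−1,n) − 2f₀(j,n) + f₀(j+1,n). Then for every j ∈ ℤ and every n ≥ 2, one has D(j,n) = (s₁−1)·D(j,n−1) − 2φⱼⁿ + (2−s₁)·φⱼ₋₁ⁿ⁻¹ + (2−s₁)·φⱼ₊₁ⁿ⁻¹ + (2s₁−2)·φⱼⁿ⁻² + 2s₁·Δt·R. -/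
/-!
Summing the two moving populations `f₋₁ + f₁` turns the collision–streaming steps into a
discrete telegraph equation: each of `f₋₁`, `f₁` is transported one cell per step, damped by
the factor `1 - s₁` and fed by a common source built from the local moments, and eliminating
the counter-moving parts leaves a three-level scheme in `f₋₁ + f₁`. Writing
`f₋₁ + f₁ = φ - f₀ - Δt R / 2` and using the relaxation equation for `f₀` at the three sites
`j - 1, j, j + 1` then turns it into the recurrence for the second difference of `f₀`.
-/

theorem add_eq_three_level_of_counter_transport {R : Type*} [CommRing R] (κ : R)
    (a b G : ℤ → ℕ → R)
    (ha : ∀ j n, a j (n + 1) = κ * a (j + 1) n + G (j + 1) n)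
    (hb : ∀ j n, b j (n + 1) = κ * b (j - 1) n + G (j - 1) n) (j : ℤ) (n : ℕ) :
    a j (n + 2) + b j (n + 2) =
      κ * ((a (j - 1) (n + 1) + b (j - 1) (n + 1)) + (a (j + 1) (n + 1) + b (j + 1) (n + 1)))
        - κ ^ 2 * (a j n + b j n) + G (j - 1) (n + 1) + G (j + 1) (n + 1) - 2 * κ * G j n := by
  have ha' := ha (j - 1) n
  have hb' := hb (j + 1) n
  simp only [sub_add_cancel, add_sub_cancel_right] at ha' hb'
  linear_combination ha j (n + 1) + hb j (n + 1) - κ * ha' - κ * hb'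

theorem mrt_lb_second_difference_recurrence_general
    (Δt R ω₀ s₁ s₂ : ℝ)
    (fm f0 f1 : ℤ → ℕ → ℝ) (φ : ℤ → ℕ → ℝ) (ω₁ : ℝ)
    (D : ℤ → ℕ → ℝ)
    (hω₁ : ω₁ = (1 - ω₀) / 2)
    (hφ : ∀ (j : ℤ) (n : ℕ),
      φ j n = fm j n + f0 j n + f1 j n + (Δt / 2) * R)
    (hD : ∀ (j : ℤ) (n : ℕ),
      D j n = f0 (j - 1) n - 2 * f0 j n + f0 (j + 1) n)
    (hevm : ∀ (j : ℤ) (n : ℕ), fm j (n + 1) =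
      fm (j + 1) n - (s₁ / 2) * (fm (j + 1) n - f1 (j + 1) n)
        + (s₂ / 2) * f0 (j + 1) n - (ω₀ * s₂ / 2) * φ (j + 1) n
        + (ω₁ + ω₀ * s₂ / 4) * Δt * R)
    (hev0 : ∀ (j : ℤ) (n : ℕ), f0 j (n + 1) =
      (1 - s₂) * f0 j n + ω₀ * s₂ * φ j n + ω₀ * (1 - s₂ / 2) * Δt * R)
    (hevp : ∀ (j : ℤ) (n : ℕ), f1 j (n + 1) =
      f1 (j - 1) n + (s₁ / 2) * (fm (j - 1) n - f1 (j - 1) n)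
        + (s₂ / 2) * f0 (j - 1) n - (ω₀ * s₂ / 2) * φ (j - 1) n
        + (ω₁ + ω₀ * s₂ / 4) * Δt * R) :
    ∀ (j : ℤ) (n : ℕ), 2 ≤ n →
      D j n =
        (s₁ - 1) * D j (n - 1)
        - 2 * φ j n
        + (2 - s₁) * φ (j - 1) (n - 1)
        + (2 - s₁) * φ (j + 1) (n - 1)
        + (2 * s₁ - 2) * φ j (n - 2)
        + 2 * s₁ * Δt * R := by
  intro j n hn
  obtain ⟨m, rfl⟩ : ∃ m, n = m + 2 := ⟨n - 2, by omega⟩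
  let G : ℤ → ℕ → ℝ := fun k n ↦ s₁ / 2 * (fm k n + f1 k n) + s₂ / 2 * f0 k n
    - ω₀ * s₂ / 2 * φ k n + (ω₁ + ω₀ * s₂ / 4) * Δt * R
  have htelegraph := add_eq_three_level_of_counter_transport (1 - s₁) fm f1 G
    (fun k n ↦ by rw [hevm]; ring) (fun k n ↦ by rw [hevp]; ring) j m
  have hmoving : ∀ k n, fm k n + f1 k n = φ k n - f0 k n - Δt / 2 * R :=
    fun k n ↦ by rw [hφ]; ring
  simp only [hmoving, G] at htelegraph
  rw [show m + 2 - 1 = m + 1 from rfl, Nat.add_sub_cancel, hD, hD]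
  subst hω₁
  linear_combination 2 * htelegraph + hev0 (j - 1) (m + 1) + hev0 (j + 1) (m + 1)
    + 2 * (s₁ - 1) * hev0 j m

/-- Recurrence for the second difference
`D(j,n) = f₀(j−1,n) − 2f₀(j,n) + f₀(j+1,n)` implied by the MRT-LB evolution
equations, for every `j` and `n ≥ 2`. -/
theorem mrt_lb_second_difference_recurrence
    (Δt R ω₀ s₁ s₂ : ℝ) (hΔt : 0 < Δt)
    (fm f0 f1 : ℤ → ℕ → ℝ) (φ : ℤ → ℕ → ℝ) (ω₁ : ℝ)
    (D : ℤ → ℕ → ℝ)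
    (hω₁ : ω₁ = (1 - ω₀) / 2)
    (hφ : ∀ (j : ℤ) (n : ℕ),
      φ j n = fm j n + f0 j n + f1 j n + (Δt / 2) * R)
    (hD : ∀ (j : ℤ) (n : ℕ),
      D j n = f0 (j - 1) n - 2 * f0 j n + f0 (j + 1) n)
    (hevm : ∀ (j : ℤ) (n : ℕ), fm j (n + 1) =
      fm (j + 1) n - (s₁ / 2) * (fm (j + 1) n - f1 (j + 1) n)
        + (s₂ / 2) * f0 (j + 1) n - (ω₀ * s₂ / 2) * φ (j + 1) n
        + (ω₁ + ω₀ * s₂ / 4) * Δt * R)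
    (hev0 : ∀ (j : ℤ) (n : ℕ), f0 j (n + 1) =
      (1 - s₂) * f0 j n + ω₀ * s₂ * φ j n + ω₀ * (1 - s₂ / 2) * Δt * R)
    (hevp : ∀ (j : ℤ) (n : ℕ), f1 j (n + 1) =
      f1 (j - 1) n + (s₁ / 2) * (fm (j - 1) n - f1 (j - 1) n)
        + (s₂ / 2) * f0 (j - 1) n - (ω₀ * s₂ / 2) * φ (j - 1) n
        + (ω₁ + ω₀ * s₂ / 4) * Δt * R) :
    ∀ (j : ℤ) (n : ℕ), 2 ≤ n →
      D j n =
        (s₁ - 1) * D j (n - 1)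
        - 2 * φ j n
        + (2 - s₁) * φ (j - 1) (n - 1)
        + (2 - s₁) * φ (j + 1) (n - 1)
        + (2 * s₁ - 2) * φ j (n - 2)
        + 2 * s₁ * Δt * R :=
  mrt_lb_second_difference_recurrence_general Δt R ω₀ s₁ s₂ fm f0 f1 φ ω₁ D hω₁ hφ hD hevm hev0 hevp
end

section
/- Let ω₀, s₁, s₂, θ ∈ ℝ and let G be the 3×3 complex amplification matrix of the MRT-LB scheme: first row ((1 − s₁/2 − ω₀s₂/2)e^{iθ}, (s₂/2 − ω₀s₂/2)e^{iθ}, (s₁/2 − ω₀s₂/2)e^{iθ}), second row (ω₀s₂, ω₀s₂ − s₂ + 1, ω₀s₂), third row ((s₁/2 − ω₀s₂/2)e^{−iθ}, (s₂/2 − ω₀s₂/2)e^{−iθ}, (1 − s₁/2 − ω₀s₂/2)e^{−iθ}). Then the characteristic polynomial of G is det(λI − G) = λ³ + p₂λ² + p₁λ + p₀, where p₀ = (s₁−1)(1−s₂), p₁ = (s₁−1)(s₂ω₀−1) + [(s₁−2)(s₂−1) + s₂ω₀(1−s₁)]·cos θ, and p₂ = s₂ − s₂ω₀ − 1 + (s₂ω₀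 + s₁ − 2)·cos θ. -/
/-!
The characteristic polynomial of a 3×3 matrix is `X³ - (tr A) X² + m X - det A`, where `m` is the sum
of its principal 2×2 minors. Writing `z = e^{iθ}` and `w = e^{-iθ}` in `G`, each of these three
invariants is a polynomial in `z, w` that becomes a polynomial in `z + w = 2 cos θ` once `z w = 1` is used.
-/

open Polynomial

theorem Matrix.charpoly_fin_three {R : Type*} [CommRing R] (A : Matrix (Fin 3) (Fin 3) R) :
    A.charpoly = X ^ 3 - C A.trace * X ^ 2
      + C (A 0 0 * A 1 1 - A 0 1 * A 1 0 + A 0 0 * A 2 2 - A 0 2 * A 2 0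
        + A 1 1 * A 2 2 - A 1 2 * A 2 1) * X - C A.det := by
  simp [Matrix.charpoly, Matrix.det_fin_three, Matrix.trace_fin_three]
  ring

/-- `G` with `e^{iθ}, e^{-iθ}` replaced by indeterminates `z, w`. -/
def mrtAmplification {K : Type*} [Field K] (ω₀ s₁ s₂ z w : K) : Matrix (Fin 3) (Fin 3) K :=
  !![(1 - s₁ / 2 - ω₀ * s₂ / 2) * z, (s₂ / 2 - ω₀ * s₂ / 2) * z, (s₁ / 2 - ω₀ * s₂ / 2) * z;
     ω₀ * s₂, ω₀ * s₂ - s₂ + 1, ω₀ * s₂;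
     (s₁ / 2 - ω₀ * s₂ / 2) * w, (s₂ / 2 - ω₀ * s₂ / 2) * w, (1 - s₁ / 2 - ω₀ * s₂ / 2) * w]

theorem mrtAmplification_charpoly {K : Type*} [Field K] [NeZero (2 : K)] (ω₀ s₁ s₂ z w : K)
    (hzw : z * w = 1) :
    (mrtAmplification ω₀ s₁ s₂ z w).charpoly =
      X ^ 3 + C (s₂ - s₂ * ω₀ - 1 + (s₂ * ω₀ + s₁ - 2) * ((z + w) / 2)) * X ^ 2
        + C ((s₁ - 1) * (s₂ * ω₀ - 1)
          + ((s₁ - 2) * (s₂ - 1) + s₂ * ω₀ * (1 - s₁)) * ((z + w) / 2)) * X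
        + C ((s₁ - 1) * (1 - s₂)) := by
  set A := mrtAmplification ω₀ s₁ s₂ z w
  have trace_eq : A.trace = -(s₂ - s₂ * ω₀ - 1 + (s₂ * ω₀ + s₁ - 2) * ((z + w) / 2)) := by
    simp [A, mrtAmplification, Matrix.trace_fin_three]
    field_simp
    ring
  have minors_eq : A 0 0 * A 1 1 - A 0 1 * A 1 0 + A 0 0 * A 2 2 - A 0 2 * A 2 0
        + A 1 1 * A 2 2 - A 1 2 * A 2 1 = (s₁ - 1) * (s₂ * ω₀ - 1)
          + ((s₁ - 2) * (s₂ - 1) + s₂ * ω₀ * (1 - s₁)) * ((z + w) / 2) := by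
    simp [A, mrtAmplification]
    field_simp
    linear_combination (4 * (1 - s₁) * (1 - ω₀ * s₂)) * hzw
  have det_eq : A.det = -((s₁ - 1) * (1 - s₂)) := by
    simp [A, mrtAmplification, Matrix.det_fin_three]
    field_simp
    linear_combination (4 * (1 - s₁) * (1 - s₂)) * hzw
  rw [Matrix.charpoly_fin_three, trace_eq, minors_eq, det_eq, map_neg, map_neg]
  ring

/-- The characteristic polynomial of the complex amplification
matrix `G` of the MRT-LB scheme is `λ³ + p₂λ² + p₁λ + p₀`. -/
theorem charpoly_of_G
    (ω₀ s₁ s₂ θ p₀ p₁ p₂ : ℝ)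
    (hp₀ : p₀ = (s₁ - 1) * (1 - s₂))
    (hp₁ : p₁ = (s₁ - 1) * (s₂ * ω₀ - 1)
      + ((s₁ - 2) * (s₂ - 1) + s₂ * ω₀ * (1 - s₁)) * Real.cos θ)
    (hp₂ : p₂ = s₂ - s₂ * ω₀ - 1 + (s₂ * ω₀ + s₁ - 2) * Real.cos θ)
    (G : Matrix (Fin 3) (Fin 3) ℂ)
    (hG : G = !![((1 - s₁ / 2 - ω₀ * s₂ / 2 : ℝ) : ℂ) * Complex.exp (θ * Complex.I),
                 ((s₂ / 2 - ω₀ * s₂ / 2 : ℝ) : ℂ) * Complex.exp (θ * Complex.I),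
                 ((s₁ / 2 - ω₀ * s₂ / 2 : ℝ) : ℂ) * Complex.exp (θ * Complex.I);
                 ((ω₀ * s₂ : ℝ) : ℂ),
                 ((ω₀ * s₂ - s₂ + 1 : ℝ) : ℂ),
                 ((ω₀ * s₂ : ℝ) : ℂ);
                 ((s₁ / 2 - ω₀ * s₂ / 2 : ℝ) : ℂ) * Complex.exp (-(θ * Complex.I)),
                 ((s₂ / 2 - ω₀ * s₂ / 2 : ℝ) : ℂ) * Complex.exp (-(θ * Complex.I)),
                 ((1 - s₁ / 2 - ω₀ * s₂ / 2 : ℝ) : ℂ) * Complex.exp (-(θ * Complex.I))]) :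
    G.charpoly = X ^ 3 + C (p₂ : ℂ) * X ^ 2 + C (p₁ : ℂ) * X + C (p₀ : ℂ) := by
  have exp_mul_exp_neg : Complex.exp (θ * Complex.I) * Complex.exp (-(θ * Complex.I)) = 1 := by
    rw [← Complex.exp_add, add_neg_cancel, Complex.exp_zero]
  have cos_eq :
      Complex.cos θ = (Complex.exp (θ * Complex.I) + Complex.exp (-(θ * Complex.I))) / 2 := by
    rw [Complex.cos, neg_mul]
  have G_eq : G = mrtAmplification (ω₀ : ℂ) s₁ s₂ (Complex.exp (θ * Complex.I))
      (Complex.exp (-(θ * Complex.I))) := by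
    rw [hG, mrtAmplification]
    push_cast
    rfl
  rw [G_eq, mrtAmplification_charpoly _ _ _ _ _ exp_mul_exp_neg, hp₀, hp₁, hp₂, ← cos_eq]
  push_cast
  rfl
end

section
/- Let p₀, p₁, p₂ ∈ ℝ and consider the cubic p(λ) = λ³ + p₂λ² + p₁λ + p₀ and the transformed cubic q(z) = (1 − p₀ + p₁ − p₂)z³ + (3 + 3p₀ − p₁ − p₂)z² + (3 − 3p₀ − p₁ + p₂)z + (1 + p₀ + p₁ + p₂), obtained by the linear fractional substitution λ = (1+z)/(1−z). If 1 − p₀ + p₁ − p₂ ≠ 0, 1 + p₀ + p₁ + p₂ ≠ 0, and every complex root z of q satisfies Re(z) < 0, then every complex root λ of p satisfies |λ| < 1. -/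
open Polynomial

/-! The Cayley map `w ↦ (w - 1)/(w + 1)` sends the open unit disc onto the open left half-plane,
since `Re ((w - 1)/(w + 1)) = (|w|² - 1)/|w + 1|²`, and it carries the roots of `p` to roots of
`q` because `(w + 1)³ q((w - 1)/(w + 1)) = 8 p(w)`. The root `w = -1` of `p`, which has no
image, is excluded by the nonvanishing of the leading coefficient of `q`, which is `-p(-1)`. -/

namespace Complex

theorem re_sub_one_div_add_one (w : ℂ) :
    ((w - 1) / (w + 1)).re = (normSq w - 1) / normSq (w + 1) := by
  rw [div_re, ← add_div]
  congr 1
  simp only [normSq_apply, sub_re, add_re, sub_im, add_im, one_re, one_im]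
  ring

theorem norm_lt_one_of_re_sub_one_div_add_one_neg {w : ℂ} (h : ((w - 1) / (w + 1)).re < 0) :
    ‖w‖ < 1 := by
  rw [re_sub_one_div_add_one] at h
  have hsq : normSq w < 1 := by
    by_contra! hge
    exact h.not_ge (div_nonneg (sub_nonneg.mpr hge) (normSq_nonneg _))
  rwa [← sq_lt_one_iff₀ (norm_nonneg w), ← normSq_eq_norm_sq]

end Complex

theorem cubic_eval_cayley {K : Type*} [Field K] (a b c w : K) (hw : w + 1 ≠ 0) :
    (1 - a + b - c) * ((w - 1) / (w + 1)) ^ 3 + (3 + 3 * a - b - c) * ((w - 1) / (w + 1)) ^ 2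
      + (3 - 3 * a - b + c) * ((w - 1) / (w + 1)) + (1 + a + b + c)
      = 8 * (w ^ 3 + c * w ^ 2 + b * w + a) / (w + 1) ^ 3 := by
  field_simp
  ring

theorem roots_inside_unit_circle_of_transformed_cubic_general
    (p₀ p₁ p₂ : ℝ) (p q : Polynomial ℂ)
    (hp : p = X ^ 3 + C (p₂ : ℂ) * X ^ 2 + C (p₁ : ℂ) * X + C (p₀ : ℂ))
    (hq : q = C ((1 - p₀ + p₁ - p₂ : ℝ) : ℂ) * X ^ 3
      + C ((3 + 3 * p₀ - p₁ - p₂ : ℝ) : ℂ) * X ^ 2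
      + C ((3 - 3 * p₀ - p₁ + p₂ : ℝ) : ℂ) * X
      + C ((1 + p₀ + p₁ + p₂ : ℝ) : ℂ))
    (hlead : 1 - p₀ + p₁ - p₂ ≠ 0)
    (hroots : ∀ z : ℂ, q.IsRoot z → z.re < 0) :
    ∀ lam : ℂ, p.IsRoot lam → ‖lam‖ < 1 := by
  intro lam hlam
  subst hp hq
  simp only [IsRoot, eval_add, eval_mul, eval_pow, eval_C, eval_X] at hlam hroots
  have hne : lam + 1 ≠ 0 := by
    intro h
    rw [eq_neg_of_add_eq_zero_left h] at hlam
    have hlead' : ((1 - p₀ + p₁ - p₂ : ℝ) : ℂ) = 0 := by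
      push_cast
      linear_combination -hlam
    exact hlead (by exact_mod_cast hlead')
  refine Complex.norm_lt_one_of_re_sub_one_div_add_one_neg (hroots _ ?_)
  push_cast
  rw [cubic_eval_cayley _ _ _ _ hne, hlam, mul_zero, zero_div]

/-- Via the linear fractional substitution `λ = (1+z)/(1−z)`, if all
complex roots of the transformed cubic `q` have negative real part (and the
leading and constant coefficients of `q` are nonzero), then all complex roots of
the cubic `p` lie strictly inside the unit circle. -/
theorem roots_inside_unit_circle_of_transformed_cubic
    (p₀ p₁ p₂ : ℝ) (p q : Polynomial ℂ)
    (hp : p = X ^ 3 + C (p₂ : ℂ) * X ^ 2 + C (p₁ : ℂ) * X + C (p₀ : ℂ))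
    (hq : q = C ((1 - p₀ + p₁ - p₂ : ℝ) : ℂ) * X ^ 3
      + C ((3 + 3 * p₀ - p₁ - p₂ : ℝ) : ℂ) * X ^ 2
      + C ((3 - 3 * p₀ - p₁ + p₂ : ℝ) : ℂ) * X
      + C ((1 + p₀ + p₁ + p₂ : ℝ) : ℂ))
    (hlead : 1 - p₀ + p₁ - p₂ ≠ 0)
    (hconst : 1 + p₀ + p₁ + p₂ ≠ 0)
    (hroots : ∀ z : ℂ, q.IsRoot z → z.re < 0) :
    ∀ lam : ℂ, p.IsRoot lam → ‖lam‖ < 1 :=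
  roots_inside_unit_circle_of_transformed_cubic_general p₀ p₁ p₂ p q hp hq hlead hroots
end

section
/- Let p₀, p₁, p₂ ∈ ℝ and suppose the five Routh–Hurwitz-type conditions hold: 1 − p₀ + p₁ − p₂ > 0, 3 + 3p₀ − p₁ − p₂ > 0, 3 − 3p₀ − p₁ + p₂ > 0, 1 + p₀ + p₁ + p₂ > 0, and 1 − p₁ + p₀p₂ − p₀² > 0. Then every complex root λ of the cubic polynomial p(λ) = λ³ + p₂λ² + p₁λ + p₀ satisfies |λ| < 1. -/
/-!
The Cayley map `λ ↦ (λ - 1) / (λ + 1)` sends `‖λ‖ ≥ 1` into the closed right half-plane and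
turns `(λ + 1)⁻³ · 8 p(λ)` into the real cubic whose coefficients are the first four quantities
of the hypotheses. Its Hurwitz determinant `a₁a₂ - a₀a₃` is eight times the fifth one, so by the
Routh–Hurwitz criterion for cubics every root of the transformed cubic has negative real part.
-/

open Polynomial

theorem re_lt_zero_of_cubic_eq_zero {a₃ a₂ a₁ a₀ : ℝ} (ha₃ : 0 < a₃) (ha₂ : 0 < a₂)
    (ha₁ : 0 < a₁) (ha₀ : 0 < a₀) (hH : a₀ * a₃ < a₁ * a₂) {z : ℂ}
    (hz : (a₃ : ℂ) * z ^ 3 + a₂ * z ^ 2 + a₁ * z + a₀ = 0) : z.re < 0 := by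
  obtain ⟨x, y, rfl⟩ : ∃ x y : ℝ, z = ⟨x, y⟩ := ⟨z.re, z.im, rfl⟩
  by_contra! hx
  replace hx : 0 ≤ x := hx
  have hre := congrArg Complex.re hz
  have him := congrArg Complex.im hz
  simp only [pow_succ, pow_zero, one_mul, Complex.add_re, Complex.mul_re, Complex.ofReal_re,
    Complex.mul_im, Complex.ofReal_im, zero_mul, sub_zero, Complex.zero_re, Complex.add_im,
    add_zero, Complex.zero_im] at hre him
  have him' : y * (a₃ * (3 * x ^ 2 - y ^ 2) + 2 * a₂ * x + a₁) = 0 := by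
    linear_combination him
  rcases mul_eq_zero.mp him' with rfl | hy
  · have hpos : 0 < a₃ * x ^ 3 + a₂ * x ^ 2 + a₁ * x + a₀ := by positivity
    exact hpos.ne' (by linear_combination hre)
  · -- eliminating `y ^ 2` between the real and imaginary parts leaves a sum of nonnegative
    -- terms and the positive Hurwitz determinant `a₁ a₂ - a₀ a₃`
    have hpos : 0 < 8 * a₃ ^ 2 * x ^ 3 + 8 * a₂ * a₃ * x ^ 2 + 2 * (a₁ * a₃ + a₂ ^ 2) * x
        + (a₁ * a₂ - a₀ * a₃) :=
      add_pos_of_nonneg_of_pos (by positivity) (sub_pos.2 hH)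
    exact hpos.ne' (by linear_combination -a₃ * hre + (3 * a₃ * x + a₂) * hy)

theorem Complex.re_sub_one_div_add_one_s9 (w : ℂ) :
    ((w - 1) / (w + 1)).re = (‖w‖ ^ 2 - 1) / ‖w + 1‖ ^ 2 := by
  rw [Complex.div_re, ← add_div, ← Complex.normSq_eq_norm_sq, ← Complex.normSq_eq_norm_sq]
  congr 1
  simp only [Complex.sub_re, Complex.one_re, Complex.add_re, Complex.sub_im, Complex.one_im,
    sub_zero, Complex.add_im, add_zero, Complex.normSq_apply]
  ring

theorem cubic_cayley_transform {K : Type*} [Field K] (p₀ p₁ p₂ w : K) (hw : w + 1 ≠ 0) :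
    (1 - p₀ + p₁ - p₂) * ((w - 1) / (w + 1)) ^ 3 + (3 + 3 * p₀ - p₁ - p₂) * ((w - 1) / (w + 1)) ^ 2
      + (3 - 3 * p₀ - p₁ + p₂) * ((w - 1) / (w + 1)) + (1 + p₀ + p₁ + p₂)
      = 8 * (w ^ 3 + p₂ * w ^ 2 + p₁ * w + p₀) / (w + 1) ^ 3 := by
  field_simp
  ring

/-- Routh–Hurwitz-type conditions imply that all complex roots of
the monic real cubic `λ³ + p₂λ² + p₁λ + p₀` lie strictly inside the unit
circle. -/
theorem routh_hurwitz_cubic_roots_inside_unit_circle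
    (p₀ p₁ p₂ : ℝ)
    (h1 : 0 < 1 - p₀ + p₁ - p₂)
    (h2 : 0 < 3 + 3 * p₀ - p₁ - p₂)
    (h3 : 0 < 3 - 3 * p₀ - p₁ + p₂)
    (h4 : 0 < 1 + p₀ + p₁ + p₂)
    (h5 : 0 < 1 - p₁ + p₀ * p₂ - p₀ ^ 2) :
    ∀ lam : ℂ,
      (X ^ 3 + C (p₂ : ℂ) * X ^ 2 + C (p₁ : ℂ) * X + C (p₀ : ℂ)).IsRoot lam →
      ‖lam‖ < 1 := by
  intro lam hroot
  by_contra! hlam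
  have hp : lam ^ 3 + p₂ * lam ^ 2 + p₁ * lam + p₀ = 0 := by simpa using hroot
  have hne : lam + 1 ≠ 0 := by
    intro h
    rw [eq_neg_of_add_eq_zero_left h] at hp
    have : ((1 - p₀ + p₁ - p₂ : ℝ) : ℂ) = 0 := by push_cast; linear_combination -hp
    exact h1.ne' (by exact_mod_cast this)
  have hre := re_lt_zero_of_cubic_eq_zero h1 h2 h3 h4 (by linear_combination 8 * h5)
    (z := (lam - 1) / (lam + 1))
    (by push_cast; rw [cubic_cayley_transform _ _ _ _ hne, hp, mul_zero, zero_div])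
  rw [Complex.re_sub_one_div_add_one_s9] at hre
  have : 0 ≤ (‖lam‖ ^ 2 - 1) / ‖lam + 1‖ ^ 2 := div_nonneg (by nlinarith) (by positivity)
  linarith
end

section
/- Let ω₀ ∈ (0,1), s₁, s₂ ∈ (0,2) and θ ∈ ℝ with cos θ ≠ 1, and let p₀, p₁, p₂ be the coefficients of the characteristic polynomial of the MRT-LB scheme. Then 1 − p₀ + p₁ − p₂ = (2−s₁)(2−s₂)(1 + cos θ) + s₁s₂ω₀(1 − cos θ), and this quantity is strictly positive. -/
theorem one_sub_add_sub_routh_coeffs_eq {R : Type*} [CommRing R] (ω s₁ s₂ c : R) :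
    1 - (s₁ - 1) * (1 - s₂)
        + ((s₁ - 1) * (s₂ * ω - 1) + ((s₁ - 2) * (s₂ - 1) + s₂ * ω * (1 - s₁)) * c)
        - (s₂ - s₂ * ω - 1 + (s₂ * ω + s₁ - 2) * c) =
      (2 - s₁) * (2 - s₂) * (1 + c) + s₁ * s₂ * ω * (1 - c) := by
  ring

theorem routh_combination_pos {R : Type*} [CommRing R] [LinearOrder R] [IsStrictOrderedRing R]
    {ω s₁ s₂ c : R} (hω : 0 < ω) (hs₁ : s₁ ∈ Set.Ioo 0 2) (hs₂ : s₂ ∈ Set.Ioo 0 2)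
    (hc : c ∈ Set.Ico (-1) 1) :
    0 < (2 - s₁) * (2 - s₂) * (1 + c) + s₁ * s₂ * ω * (1 - c) := by
  obtain ⟨hs₁_pos, hs₁_lt⟩ := hs₁
  obtain ⟨hs₂_pos, hs₂_lt⟩ := hs₂
  obtain ⟨hc_ge, hc_lt⟩ := hc
  have h_first : 0 ≤ (2 - s₁) * (2 - s₂) * (1 + c) :=
    mul_nonneg (mul_nonneg (sub_nonneg.2 hs₁_lt.le) (sub_nonneg.2 hs₂_lt.le)) (by linarith)
  have h_second : 0 < s₁ * s₂ * ω * (1 - c) :=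
    mul_pos (mul_pos (mul_pos hs₁_pos hs₂_pos) hω) (sub_pos.2 hc_lt)
  exact add_pos_of_nonneg_of_pos h_first h_second

/-- For `ω₀ ∈ (0,1)`, `s₁, s₂ ∈ (0,2)` and `cos θ ≠ 1`, one has
`1 − p₀ + p₁ − p₂ = (2−s₁)(2−s₂)(1+cos θ) + s₁s₂ω₀(1−cos θ) > 0`. -/
theorem routh_condition_one
    (ω₀ s₁ s₂ θ p₀ p₁ p₂ : ℝ)
    (hω₀ : ω₀ ∈ Set.Ioo (0 : ℝ) 1)
    (hs₁ : s₁ ∈ Set.Ioo (0 : ℝ) 2)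
    (hs₂ : s₂ ∈ Set.Ioo (0 : ℝ) 2)
    (hθ : Real.cos θ ≠ 1)
    (hp₀ : p₀ = (s₁ - 1) * (1 - s₂))
    (hp₁ : p₁ = (s₁ - 1) * (s₂ * ω₀ - 1)
      + ((s₁ - 2) * (s₂ - 1) + s₂ * ω₀ * (1 - s₁)) * Real.cos θ)
    (hp₂ : p₂ = s₂ - s₂ * ω₀ - 1 + (s₂ * ω₀ + s₁ - 2) * Real.cos θ) :
    1 - p₀ + p₁ - p₂ =
      (2 - s₁) * (2 - s₂) * (1 + Real.cos θ)
        + s₁ * s₂ * ω₀ * (1 - Real.cos θ) ∧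
    0 < 1 - p₀ + p₁ - p₂ := by
  have hcos : Real.cos θ ∈ Set.Ico (-1) 1 :=
    ⟨Real.neg_one_le_cos θ, (Real.cos_le_one θ).lt_of_ne hθ⟩
  have heq : 1 - p₀ + p₁ - p₂ =
      (2 - s₁) * (2 - s₂) * (1 + Real.cos θ) + s₁ * s₂ * ω₀ * (1 - Real.cos θ) := by
    subst hp₀ hp₁ hp₂
    exact one_sub_add_sub_routh_coeffs_eq ω₀ s₁ s₂ (Real.cos θ)
  exact ⟨heq, heq ▸ routh_combination_pos hω₀.1 hs₁ hs₂ hcos⟩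
end

section
/- Let ω₀ ∈ (0,1), s₁, s₂ ∈ (0,2) and θ ∈ ℝ with cos θ ≠ 1, and let p₀, p₁, p₂ be the coefficients of the characteristic polynomial of the MRT-LB scheme. Then 1 + p₀ + p₁ + p₂ = s₂(1 − cos θ)(2 − s₁)(1 − ω₀), and this quantity is strictly positive. -/
/-- For `ω₀ ∈ (0,1)`, `s₁, s₂ ∈ (0,2)` and `cos θ ≠ 1`, one has
`1 + p₀ + p₁ + p₂ = s₂(1−cos θ)(2−s₁)(1−ω₀) > 0`. -/
theorem routh_condition_four
    (ω₀ s₁ s₂ θ p₀ p₁ p₂ : ℝ)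
    (hω₀ : ω₀ ∈ Set.Ioo (0 : ℝ) 1)
    (hs₁ : s₁ ∈ Set.Ioo (0 : ℝ) 2)
    (hs₂ : s₂ ∈ Set.Ioo (0 : ℝ) 2)
    (hθ : Real.cos θ ≠ 1)
    (hp₀ : p₀ = (s₁ - 1) * (1 - s₂))
    (hp₁ : p₁ = (s₁ - 1) * (s₂ * ω₀ - 1)
      + ((s₁ - 2) * (s₂ - 1) + s₂ * ω₀ * (1 - s₁)) * Real.cos θ)
    (hp₂ : p₂ = s₂ - s₂ * ω₀ - 1 + (s₂ * ω₀ + s₁ - 2) * Real.cos θ) :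
    1 + p₀ + p₁ + p₂ =
      s₂ * (1 - Real.cos θ) * (2 - s₁) * (1 - ω₀) ∧
    0 < 1 + p₀ + p₁ + p₂ := by
  have hcos : Real.cos θ < 1 := (Real.cos_le_one θ).lt_of_ne hθ
  have hfactor : 1 + p₀ + p₁ + p₂ = s₂ * (1 - Real.cos θ) * (2 - s₁) * (1 - ω₀) := by
    subst hp₀ hp₁ hp₂
    ring
  refine ⟨hfactor, hfactor ▸ ?_⟩
  exact mul_pos (mul_pos (mul_pos hs₂.1 (sub_pos.2 hcos)) (sub_pos.2 hs₁.2)) (sub_pos.2 hω₀.2)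
end

section
/- Let ω₀ ∈ (0,1), s₁, s₂ ∈ (0,2) and θ ∈ ℝ, and let p₀, p₁, p₂ be the coefficients of the characteristic polynomial of the MRT-LB scheme. Then 1 − p₁ + p₀p₂ − p₀² > 0. -/
/-!
Write `c = cos θ`. The quantity `1 − p₁ + p₀p₂ − p₀²` is affine in `c`, and twice it equals
`(1 + c) A + (1 − c) B` with
`A = s₁ s₂ (s₁ + s₂ − s₁s₂)` and
`B = (1 − ω₀)(2 − s₂) s₁ (2 − s₁ − s₂ + s₁s₂) + ω₀ (2 − s₂)(2 − s₁)(s₁ + s₂ − s₁s₂)`.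
Since `s₁ + s₂ − s₁s₂ = 1 − (1 − s₁)(1 − s₂)` and `2 − s₁ − s₂ + s₁s₂ = 1 + (1 − s₁)(1 − s₂)` with
`|1 − sᵢ| < 1`, both `A` and `B` are positive, and `(1 + c) A + (1 − c) B ≥ 2 min A B > 0`.
-/

open Set

section

variable {a b : ℝ}

lemma add_sub_mul_pos (ha : a ∈ Ioo (0 : ℝ) 2) (hb : b ∈ Ioo (0 : ℝ) 2) : 0 < a + b - a * b := by
  obtain ⟨ha₀, ha₂⟩ := ha
  obtain ⟨hb₀, hb₂⟩ := hb
  nlinarith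

lemma two_sub_add_add_mul_pos (ha : a ∈ Ioo (0 : ℝ) 2) (hb : b ∈ Ioo (0 : ℝ) 2) :
    0 < 2 - a - b + a * b := by
  obtain ⟨ha₀, ha₂⟩ := ha
  obtain ⟨hb₀, hb₂⟩ := hb
  nlinarith

end

lemma one_add_mul_add_one_sub_mul_pos {x y c : ℝ} (hx : 0 < x) (hy : 0 < y)
    (hc : c ∈ Icc (-1 : ℝ) 1) : 0 < (1 + c) * x + (1 - c) * y := by
  have h₁ : 0 ≤ 1 + c := by linarith [hc.1]
  have h₂ : 0 ≤ 1 - c := by linarith [hc.2]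
  calc 0 < 2 * min x y := by positivity
    _ = (1 + c) * min x y + (1 - c) * min x y := by ring
    _ ≤ (1 + c) * x + (1 - c) * y :=
      add_le_add (mul_le_mul_of_nonneg_left (min_le_left x y) h₁)
        (mul_le_mul_of_nonneg_left (min_le_right x y) h₂)

/-- For `ω₀ ∈ (0,1)`, `s₁, s₂ ∈ (0,2)` and any `θ`, one has
`1 − p₁ + p₀p₂ − p₀² > 0`. -/
theorem routh_condition_five
    (ω₀ s₁ s₂ θ p₀ p₁ p₂ : ℝ)
    (hω₀ : ω₀ ∈ Set.Ioo (0 : ℝ) 1)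
    (hs₁ : s₁ ∈ Set.Ioo (0 : ℝ) 2)
    (hs₂ : s₂ ∈ Set.Ioo (0 : ℝ) 2)
    (hp₀ : p₀ = (s₁ - 1) * (1 - s₂))
    (hp₁ : p₁ = (s₁ - 1) * (s₂ * ω₀ - 1)
      + ((s₁ - 2) * (s₂ - 1) + s₂ * ω₀ * (1 - s₁)) * Real.cos θ)
    (hp₂ : p₂ = s₂ - s₂ * ω₀ - 1 + (s₂ * ω₀ + s₁ - 2) * Real.cos θ) :
    0 < 1 - p₁ + p₀ * p₂ - p₀ ^ 2 := by
  set c := Real.cos θ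
  have hP := add_sub_mul_pos hs₁ hs₂
  have hQ := two_sub_add_add_mul_pos hs₁ hs₂
  have hA : 0 < s₁ * s₂ * (s₁ + s₂ - s₁ * s₂) := mul_pos (mul_pos hs₁.1 hs₂.1) hP
  have hB : 0 < (1 - ω₀) * ((2 - s₂) * s₁ * (2 - s₁ - s₂ + s₁ * s₂))
      + ω₀ * ((2 - s₂) * (2 - s₁) * (s₁ + s₂ - s₁ * s₂)) := by
    have h₁ : 0 < 1 - ω₀ := sub_pos.2 hω₀.2
    have h₂ : 0 < 2 - s₁ := sub_pos.2 hs₁.2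
    have h₃ : 0 < 2 - s₂ := sub_pos.2 hs₂.2
    exact add_pos (mul_pos h₁ (mul_pos (mul_pos h₃ hs₁.1) hQ))
      (mul_pos hω₀.1 (mul_pos (mul_pos h₃ h₂) hP))
  have hc : c ∈ Icc (-1 : ℝ) 1 := ⟨Real.neg_one_le_cos θ, Real.cos_le_one θ⟩
  have key : 2 * (1 - p₁ + p₀ * p₂ - p₀ ^ 2) =
      (1 + c) * (s₁ * s₂ * (s₁ + s₂ - s₁ * s₂))
        + (1 - c) * ((1 - ω₀) * ((2 - s₂) * s₁ * (2 - s₁ - s₂ + s₁ * s₂))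
          + ω₀ * ((2 - s₂) * (2 - s₁) * (s₁ + s₂ - s₁ * s₂))) := by
    subst hp₀ hp₁ hp₂; ring
  have := one_add_mul_add_one_sub_mul_pos hA hB hc
  linarith
end

section
/- Let ω₀ ∈ (0,1), s₁, s₂ ∈ (0,2) and θ ∈ ℝ with cos θ ≠ 1. Then every complex root λ of the characteristic polynomial p(λ) = λ³ + p₂λ² + p₁λ + p₀ of the MRT-LB scheme satisfies |λ| < 1. -/
/-!
The coefficients satisfy Jury's stability conditions for cubics, which already force every root
into the open unit disc. A non-real root `x + iy` turns the last condition into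
`(1 - x² - y²) · (sum of two squares) > 0`. For a real root `x ≥ 1`, deflating to
`(X - x)(X² + uX + q)` gives `|x q| = |p₀| < 1`, so `1 - q > 0`, and then `p(1) > 0` and
the last condition contradict each other; `x ≤ -1` is the mirror case `z ↦ -z`.
-/

open Polynomial

/-- Jury's conditions for the real cubic `X³ + a X² + b X + c`. -/
structure JuryConditions (a b c : ℝ) : Prop where
  eval_one_pos : 0 < 1 + a + b + c
  neg_eval_neg_one_pos : 0 < 1 - a + b - c
  sq_lt_one : c ^ 2 < 1
  schur_pos : 0 < 1 - b + a * c - c ^ 2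

namespace JuryConditions

variable {a b c : ℝ}

theorem neg (h : JuryConditions a b c) : JuryConditions (-a) b (-c) where
  eval_one_pos := by linarith [h.neg_eval_neg_one_pos]
  neg_eval_neg_one_pos := by linarith [h.eval_one_pos]
  sq_lt_one := by simpa using h.sq_lt_one
  schur_pos := by linarith [h.schur_pos]

theorem lt_one_of_root (h : JuryConditions a b c) {x : ℝ}
    (hx : x ^ 3 + a * x ^ 2 + b * x + c = 0) : x < 1 := by
  by_contra! hx_ge
  have eval_one : 1 + a + b + c
      = (1 - x) * (1 + (a + x) + (b + a * x + x ^ 2)) := by linear_combination hx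
  have schur : 1 - b + a * c - c ^ 2
      = (1 - (b + a * x + x ^ 2)) * (1 + x * (a + x) + x ^ 2 * (b + a * x + x ^ 2)) := by
    linear_combination (a + b * x + a * x ^ 2 + x ^ 3 - c) * hx
  have hc : c = -(x * (b + a * x + x ^ 2)) := by linear_combination hx
  set q := b + a * x + x ^ 2
  set u := a + x
  have hxq : x * q < 1 := by nlinarith [h.sq_lt_one]
  have hx_gt : 1 < x := lt_of_le_of_ne hx_ge (by rintro rfl; linarith [h.eval_one_pos])
  have hq : q < 1 := by nlinarith
  have hu : u < -1 - q := by nlinarith [h.eval_one_pos]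
  have hneg : 1 + x * u + x ^ 2 * q < 0 := by
    have : 1 + x * u + x ^ 2 * q < (1 - x) * (1 - x * q) := by nlinarith
    nlinarith [mul_pos (sub_pos.2 hx_gt) (sub_pos.2 hxq)]
  nlinarith [h.schur_pos, mul_pos (sub_pos.2 hq) (neg_pos.2 hneg)]

theorem sq_lt_one_of_root (h : JuryConditions a b c) {x : ℝ}
    (hx : x ^ 3 + a * x ^ 2 + b * x + c = 0) : x ^ 2 < 1 := by
  have hlt := h.lt_one_of_root hx
  have hgt := h.neg.lt_one_of_root (x := -x) (by linear_combination -hx)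
  nlinarith

theorem normSq_lt_one_of_root_of_im_ne_zero (h : JuryConditions a b c) {x y : ℝ}
    (hre : x ^ 3 - 3 * x * y ^ 2 + a * (x ^ 2 - y ^ 2) + b * x + c = 0)
    (him : 3 * x ^ 2 * y - y ^ 3 + 2 * a * x * y + b * y = 0) (hy : y ≠ 0) :
    x ^ 2 + y ^ 2 < 1 := by
  have hb : b = y ^ 2 - 3 * x ^ 2 - 2 * a * x := by
    have : y * (3 * x ^ 2 - y ^ 2 + 2 * a * x + b) = 0 := by linear_combination him
    linear_combination (mul_eq_zero.mp this).resolve_left hy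
  have hc : c = (x ^ 2 + y ^ 2) * (a + 2 * x) := by linear_combination hre - x * hb
  have schur : 1 - b + a * c - c ^ 2
      = (1 - (x ^ 2 + y ^ 2)) * ((1 + a * x + 2 * x ^ 2) ^ 2 + (y * (a + 2 * x)) ^ 2) := by
    linear_combination (a - c - (x ^ 2 + y ^ 2) * (a + 2 * x)) * hc - hb
  have hpos := h.schur_pos
  rw [schur] at hpos
  by_contra! hge
  nlinarith [mul_nonneg (sub_nonneg.2 hge) (add_nonneg (sq_nonneg (1 + a * x + 2 * x ^ 2))
    (sq_nonneg (y * (a + 2 * x))))]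

theorem norm_lt_one_of_isRoot (h : JuryConditions a b c) {z : ℂ}
    (hz : (X ^ 3 + C (a : ℂ) * X ^ 2 + C (b : ℂ) * X + C (c : ℂ)).IsRoot z) : ‖z‖ < 1 := by
  have hz' : z ^ 3 + a * z ^ 2 + b * z + c = 0 := by simpa using hz
  have hre := congrArg Complex.re hz'
  have him := congrArg Complex.im hz'
  simp only [pow_succ, pow_zero, one_mul, Complex.add_re, Complex.add_im, Complex.mul_re,
    Complex.mul_im, Complex.ofReal_re, Complex.ofReal_im, Complex.zero_re,
    Complex.zero_im] at hre him
  rw [← sq_lt_one_iff₀ (norm_nonneg z), Complex.sq_norm, Complex.normSq_apply]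
  by_cases hy : z.im = 0
  · have := h.sq_lt_one_of_root (x := z.re) (by rw [hy] at hre; linear_combination hre)
    rw [hy]
    linarith
  · have := h.normSq_lt_one_of_root_of_im_ne_zero (x := z.re) (y := z.im)
      (by linear_combination hre) (by linear_combination him) hy
    linarith

end JuryConditions

theorem mrt_lb_juryConditions {ω₀ s₁ s₂ c : ℝ} (hω₀ : ω₀ ∈ Set.Ioo (0 : ℝ) 1)
    (hs₁ : s₁ ∈ Set.Ioo (0 : ℝ) 2) (hs₂ : s₂ ∈ Set.Ioo (0 : ℝ) 2) (hc : c ∈ Set.Ico (-1 : ℝ) 1) :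
    JuryConditions (s₂ - s₂ * ω₀ - 1 + (s₂ * ω₀ + s₁ - 2) * c)
      ((s₁ - 1) * (s₂ * ω₀ - 1) + ((s₁ - 2) * (s₂ - 1) + s₂ * ω₀ * (1 - s₁)) * c)
      ((s₁ - 1) * (1 - s₂)) := by
  obtain ⟨hω0, hω1⟩ := hω₀
  obtain ⟨hs10, hs12⟩ := hs₁
  obtain ⟨hs20, hs22⟩ := hs₂
  have hc_lt : 0 < 1 - c := by linarith [hc.2]
  have hc_ge : 0 ≤ 1 + c := by linarith [hc.1]
  have hr_lt : (1 - s₁) * (1 - s₂) < 1 := by nlinarith [sq_nonneg (s₁ - s₂)]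
  have hr_gt : -1 < (1 - s₁) * (1 - s₂) := by nlinarith [sq_nonneg (s₁ + s₂ - 2)]
  constructor
  · have := mul_pos (mul_pos (mul_pos hs20 (sub_pos.2 hs12)) (sub_pos.2 hω1)) hc_lt
    linarith
  · have := mul_pos hc_lt (mul_pos (mul_pos hs10 hs20) hω0)
    have := mul_nonneg hc_ge (mul_pos (sub_pos.2 hs12) (sub_pos.2 hs22)).le
    linarith
  · nlinarith
  · have hA : 0 < (1 - ω₀) * (s₁ * (2 - s₂) * (1 + (1 - s₁) * (1 - s₂)))
        + ω₀ * ((2 - s₁) * (2 - s₂) * (1 - (1 - s₁) * (1 - s₂))) :=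
      add_pos (mul_pos (sub_pos.2 hω1) (mul_pos (mul_pos hs10 (sub_pos.2 hs22)) (by linarith)))
        (mul_pos hω0 (mul_pos (mul_pos (sub_pos.2 hs12) (sub_pos.2 hs22)) (sub_pos.2 hr_lt)))
    have hB : 0 ≤ s₁ * s₂ * (1 - (1 - s₁) * (1 - s₂)) :=
      (mul_pos (mul_pos hs10 hs20) (sub_pos.2 hr_lt)).le
    -- the Schur quantity is `((1 - c) * A + (1 + c) * B) / 2`
    linear_combination (1 / 2 : ℝ) * mul_pos hc_lt hA + (1 / 2 : ℝ) * mul_nonneg hc_ge hB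

/-- For `ω₀ ∈ (0,1)`, `s₁, s₂ ∈ (0,2)` and `cos θ ≠ 1`, every
complex root of the characteristic polynomial of the MRT-LB scheme lies
strictly inside the unit circle. -/
theorem mrt_lb_roots_strictly_inside
    (ω₀ s₁ s₂ θ p₀ p₁ p₂ : ℝ)
    (hω₀ : ω₀ ∈ Set.Ioo (0 : ℝ) 1)
    (hs₁ : s₁ ∈ Set.Ioo (0 : ℝ) 2)
    (hs₂ : s₂ ∈ Set.Ioo (0 : ℝ) 2)
    (hθ : Real.cos θ ≠ 1)
    (hp₀ : p₀ = (s₁ - 1) * (1 - s₂))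
    (hp₁ : p₁ = (s₁ - 1) * (s₂ * ω₀ - 1)
      + ((s₁ - 2) * (s₂ - 1) + s₂ * ω₀ * (1 - s₁)) * Real.cos θ)
    (hp₂ : p₂ = s₂ - s₂ * ω₀ - 1 + (s₂ * ω₀ + s₁ - 2) * Real.cos θ) :
    ∀ lam : ℂ,
      (X ^ 3 + C (p₂ : ℂ) * X ^ 2 + C (p₁ : ℂ) * X + C (p₀ : ℂ)).IsRoot lam →
      ‖lam‖ < 1 := by
  subst hp₀ hp₁ hp₂
  have hcos : Real.cos θ ∈ Set.Ico (-1 : ℝ) 1 :=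
    ⟨Real.neg_one_le_cos θ, lt_of_le_of_ne (Real.cos_le_one θ) hθ⟩
  exact fun lam ↦ (mrt_lb_juryConditions hω₀ hs₁ hs₂ hcos).norm_lt_one_of_isRoot
end

section
/- (Unconditional stability.) Let ω₀ ∈ (0,1), s₁, s₂ ∈ (0,2) and θ ∈ ℝ. Then every complex root λ of the characteristic polynomial p(λ) = λ³ + p₂λ² + p₁λ + p₀ of the MRT-LB scheme satisfies |λ| ≤ 1; consequently the four-level finite-difference scheme derived from the MRT-LB model for the one-dimensional diffusion equation is unconditionally stable in the von Neumann sense. -/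
/-!
The characteristic polynomial is a monic real cubic, and its coefficients satisfy the Jury
conditions `p(1) ≥ 0`, `-p(-1) ≥ 0`, `p₀² < 1` and `p₁ - p₂ p₀ ≤ 1 - p₀²`: each of these
quantities is, up to a positive factor, a combination of products of the nonnegative numbers
`1 ± cos θ`, `ω₀`, `1 - ω₀`, `s_i`, `2 - s_i` and `1 ± (1 - s₁)(1 - s₂)`.
The Jury conditions keep the roots in the closed unit disk. For a real root `x > 1`, split
`p = (X - x) q`; then `p(1) ≥ 0` forces `q(1) ≤ 0` while the last condition forces
`1 + x (p₂ + x) + x² q(0) ≥ 0`, and `|x q(0)| = |p₀| < 1` makes these incompatible.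
Roots `x < -1` are handled by `λ ↦ -λ`. For a conjugate pair `x ± iy` with third root `r`, the
last condition reads `(1 - |λ|²) ((r x - 1)² + r² y²) ≥ 0`.
-/

open Polynomial

/-- The Jury conditions for the monic cubic `X³ + a X² + b X + c`. -/
structure JuryCubic (a b c : ℝ) : Prop where
  eval_one_nonneg : 0 ≤ 1 + a + b + c
  neg_eval_neg_one_nonneg : 0 ≤ 1 - a + b - c
  sq_const_lt_one : c ^ 2 < 1
  schur : b - a * c ≤ 1 - c ^ 2

namespace JuryCubic

variable {a b c : ℝ}

theorem neg (h : JuryCubic a b c) : JuryCubic (-a) b (-c) where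
  eval_one_nonneg := by linarith [h.neg_eval_neg_one_nonneg]
  neg_eval_neg_one_nonneg := by linarith [h.eval_one_nonneg]
  sq_const_lt_one := by simpa using h.sq_const_lt_one
  schur := by simpa using h.schur

theorem real_root_le_one (h : JuryCubic a b c) {x : ℝ}
    (hx : x ^ 3 + a * x ^ 2 + b * x + c = 0) : x ≤ 1 := by
  by_contra! hx1
  set γ := x ^ 2 + a * x + b with hγ
  have hc : c = -(x * γ) := by linear_combination hx
  have hxγ : x * γ < 1 := by nlinarith [h.sq_const_lt_one]
  have hγ1 : γ < 1 := by nlinarith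
  have hq1 : 1 + (a + x) + γ ≤ 0 := by
    have : (1 - x) * (1 + (a + x) + γ) = 1 + a + b + c := by rw [hc, hγ]; ring
    nlinarith [h.eval_one_nonneg]
  have hschur : 0 ≤ 1 + x * (a + x) + x ^ 2 * γ := by
    have : (1 - γ) * (1 + x * (a + x) + x ^ 2 * γ) = (1 - c ^ 2) - (b - a * c) := by
      rw [hc, hγ]; ring
    nlinarith [h.schur]
  nlinarith [mul_pos (sub_pos.2 hx1) (sub_pos.2 hxγ)]

theorem abs_real_root_le_one (h : JuryCubic a b c) {x : ℝ}
    (hx : x ^ 3 + a * x ^ 2 + b * x + c = 0) : |x| ≤ 1 :=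
  abs_le.2 ⟨by linarith [h.neg.real_root_le_one (x := -x) (by linear_combination -hx)],
    h.real_root_le_one hx⟩

theorem sq_add_sq_le_one_of_nonreal_root (hschur : b - a * c ≤ 1 - c ^ 2) {x y : ℝ}
    (hy : y ≠ 0)
    (hre : x ^ 3 - 3 * x * y ^ 2 + a * (x ^ 2 - y ^ 2) + b * x + c = 0)
    (him : 3 * x ^ 2 * y - y ^ 3 + a * (2 * x * y) + b * y = 0) :
    x ^ 2 + y ^ 2 ≤ 1 := by
  have hb : b = y ^ 2 - 3 * x ^ 2 - 2 * a * x := by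
    have : y * (3 * x ^ 2 - y ^ 2 + 2 * a * x + b) = 0 := by linear_combination him
    linarith [(mul_eq_zero.1 this).resolve_left hy]
  have hc : c = (2 * x + a) * (x ^ 2 + y ^ 2) := by rw [hb] at hre; linear_combination hre
  set r := -(a + 2 * x) with hr
  have hfactor : (1 - (x ^ 2 + y ^ 2)) * ((r * x - 1) ^ 2 + r ^ 2 * y ^ 2)
      = (1 - c ^ 2) - (b - a * c) := by
    rw [hc, hb, hr]; ring
  have hpos : 0 < (r * x - 1) ^ 2 + r ^ 2 * y ^ 2 := by
    rcases eq_or_ne r 0 with hr0 | hr0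
    · simp [hr0]
    · positivity
  nlinarith

theorem norm_le_one_of_isRoot (h : JuryCubic a b c) {z : ℂ}
    (hz : (X ^ 3 + C (a : ℂ) * X ^ 2 + C (b : ℂ) * X + C (c : ℂ)).IsRoot z) : ‖z‖ ≤ 1 := by
  have hz' : z ^ 3 + a * z ^ 2 + b * z + c = 0 := by simpa using hz
  have hre := congrArg Complex.re hz'
  have him := congrArg Complex.im hz'
  simp only [Complex.add_re, Complex.add_im, Complex.mul_re, Complex.mul_im, Complex.ofReal_re,
    Complex.ofReal_im, Complex.zero_re, Complex.zero_im, pow_succ, pow_zero, one_mul] at hre him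
  have hnormSq : z.re ^ 2 + z.im ^ 2 ≤ 1 := by
    rcases eq_or_ne z.im 0 with hy | hy
    · rw [hy] at hre
      have := (sq_le_one_iff_abs_le_one z.re).2 (h.abs_real_root_le_one (by linear_combination hre))
      simpa [hy] using this
    · exact sq_add_sq_le_one_of_nonreal_root h.schur hy (by linear_combination hre)
        (by linear_combination him)
  rw [← sq_le_one_iff₀ (norm_nonneg z), Complex.sq_norm, Complex.normSq_apply]
  linarith

end JuryCubic

theorem mrt_juryCubic {ω₀ s₁ s₂ c : ℝ} (hω₀ : ω₀ ∈ Set.Ioo (0 : ℝ) 1)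
    (hs₁ : s₁ ∈ Set.Ioo (0 : ℝ) 2) (hs₂ : s₂ ∈ Set.Ioo (0 : ℝ) 2) (hc : c ∈ Set.Icc (-1 : ℝ) 1) :
    JuryCubic (s₂ - s₂ * ω₀ - 1 + (s₂ * ω₀ + s₁ - 2) * c)
      ((s₁ - 1) * (s₂ * ω₀ - 1) + ((s₁ - 2) * (s₂ - 1) + s₂ * ω₀ * (1 - s₁)) * c)
      ((s₁ - 1) * (1 - s₂)) := by
  obtain ⟨hω0, hω1⟩ := hω₀
  obtain ⟨hs10, hs12⟩ := hs₁
  obtain ⟨hs20, hs22⟩ := hs₂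
  obtain ⟨hc0, hc1⟩ := hc
  have hk : |(1 - s₁) * (1 - s₂)| < 1 := by
    rw [abs_mul]
    exact mul_lt_one_of_nonneg_of_lt_one_left (abs_nonneg _)
      (abs_lt.2 ⟨by linarith, by linarith⟩) (abs_le.2 ⟨by linarith, by linarith⟩)
  obtain ⟨hk0, hk1⟩ := abs_lt.1 hk
  have h1c := sub_nonneg.2 hc1
  have h1c' := neg_le_iff_add_nonneg'.1 hc0
  have h1ω := sub_nonneg.2 hω1.le
  have h2s₁ := sub_nonneg.2 hs12.le
  have h2s₂ := sub_nonneg.2 hs22.le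
  have h1k := sub_nonneg.2 hk1.le
  have h1k' := neg_le_iff_add_nonneg'.1 hk0.le
  constructor
  · calc (0 : ℝ) ≤ s₂ * (2 - s₁) * (1 - ω₀) * (1 - c) := by positivity
      _ = _ := by ring
  · calc (0 : ℝ) ≤ (2 - s₁) * (2 - s₂) * (1 + c) + s₁ * s₂ * ω₀ * (1 - c) := by positivity
      _ = _ := by ring
  · calc ((s₁ - 1) * (1 - s₂)) ^ 2 = |(1 - s₁) * (1 - s₂)| ^ 2 := by rw [sq_abs]; ring
      _ < 1 := by rw [sq_lt_one_iff_abs_lt_one, abs_abs]; exact hk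
  · have key : 0 ≤ (1 + c) * (s₁ * s₂ * (1 - (1 - s₁) * (1 - s₂)))
        + (1 - c) * (1 - ω₀) * (s₁ * (2 - s₂) * (1 + (1 - s₁) * (1 - s₂)))
        + (1 - c) * ω₀ * ((2 - s₁) * (2 - s₂) * (1 - (1 - s₁) * (1 - s₂))) := by
      positivity
    linear_combination key / 2

/-- Unconditional stability: For `ω₀ ∈ (0,1)`, `s₁, s₂ ∈ (0,2)`
and every `θ`, all complex roots of the characteristic polynomial of the MRT-LB
scheme have modulus at most 1, i.e. the four-level finite-difference scheme is
unconditionally stable in the von Neumann sense. -/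
theorem mrt_lb_unconditional_stability
    (ω₀ s₁ s₂ θ p₀ p₁ p₂ : ℝ)
    (hω₀ : ω₀ ∈ Set.Ioo (0 : ℝ) 1)
    (hs₁ : s₁ ∈ Set.Ioo (0 : ℝ) 2)
    (hs₂ : s₂ ∈ Set.Ioo (0 : ℝ) 2)
    (hp₀ : p₀ = (s₁ - 1) * (1 - s₂))
    (hp₁ : p₁ = (s₁ - 1) * (s₂ * ω₀ - 1)
      + ((s₁ - 2) * (s₂ - 1) + s₂ * ω₀ * (1 - s₁)) * Real.cos θ)
    (hp₂ : p₂ = s₂ - s₂ * ω₀ - 1 + (s₂ * ω₀ + s₁ - 2) * Real.cos θ) :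
    ∀ lam : ℂ,
      (X ^ 3 + C (p₂ : ℂ) * X ^ 2 + C (p₁ : ℂ) * X + C (p₀ : ℂ)).IsRoot lam →
      ‖lam‖ ≤ 1 := by
  intro lam hroot
  subst hp₀ hp₁ hp₂
  exact (mrt_juryCubic hω₀ hs₁ hs₂ (Real.cos_mem_Icc θ)).norm_le_one_of_isRoot hroot
end

section
/- (Sixth-order spatial accuracy.) Let κ > 0, R ∈ ℝ, ω₀ ∈ (0,1), s₁, s₂ ∈ (0,2) and ε > 0 satisfy ε = (1−ω₀)(1/s₁ − 1/2) together with the two order conditions: s₁s₂/12 − (ω₀s₂/2 + s₁/2 − 1) + (s₁s₂/2 − s₁ − s₂)ε = 0 and s₁s₂/360 − (1/12)(ω₀s₂/2 + s₁/2 − 1) − (1/2)(s₁s₂/6 − ω₀s₂/2 − s₁/2 + 1)ε + (−2s₁s₂/3 + s₁ + s₂ − 1)ε² = 0. Let φ : ℝ × ℝ → ℝ be C^∞ with all partial derivatives of total order at most 8 bounded on ℝ², and suppose φ solves the diffusion equation ∂φ/∂t (x,t) = κ·∂²φ/∂x² (x,t) + R for all (x,t). Then there exists a constant C > 0 such that for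 every Δx ∈ (0,1], setting Δt = εΔx²/κ, the local residual of the four-level scheme satisfies |φ(x, t+Δt) − [α₁φ(x−Δx, t) + α₂φ(x, t) + α₁φ(x+Δx, t) + β₁φ(x−Δx, t−Δt) + β₂φ(x, t−Δt) + β₁φ(x+Δx, t−Δt) + γφ(x, t−2Δt) + s₁s₂·Δt·R]| ≤ C·Δx⁸ for all (x,t) ∈ ℝ². -/
open Set Function

namespace FourLevelAux

noncomputable def pd (v : ℝ × ℝ) (f : ℝ × ℝ → ℝ) : ℝ × ℝ → ℝ := fun p => fderiv ℝ f p v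

lemma pd_contDiff {f : ℝ × ℝ → ℝ} (hf : ContDiff ℝ (⊤ : ℕ∞) f) (v : ℝ × ℝ) :
    ContDiff ℝ (⊤ : ℕ∞) (pd v f) :=
  (hf.fderiv_right (by simp)).clm_apply contDiff_const

lemma pd_iter_contDiff {f : ℝ × ℝ → ℝ} (hf : ContDiff ℝ (⊤ : ℕ∞) f) (v : ℝ × ℝ) (n : ℕ) :
    ContDiff ℝ (⊤ : ℕ∞) ((pd v)^[n] f) := by
  induction n with
  | zero => exact hf
  | succ n ih => rw [Function.iterate_succ_apply']; exact pd_contDiff ih v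

lemma pd_iter_eq_iteratedFDeriv {f : ℝ × ℝ → ℝ} (hf : ContDiff ℝ (⊤ : ℕ∞) f) (v : ℝ × ℝ) :
    ∀ n p, (pd v)^[n] f p = iteratedFDeriv ℝ n f p (fun _ => v) := by
  intro n
  induction n generalizing f with
  | zero => intro p; simp [iteratedFDeriv_zero_apply]
  | succ n ih =>
    intro p
    rw [Function.iterate_succ_apply]
    rw [ih (pd_contDiff hf v) p]
    have h1 : iteratedFDeriv ℝ n (pd v f) p (fun _ => v)
        = iteratedFDeriv ℝ n (fderiv ℝ f) p (fun _ => v) v :=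
      iteratedFDeriv_clm_apply_const_apply (hf.fderiv_right (m := (⊤ : ℕ∞)) (by simp)) (by exact_mod_cast le_top)
    rw [h1, iteratedFDeriv_succ_apply_right]
    congr 1

lemma pd_iter_bound {f : ℝ × ℝ → ℝ} (hf : ContDiff ℝ (⊤ : ℕ∞) f) (v : ℝ × ℝ) (n : ℕ) (p : ℝ × ℝ)
    {M : ℝ} (hM : ‖iteratedFDeriv ℝ n f p‖ ≤ M) :
    |(pd v)^[n] f p| ≤ M * ‖v‖ ^ n := by
  rw [pd_iter_eq_iteratedFDeriv hf v n p]
  calc |iteratedFDeriv ℝ n f p (fun _ => v)|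
      ≤ ‖iteratedFDeriv ℝ n f p‖ * ∏ _i : Fin n, ‖v‖ :=
        (iteratedFDeriv ℝ n f p).le_opNorm _
    _ ≤ M * ‖v‖ ^ n := by
        rw [Finset.prod_const, Finset.card_univ, Fintype.card_fin]
        exact mul_le_mul_of_nonneg_right hM (by positivity)

lemma pd_swap {f : ℝ × ℝ → ℝ} (hf : ContDiff ℝ (⊤ : ℕ∞) f) (v w : ℝ × ℝ) (p : ℝ × ℝ) :
    pd v (pd w f) p = pd w (pd v f) p := by
  have hd : Differentiable ℝ (fderiv ℝ f) :=
    (hf.fderiv_right (m := (⊤ : ℕ∞)) (by simp)).differentiable (by simp)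
  have key : ∀ a b : ℝ × ℝ, pd a (pd b f) p = fderiv ℝ (fderiv ℝ f) p a b := by
    intro a b
    have : pd a (pd b f) p = fderiv ℝ (fun q => fderiv ℝ f q b) p a := rfl
    rw [this]
    rw [fderiv_clm_apply (hd p) (differentiableAt_const b)]
    simp
  rw [key v w, key w v]
  exact (second_derivative_symmetric
    (fun y => ((hf.differentiable (by simp)) y).hasFDerivAt)
    (hd p).hasFDerivAt w v).symm

variable {f : ℝ × ℝ → ℝ} (hf : ContDiff ℝ (⊤ : ℕ∞) f)

lemma slice_t (x t : ℝ) (hf : ContDiff ℝ (⊤ : ℕ∞) f) :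
    deriv (fun s => f (x, s)) t = pd (0, 1) f (x, t) := by
  have h1 : HasDerivAt (fun s : ℝ => ((x, s) : ℝ × ℝ)) (0, 1) t :=
    (hasDerivAt_const t x).prodMk (hasDerivAt_id t)
  have h2 : HasDerivAt (fun s => f (x, s)) (fderiv ℝ f (x, t) (0, 1)) t :=
    (((hf.differentiable (by simp)) (x, t)).hasFDerivAt).comp_hasDerivAt t h1
  exact h2.deriv

lemma slice_x (x t : ℝ) (hf : ContDiff ℝ (⊤ : ℕ∞) f) :
    deriv (fun y => f (y, t)) x = pd (1, 0) f (x, t) := by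
  have h1 : HasDerivAt (fun y : ℝ => ((y, t) : ℝ × ℝ)) (1, 0) x :=
    (hasDerivAt_id x).prodMk (hasDerivAt_const x t)
  have h2 : HasDerivAt (fun y => f (y, t)) (fderiv ℝ f (x, t) (1, 0)) x :=
    (((hf.differentiable (by simp)) (x, t)).hasFDerivAt).comp_hasDerivAt x h1
  exact h2.deriv

lemma pd_mul_add (hf : ContDiff ℝ (⊤ : ℕ∞) f) (v : ℝ × ℝ) (c d : ℝ) (p : ℝ × ℝ) :
    pd v (fun q => c * f q + d) p = c * pd v f p := by
  show fderiv ℝ (fun q => c * f q + d) p v = c * fderiv ℝ f p v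
  rw [fderiv_add_const, fderiv_const_mul ((hf.differentiable (by simp)) p) c]
  simp

lemma pd_mul (hf : ContDiff ℝ (⊤ : ℕ∞) f) (v : ℝ × ℝ) (c : ℝ) (p : ℝ × ℝ) :
    pd v (fun q => c * f q) p = c * pd v f p := by
  show fderiv ℝ (fun q => c * f q) p v = c * fderiv ℝ f p v
  rw [fderiv_const_mul ((hf.differentiable (by simp)) p) c]
  simp

lemma iter_slice_t {f : ℝ × ℝ → ℝ} (hf : ContDiff ℝ (⊤ : ℕ∞) f) :
    ∀ (n : ℕ) (x t : ℝ), iteratedDeriv n (fun s => f (x, s)) t = (pd (0,1))^[n] f (x, t) := by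
  intro n
  induction n with
  | zero => intro x t; simp
  | succ n ih =>
    intro x t
    rw [iteratedDeriv_succ]
    have h1 : iteratedDeriv n (fun s => f (x, s)) = fun s => (pd (0,1))^[n] f (x, s) :=
      funext fun s => ih x s
    rw [h1, slice_t x t (pd_iter_contDiff hf (0,1) n)]
    rw [Function.iterate_succ_apply']

lemma iter_slice_x {f : ℝ × ℝ → ℝ} (hf : ContDiff ℝ (⊤ : ℕ∞) f) :
    ∀ (n : ℕ) (x t : ℝ), iteratedDeriv n (fun y => f (y, t)) x = (pd (1,0))^[n] f (x, t) := by
  intro n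
  induction n with
  | zero => intro x t; simp
  | succ n ih =>
    intro x t
    rw [iteratedDeriv_succ]
    have h1 : iteratedDeriv n (fun y => f (y, t)) = fun y => (pd (1,0))^[n] f (y, t) :=
      funext fun y => ih y t
    rw [h1, slice_x x t (pd_iter_contDiff hf (1,0) n)]
    rw [Function.iterate_succ_apply']


lemma iterWithin_eq {f : ℝ → ℝ} (hf : ContDiff ℝ (⊤ : ℕ∞) f) {a b : ℝ} (hab : a < b) {y : ℝ}
    (hy : y ∈ Icc a b) (k : ℕ) :
    iteratedDerivWithin k f (Icc a b) y = iteratedDeriv k f y := by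
  rw [iteratedDerivWithin_eq_iteratedFDerivWithin, iteratedDeriv_eq_iteratedFDeriv]
  congr 1
  have hf' : ContDiff ℝ ((⊤ : ℕ∞) : WithTop ℕ∞) f := hf.of_le (by simp)
  exact (((contDiff_iff_ftaylorSeries.mp hf').hasFTaylorSeriesUpToOn
    (Icc a b)).eq_iteratedFDerivWithin_of_uniqueDiffOn (by exact_mod_cast le_top)
    (uniqueDiffOn_Icc hab) hy).symm

lemma taylor_right {f : ℝ → ℝ} (hf : ContDiff ℝ (⊤ : ℕ∞) f) {n : ℕ} (hn : 0 < n) {M : ℝ}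
    (hM : ∀ s, |iteratedDeriv n f s| ≤ M) {a h : ℝ} (hh : 0 < h) :
    |f (a + h) - ∑ k ∈ Finset.range n, iteratedDeriv k f a * h ^ k / k.factorial|
      ≤ M * h ^ n / n.factorial := by
  obtain ⟨m, rfl⟩ : ∃ m, n = m + 1 := ⟨n - 1, (Nat.succ_pred_eq_of_pos hn).symm⟩
  have hab : a < a + h := by linarith
  have hcd : ContDiffOn ℝ m f (Icc a (a + h)) := (hf.of_le (by exact_mod_cast le_top)).contDiffOn
  have hdiff : DifferentiableOn ℝ (iteratedDerivWithin m f (Icc a (a + h)))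
      (Ioo a (a + h)) := by
    apply DifferentiableOn.congr
      ((hf.differentiable_iteratedDeriv m
        (by exact_mod_cast ENat.natCast_lt_top m)).differentiableOn)
    intro y hy
    exact (iterWithin_eq hf hab (Ioo_subset_Icc_self hy) m)
  obtain ⟨x', hx', heq⟩ := taylor_mean_remainder_lagrange hab.ne (by rwa [uIcc_of_lt hab])
    (by rwa [uIcc_of_lt hab, uIoo_of_lt hab])
  rw [uIcc_of_lt hab] at heq; rw [uIoo_of_lt hab] at hx'
  rw [taylor_within_apply] at heq
  have hsum : ∑ k ∈ Finset.range (m + 1), (((k.factorial : ℝ))⁻¹ * (a + h - a) ^ k) •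
      iteratedDerivWithin k f (Icc a (a + h)) a
      = ∑ k ∈ Finset.range (m + 1), iteratedDeriv k f a * h ^ k / k.factorial := by
    refine Finset.sum_congr rfl fun k _ => ?_
    rw [iterWithin_eq hf hab (left_mem_Icc.mpr hab.le) k]
    rw [smul_eq_mul]; ring_nf
  rw [hsum] at heq
  rw [heq, iterWithin_eq hf hab (Ioo_subset_Icc_self hx') (m + 1)]
  rw [abs_div, abs_mul]
  have h1 : |(a + h - a) ^ (m + 1)| = h ^ (m + 1) := by
    rw [show a + h - a = h by ring, abs_pow, abs_of_pos hh]
  rw [h1, abs_of_pos (by positivity : (0:ℝ) < ((m + 1).factorial : ℝ))]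
  apply div_le_div_of_nonneg_right ?_ (by positivity)
  · exact mul_le_mul_of_nonneg_right (hM x') (by positivity)


lemma taylor_abs {f : ℝ → ℝ} (hf : ContDiff ℝ (⊤ : ℕ∞) f) {n : ℕ} (hn : 0 < n) {M : ℝ}
    (hM : ∀ s, |iteratedDeriv n f s| ≤ M) (a h : ℝ) :
    |f (a + h) - ∑ k ∈ Finset.range n, iteratedDeriv k f a * h ^ k / k.factorial|
      ≤ M * |h| ^ n / n.factorial := by
  rcases lt_trichotomy h 0 with hneg | hzero | hpos
  · -- negative step: reflect
    set F : ℝ → ℝ := fun s => f (-s) with hF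
    have hFc : ContDiff ℝ (⊤ : ℕ∞) F := hf.comp contDiff_neg
    have hFM : ∀ s, |iteratedDeriv n F s| ≤ M := by
      intro s
      rw [hF]
      rw [iteratedDeriv_comp_neg n f s]
      rw [smul_eq_mul, abs_mul, abs_pow, abs_neg, abs_one, one_pow, one_mul]
      exact hM (-s)
    have key := taylor_right hFc hn hFM (a := -a) (h := -h) (by linarith)
    have e1 : F (-a + -h) = f (a + h) := by rw [hF]; ring_nf
    have e2 : ∑ k ∈ Finset.range n, iteratedDeriv k F (-a) * (-h) ^ k / k.factorial
        = ∑ k ∈ Finset.range n, iteratedDeriv k f a * h ^ k / k.factorial := by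
      refine Finset.sum_congr rfl fun k _ => ?_
      rw [hF, iteratedDeriv_comp_neg k f (-a), neg_neg, smul_eq_mul]
      have : (-1 : ℝ) ^ k * (-h) ^ k = h ^ k := by
        rw [← mul_pow]; ring_nf
      calc (-1 : ℝ) ^ k * iteratedDeriv k f a * (-h) ^ k / k.factorial
          = iteratedDeriv k f a * ((-1 : ℝ) ^ k * (-h) ^ k) / k.factorial := by ring
        _ = iteratedDeriv k f a * h ^ k / k.factorial := by rw [this]
    rw [e1, e2] at key
    rwa [abs_of_neg hneg]
  · subst hzero
    have hsum : ∑ k ∈ Finset.range n, iteratedDeriv k f a * (0:ℝ) ^ k / k.factorial = f a := by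
      rw [Finset.sum_eq_single 0]
      · simp
      · intro k _ hk
        rw [zero_pow hk]; ring
      · intro habs; exact absurd (Finset.mem_range.mpr hn) habs
    rw [hsum]
    simp only [add_zero, sub_self, abs_zero]
    have : (0:ℝ) ≤ M := le_trans (abs_nonneg _) (hM 0)
    positivity
  · rw [abs_of_pos hpos]
    exact taylor_right hf hn hM hpos


lemma pd_iter_mul {f : ℝ × ℝ → ℝ} (hf : ContDiff ℝ (⊤ : ℕ∞) f) (v : ℝ × ℝ) (c : ℝ) :
    ∀ (k : ℕ) (p : ℝ × ℝ), (pd v)^[k] (fun q => c * f q) p = c * (pd v)^[k] f p := by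
  intro k
  induction k generalizing f with
  | zero => intro p; simp
  | succ k ih =>
    intro p
    rw [Function.iterate_succ_apply, Function.iterate_succ_apply]
    have h1 : pd v (fun q => c * f q) = fun q => c * pd v f q :=
      funext fun q => pd_mul hf v c q
    rw [h1]
    exact ih (pd_contDiff hf v) p

lemma pd_iter_mul_add {f : ℝ × ℝ → ℝ} (hf : ContDiff ℝ (⊤ : ℕ∞) f) (v : ℝ × ℝ) (c d : ℝ)
    (k : ℕ) (p : ℝ × ℝ) :
    (pd v)^[k + 1] (fun q => c * f q + d) p = c * (pd v)^[k + 1] f p := by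
  rw [Function.iterate_succ_apply, Function.iterate_succ_apply]
  have h1 : pd v (fun q => c * f q + d) = fun q => c * pd v f q :=
    funext fun q => pd_mul_add hf v c d q
  rw [h1]
  exact pd_iter_mul (pd_contDiff hf v) v c k p

lemma pd_swap_iter {v w : ℝ × ℝ} :
    ∀ (k : ℕ) (f : ℝ × ℝ → ℝ), ContDiff ℝ (⊤ : ℕ∞) f → ∀ (p : ℝ × ℝ),
      pd w ((pd v)^[k] f) p = (pd v)^[k] (pd w f) p := by
  intro k
  induction k with
  | zero => intro f hf p; simp
  | succ k ih =>
    intro f hf p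
    rw [Function.iterate_succ_apply']
    rw [pd_swap (pd_iter_contDiff hf v k) w v p]
    have h1 : pd w ((pd v)^[k] f) = (pd v)^[k] (pd w f) :=
      funext fun q => ih f hf q
    rw [h1, Function.iterate_succ_apply']

lemma abs_add8 (a b c d e f g h : ℝ) :
    |a + b + c + d + e + f + g + h| ≤ |a| + |b| + |c| + |d| + |e| + |f| + |g| + |h| := by
  calc |a + b + c + d + e + f + g + h| ≤ |a + b + c + d + e + f + g| + |h| := abs_add_le _ _
    _ ≤ (|a + b + c + d + e + f| + |g|) + |h| := by gcongr; exact abs_add_le _ _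
    _ ≤ ((|a + b + c + d + e| + |f|) + |g|) + |h| := by gcongr; exact abs_add_le _ _
    _ ≤ (((|a + b + c + d| + |e|) + |f|) + |g|) + |h| := by gcongr; exact abs_add_le _ _
    _ ≤ ((((|a + b + c| + |d|) + |e|) + |f|) + |g|) + |h| := by gcongr; exact abs_add_le _ _
    _ ≤ (((((|a + b| + |c|) + |d|) + |e|) + |f|) + |g|) + |h| := by gcongr; exact abs_add_le _ _
    _ ≤ ((((((|a| + |b|) + |c|) + |d|) + |e|) + |f|) + |g|) + |h| := by gcongr; exact abs_add_le _ _
    _ = |a| + |b| + |c| + |d| + |e| + |f| + |g| + |h| := by ring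

end FourLevelAux

set_option maxHeartbeats 2000000 in
open FourLevelAux in
/-- Sixth-order spatial accuracy: when the mesh Fourier number
relation and both order conditions hold, the local residual of the four-level
scheme applied to a smooth bounded solution of the diffusion equation is
`O(Δx⁸)` (i.e. the truncation error is `O(Δx⁶)`). -/
theorem four_level_scheme_sixth_order_accuracy
    (κ R ω₀ s₁ s₂ ε : ℝ)
    (hκ : 0 < κ)
    (hω₀ : ω₀ ∈ Set.Ioo (0 : ℝ) 1)
    (hs₁ : s₁ ∈ Set.Ioo (0 : ℝ) 2)
    (hs₂ : s₂ ∈ Set.Ioo (0 : ℝ) 2)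
    (hε : 0 < ε)
    (hεdef : ε = (1 - ω₀) * (1 / s₁ - 1 / 2))
    (hord1 : s₁ * s₂ / 12 - (ω₀ * s₂ / 2 + s₁ / 2 - 1)
      + (s₁ * s₂ / 2 - s₁ - s₂) * ε = 0)
    (hord2 : s₁ * s₂ / 360 - (1 / 12) * (ω₀ * s₂ / 2 + s₁ / 2 - 1)
      - (1 / 2) * (s₁ * s₂ / 6 - ω₀ * s₂ / 2 - s₁ / 2 + 1) * ε
      + (-(2 * s₁ * s₂ / 3) + s₁ + s₂ - 1) * ε ^ 2 = 0)
    (φ : ℝ × ℝ → ℝ)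
    (hsmooth : ContDiff ℝ (⊤ : ℕ∞) φ)
    (hbdd : ∀ n : ℕ, n ≤ 8 → ∃ M : ℝ, ∀ p : ℝ × ℝ, ‖iteratedFDeriv ℝ n φ p‖ ≤ M)
    (hpde : ∀ x t : ℝ,
      deriv (fun s => φ (x, s)) t
        = κ * deriv (fun y => deriv (fun z => φ (z, t)) y) x + R) :
    ∃ C > 0, ∀ Δx ∈ Set.Ioc (0 : ℝ) 1, ∀ x t : ℝ,
      |φ (x, t + ε * Δx ^ 2 / κ)
        - ((1 - s₁ / 2 - ω₀ * s₂ / 2) * φ (x - Δx, t)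
          + ((ω₀ - 1) * s₂ + 1) * φ (x, t)
          + (1 - s₁ / 2 - ω₀ * s₂ / 2) * φ (x + Δx, t)
          + (ω₀ * s₁ * s₂ / 2 - s₁ * s₂ / 2 - ω₀ * s₂ / 2 + s₁ / 2 + s₂ - 1) *
              φ (x - Δx, t - ε * Δx ^ 2 / κ)
          + (-(ω₀ * s₁ * s₂) + ω₀ * s₂ + s₁ - 1) * φ (x, t - ε * Δx ^ 2 / κ)
          + (ω₀ * s₁ * s₂ / 2 - s₁ * s₂ / 2 - ω₀ * s₂ / 2 + s₁ / 2 + s₂ - 1) *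
              φ (x + Δx, t - ε * Δx ^ 2 / κ)
          + (s₁ - 1) * (s₂ - 1) * φ (x, t - 2 * (ε * Δx ^ 2 / κ))
          + s₁ * s₂ * (ε * Δx ^ 2 / κ) * R)|
        ≤ C * Δx ^ 8 := by
  obtain ⟨M, hM⟩ := hbdd 8 le_rfl
  have hMnn : 0 ≤ M := le_trans (norm_nonneg _) (hM (0, 0))
  -- the iterated spatial derivatives
  set G : ℕ → ℝ × ℝ → ℝ := fun k => (pd (1, 0))^[k] φ with hG
  have hGsm : ∀ k, ContDiff ℝ (⊤ : ℕ∞) (G k) := fun k => pd_iter_contDiff hsmooth (1, 0) k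
  have hvnorm : ‖((1 : ℝ), (0 : ℝ))‖ = 1 := by
    simp [Prod.norm_def]
  have hGbdd : ∀ p, |G 8 p| ≤ M := by
    intro p
    have := pd_iter_bound hsmooth (1, 0) 8 p (hM p)
    rwa [hvnorm, one_pow, mul_one] at this
  -- the PDE in terms of pd
  have P1 : ∀ p : ℝ × ℝ, pd (0, 1) φ p = κ * G 2 p + R := by
    rintro ⟨x, t⟩
    have h0 := hpde x t
    rw [slice_t x t hsmooth] at h0
    have hin : (fun y => deriv (fun z => φ (z, t)) y) = fun y => pd (1, 0) φ (y, t) :=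
      funext fun y => slice_x y t hsmooth
    rw [hin, slice_x x t (pd_contDiff hsmooth (1, 0))] at h0
    rw [h0]
    rfl
  have hdtφ : pd (0, 1) φ = fun q => κ * G 2 q + R := funext P1
  have P2 : ∀ p : ℝ × ℝ, pd (0, 1) (pd (0, 1) φ) p = κ ^ 2 * G 4 p := by
    intro p
    rw [hdtφ, pd_mul_add (hGsm 2) (0, 1) κ R p]
    have h1 : pd (0, 1) (G 2) p = (pd (1, 0))^[2] (pd (0, 1) φ) p :=
      pd_swap_iter 2 φ hsmooth p
    rw [h1, hdtφ, show (2 : ℕ) = 1 + 1 from rfl,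
      pd_iter_mul_add (hGsm 2) (1, 0) κ R 1 p]
    have h2 : (pd (1, 0))^[1 + 1] (G 2) p = G 4 p := by
      rw [hG]
      rw [← Function.iterate_add_apply]
    rw [h2]; ring
  have P3 : ∀ p : ℝ × ℝ, pd (0, 1) (pd (0, 1) (pd (0, 1) φ)) p = κ ^ 3 * G 6 p := by
    intro p
    have hdt2 : pd (0, 1) (pd (0, 1) φ) = fun q => κ ^ 2 * G 4 q := funext P2
    rw [hdt2, pd_mul (hGsm 4) (0, 1) (κ ^ 2) p]
    have h1 : pd (0, 1) (G 4) p = (pd (1, 0))^[4] (pd (0, 1) φ) p :=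
      pd_swap_iter 4 φ hsmooth p
    rw [h1, hdtφ, show (4 : ℕ) = 3 + 1 from rfl,
      pd_iter_mul_add (hGsm 2) (1, 0) κ R 3 p]
    have h2 : (pd (1, 0))^[3 + 1] (G 2) p = G 6 p := by
      rw [hG]
      rw [← Function.iterate_add_apply]
    rw [h2]; ring
  have P4 : ∀ p : ℝ × ℝ, pd (0, 1) (pd (0, 1) (pd (0, 1) (pd (0, 1) φ))) p
      = κ ^ 4 * G 8 p := by
    intro p
    have hdt3 : pd (0, 1) (pd (0, 1) (pd (0, 1) φ)) = fun q => κ ^ 3 * G 6 q := funext P3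
    rw [hdt3, pd_mul (hGsm 6) (0, 1) (κ ^ 3) p]
    have h1 : pd (0, 1) (G 6) p = (pd (1, 0))^[6] (pd (0, 1) φ) p :=
      pd_swap_iter 6 φ hsmooth p
    rw [h1, hdtφ, show (6 : ℕ) = 5 + 1 from rfl,
      pd_iter_mul_add (hGsm 2) (1, 0) κ R 5 p]
    have h2 : (pd (1, 0))^[5 + 1] (G 2) p = G 8 p := by
      rw [hG]
      rw [← Function.iterate_add_apply]
    rw [h2]; ring
  have hit1 : (pd (0, 1))^[1] φ = pd (0, 1) φ := rfl
  have hit2 : (pd (0, 1))^[2] φ = pd (0, 1) (pd (0, 1) φ) := rfl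
  have hit3 : (pd (0, 1))^[3] φ = pd (0, 1) (pd (0, 1) (pd (0, 1) φ)) := rfl
  have hit4 : (pd (0, 1))^[4] φ = pd (0, 1) (pd (0, 1) (pd (0, 1) (pd (0, 1) φ))) := rfl
  -- time expansion
  have EB : ∀ c y t₀ δ : ℝ,
      |G 0 (y, t₀ + c * ε * δ ^ 2 / κ)
        - (G 0 (y, t₀) + c * ε * δ ^ 2 * G 2 (y, t₀) + c * ε * δ ^ 2 / κ * R
          + (c * ε * δ ^ 2) ^ 2 / 2 * G 4 (y, t₀)
          + (c * ε * δ ^ 2) ^ 3 / 6 * G 6 (y, t₀))|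
        ≤ M / 24 * (c * ε * δ ^ 2) ^ 4 := by
    intro c y t₀ δ
    set τ : ℝ := c * ε * δ ^ 2 / κ with hτ
    have hu : ContDiff ℝ (⊤ : ℕ∞) (fun s => φ (y, s)) :=
      hsmooth.comp (contDiff_const.prodMk contDiff_id)
    have hbnd : ∀ s, |iteratedDeriv 4 (fun s' => φ (y, s')) s| ≤ κ ^ 4 * M := by
      intro s
      rw [iter_slice_t hsmooth 4 y s, hit4, P4 (y, s), abs_mul,
        abs_of_nonneg (by positivity : (0:ℝ) ≤ κ ^ 4)]
      exact mul_le_mul_of_nonneg_left (hGbdd (y, s)) (by positivity)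
    have key := taylor_abs hu (by norm_num) hbnd t₀ τ
    have hsum : ∑ k ∈ Finset.range 4,
        iteratedDeriv k (fun s' => φ (y, s')) t₀ * τ ^ k / (k.factorial : ℝ)
        = φ (y, t₀) + τ * (κ * G 2 (y, t₀) + R) + τ ^ 2 * (κ ^ 2 * G 4 (y, t₀)) / 2
          + τ ^ 3 * (κ ^ 3 * G 6 (y, t₀)) / 6 := by
      rw [Finset.sum_range_succ, Finset.sum_range_succ, Finset.sum_range_succ,
        Finset.sum_range_succ, Finset.sum_range_zero]
      rw [iteratedDeriv_zero]
      rw [iter_slice_t hsmooth 1 y t₀, hit1, P1 (y, t₀)]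
      rw [iter_slice_t hsmooth 2 y t₀, hit2, P2 (y, t₀)]
      rw [iter_slice_t hsmooth 3 y t₀, hit3, P3 (y, t₀)]
      norm_num [Nat.factorial]
      ring
    rw [hsum] at key
    have habs : |τ| ^ 4 = τ ^ 4 := by
      rw [← abs_pow, abs_of_nonneg (by positivity : (0:ℝ) ≤ τ ^ 4)]
    rw [habs] at key
    have hpoly : φ (y, t₀) + τ * (κ * G 2 (y, t₀) + R) + τ ^ 2 * (κ ^ 2 * G 4 (y, t₀)) / 2
          + τ ^ 3 * (κ ^ 3 * G 6 (y, t₀)) / 6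
        = φ (y, t₀) + c * ε * δ ^ 2 * G 2 (y, t₀) + c * ε * δ ^ 2 / κ * R
          + (c * ε * δ ^ 2) ^ 2 / 2 * G 4 (y, t₀)
          + (c * ε * δ ^ 2) ^ 3 / 6 * G 6 (y, t₀) := by
      rw [hτ]
      field_simp
      ring
    have hbnd2 : κ ^ 4 * M * τ ^ 4 / (Nat.factorial 4 : ℝ)
        = M / 24 * (c * ε * δ ^ 2) ^ 4 := by
      rw [hτ]
      norm_num [Nat.factorial]
      field_simp
    rw [hpoly, hbnd2] at key
    exact key
  -- space expansion
  have ES : ∀ j n : ℕ, 0 < n → j + n = 8 → ∀ y h' t₀ : ℝ,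
      |G j (y + h', t₀)
        - ∑ k ∈ Finset.range n, G (k + j) (y, t₀) * h' ^ k / (k.factorial : ℝ)|
        ≤ M * |h'| ^ n / (n.factorial : ℝ) := by
    intro j n hn hjn y h' t₀
    have hu : ContDiff ℝ (⊤ : ℕ∞) (fun y' => G j (y', t₀)) :=
      (hGsm j).comp (contDiff_id.prodMk contDiff_const)
    have hbnd : ∀ s, |iteratedDeriv n (fun y' => G j (y', t₀)) s| ≤ M := by
      intro s
      rw [iter_slice_x (hGsm j) n s t₀]
      have : (pd (1, 0))^[n] (G j) (s, t₀) = G 8 (s, t₀) := by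
        rw [hG, ← Function.iterate_add_apply, Nat.add_comm n j, hjn]
      rw [this]
      exact hGbdd (s, t₀)
    have key := taylor_abs hu hn hbnd y h'
    have hsum : ∑ k ∈ Finset.range n,
        iteratedDeriv k (fun y' => G j (y', t₀)) y * h' ^ k / (k.factorial : ℝ)
        = ∑ k ∈ Finset.range n, G (k + j) (y, t₀) * h' ^ k / (k.factorial : ℝ) := by
      refine Finset.sum_congr rfl fun k _ => ?_
      rw [iter_slice_x (hGsm j) k y t₀]
      rw [hG, ← Function.iterate_add_apply]
    rw [hsum] at key
    exact key
  have hφG : φ = G 0 := rfl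
  have hs1ne : s₁ ≠ 0 := ne_of_gt hs₁.1
  have hA1 : ε * s₁ = (1 - ω₀) * (1 - s₁ / 2) := by
    rw [hεdef]; field_simp
  refine ⟨M / 24 * ε ^ 4 * (1 + 2 * |ω₀ * s₁ * s₂ / 2 - s₁ * s₂ / 2 - ω₀ * s₂ / 2 + s₁ / 2 + s₂ - 1| + |-(ω₀ * s₁ * s₂) + ω₀ * s₂ + s₁ - 1| + 16 * |(s₁ - 1) * (s₂ - 1)|) + |1 - s₁ / 2 - ω₀ * s₂ / 2 + (ω₀ * s₁ * s₂ / 2 - s₁ * s₂ / 2 - ω₀ * s₂ / 2 + s₁ / 2 + s₂ - 1)| * (M / 20160) + |ω₀ * s₁ * s₂ / 2 - s₁ * s₂ / 2 - ω₀ * s₂ / 2 + s₁ / 2 + s₂ - 1| * ε * (M / 360) + |ω₀ * s₁ * s₂ / 2 - s₁ * s₂ / 2 - ω₀ * s₂ / 2 + s₁ / 2 + s₂ - 1| * ε ^ 2 * (M / 24) + |ω₀ * s₁ * s₂ / 2 - s₁ * s₂ / 2 - ω₀ * s₂ / 2 + s₁ / 2 + s₂ - 1| * ε ^ 3 * (M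 / 6)
      + 1, ?_, ?_⟩
  · -- positivity of the constant
    have h1 : (0:ℝ) ≤ M / 24 * ε ^ 4 * (1 + 2 * |ω₀ * s₁ * s₂ / 2 - s₁ * s₂ / 2 - ω₀ * s₂ / 2 + s₁ / 2 + s₂ - 1| + |-(ω₀ * s₁ * s₂) + ω₀ * s₂ + s₁ - 1| + 16 * |(s₁ - 1) * (s₂ - 1)|) :=
      mul_nonneg (mul_nonneg (by linarith) (by positivity)) (by positivity)
    have h2 : (0:ℝ) ≤ |1 - s₁ / 2 - ω₀ * s₂ / 2 + (ω₀ * s₁ * s₂ / 2 - s₁ * s₂ / 2 - ω₀ * s₂ / 2 + s₁ / 2 + s₂ - 1)| * (M / 20160) :=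
      mul_nonneg (abs_nonneg _) (by linarith)
    have h3 : (0:ℝ) ≤ |ω₀ * s₁ * s₂ / 2 - s₁ * s₂ / 2 - ω₀ * s₂ / 2 + s₁ / 2 + s₂ - 1| * ε * (M / 360) :=
      mul_nonneg (mul_nonneg (abs_nonneg _) hε.le) (by linarith)
    have h4 : (0:ℝ) ≤ |ω₀ * s₁ * s₂ / 2 - s₁ * s₂ / 2 - ω₀ * s₂ / 2 + s₁ / 2 + s₂ - 1| * ε ^ 2 * (M / 24) :=
      mul_nonneg (mul_nonneg (abs_nonneg _) (by positivity)) (by linarith)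
    have h5 : (0:ℝ) ≤ |ω₀ * s₁ * s₂ / 2 - s₁ * s₂ / 2 - ω₀ * s₂ / 2 + s₁ / 2 + s₂ - 1| * ε ^ 3 * (M / 6) :=
      mul_nonneg (mul_nonneg (abs_nonneg _) (by positivity)) (by linarith)
    linarith
  rintro Δx ⟨hΔx0, hΔx1⟩ x t
  rw [hφG,
    show t - ε * Δx ^ 2 / κ = t + -1 * ε * Δx ^ 2 / κ from by ring,
    show t - 2 * (ε * Δx ^ 2 / κ) = t + -2 * ε * Δx ^ 2 / κ from by ring,
    show (x - Δx : ℝ) = x + -Δx from by ring,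
    show t + ε * Δx ^ 2 / κ = t + 1 * ε * Δx ^ 2 / κ from by ring]
  have F1 := EB 1 x t Δx
  have F2p := EB (-1) (x + Δx) t Δx
  have F2m := EB (-1) (x + -Δx) t Δx
  have F3 := EB (-1) x t Δx
  have F4 := EB (-2) x t Δx
  have S0p : |G 0 (x + Δx, t) - (G 0 (x, t) + G 1 (x, t) * Δx + G 2 (x, t) * Δx ^ 2 / 2 + G 3 (x, t) * Δx ^ 3 / 6 + G 4 (x, t) * Δx ^ 4 / 24 + G 5 (x, t) * Δx ^ 5 / 120 + G 6 (x, t) * Δx ^ 6 / 720 + G 7 (x, t) * Δx ^ 7 / 5040)| ≤ M * Δx ^ 8 / 40320 := by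
    have h0 := ES 0 8 (by norm_num) (by norm_num) x (Δx) t
    have hexp : (∑ k ∈ Finset.range 8, G (k + 0) (x, t) * (Δx) ^ k / (k.factorial : ℝ))
        = G 0 (x, t) + G 1 (x, t) * Δx + G 2 (x, t) * Δx ^ 2 / 2 + G 3 (x, t) * Δx ^ 3 / 6 + G 4 (x, t) * Δx ^ 4 / 24 + G 5 (x, t) * Δx ^ 5 / 120 + G 6 (x, t) * Δx ^ 6 / 720 + G 7 (x, t) * Δx ^ 7 / 5040 := by
      simp only [Finset.sum_range_succ, Finset.sum_range_zero]
      norm_num [Nat.factorial]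
      try ring
    rw [hexp] at h0
    have hb : M * |(Δx : ℝ)| ^ 8 / ((8 : ℕ).factorial : ℝ) = M * Δx ^ 8 / 40320 := by
      rw [abs_of_pos hΔx0]; norm_num [Nat.factorial]
    rwa [hb] at h0
  have S0m : |G 0 (x + -Δx, t) - (G 0 (x, t) + G 1 (x, t) * (-Δx) + G 2 (x, t) * (-Δx) ^ 2 / 2 + G 3 (x, t) * (-Δx) ^ 3 / 6 + G 4 (x, t) * (-Δx) ^ 4 / 24 + G 5 (x, t) * (-Δx) ^ 5 / 120 + G 6 (x, t) * (-Δx) ^ 6 / 720 + G 7 (x, t) * (-Δx) ^ 7 / 5040)| ≤ M * Δx ^ 8 / 40320 := by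
    have h0 := ES 0 8 (by norm_num) (by norm_num) x (-Δx) t
    have hexp : (∑ k ∈ Finset.range 8, G (k + 0) (x, t) * (-Δx) ^ k / (k.factorial : ℝ))
        = G 0 (x, t) + G 1 (x, t) * (-Δx) + G 2 (x, t) * (-Δx) ^ 2 / 2 + G 3 (x, t) * (-Δx) ^ 3 / 6 + G 4 (x, t) * (-Δx) ^ 4 / 24 + G 5 (x, t) * (-Δx) ^ 5 / 120 + G 6 (x, t) * (-Δx) ^ 6 / 720 + G 7 (x, t) * (-Δx) ^ 7 / 5040 := by
      simp only [Finset.sum_range_succ, Finset.sum_range_zero]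
      norm_num [Nat.factorial]
      try ring
    rw [hexp] at h0
    have hb : M * |(-Δx : ℝ)| ^ 8 / ((8 : ℕ).factorial : ℝ) = M * Δx ^ 8 / 40320 := by
      rw [abs_neg, abs_of_pos hΔx0]; norm_num [Nat.factorial]
    rwa [hb] at h0
  have S2p : |G 2 (x + Δx, t) - (G 2 (x, t) + G 3 (x, t) * Δx + G 4 (x, t) * Δx ^ 2 / 2 + G 5 (x, t) * Δx ^ 3 / 6 + G 6 (x, t) * Δx ^ 4 / 24 + G 7 (x, t) * Δx ^ 5 / 120)| ≤ M * Δx ^ 6 / 720 := by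
    have h0 := ES 2 6 (by norm_num) (by norm_num) x (Δx) t
    have hexp : (∑ k ∈ Finset.range 6, G (k + 2) (x, t) * (Δx) ^ k / (k.factorial : ℝ))
        = G 2 (x, t) + G 3 (x, t) * Δx + G 4 (x, t) * Δx ^ 2 / 2 + G 5 (x, t) * Δx ^ 3 / 6 + G 6 (x, t) * Δx ^ 4 / 24 + G 7 (x, t) * Δx ^ 5 / 120 := by
      simp only [Finset.sum_range_succ, Finset.sum_range_zero]
      norm_num [Nat.factorial]
      try ring
    rw [hexp] at h0
    have hb : M * |(Δx : ℝ)| ^ 6 / ((6 : ℕ).factorial : ℝ) = M * Δx ^ 6 / 720 := by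
      rw [abs_of_pos hΔx0]; norm_num [Nat.factorial]
    rwa [hb] at h0
  have S2m : |G 2 (x + -Δx, t) - (G 2 (x, t) + G 3 (x, t) * (-Δx) + G 4 (x, t) * (-Δx) ^ 2 / 2 + G 5 (x, t) * (-Δx) ^ 3 / 6 + G 6 (x, t) * (-Δx) ^ 4 / 24 + G 7 (x, t) * (-Δx) ^ 5 / 120)| ≤ M * Δx ^ 6 / 720 := by
    have h0 := ES 2 6 (by norm_num) (by norm_num) x (-Δx) t
    have hexp : (∑ k ∈ Finset.range 6, G (k + 2) (x, t) * (-Δx) ^ k / (k.factorial : ℝ))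
        = G 2 (x, t) + G 3 (x, t) * (-Δx) + G 4 (x, t) * (-Δx) ^ 2 / 2 + G 5 (x, t) * (-Δx) ^ 3 / 6 + G 6 (x, t) * (-Δx) ^ 4 / 24 + G 7 (x, t) * (-Δx) ^ 5 / 120 := by
      simp only [Finset.sum_range_succ, Finset.sum_range_zero]
      norm_num [Nat.factorial]
      try ring
    rw [hexp] at h0
    have hb : M * |(-Δx : ℝ)| ^ 6 / ((6 : ℕ).factorial : ℝ) = M * Δx ^ 6 / 720 := by
      rw [abs_neg, abs_of_pos hΔx0]; norm_num [Nat.factorial]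
    rwa [hb] at h0
  have S4p : |G 4 (x + Δx, t) - (G 4 (x, t) + G 5 (x, t) * Δx + G 6 (x, t) * Δx ^ 2 / 2 + G 7 (x, t) * Δx ^ 3 / 6)| ≤ M * Δx ^ 4 / 24 := by
    have h0 := ES 4 4 (by norm_num) (by norm_num) x (Δx) t
    have hexp : (∑ k ∈ Finset.range 4, G (k + 4) (x, t) * (Δx) ^ k / (k.factorial : ℝ))
        = G 4 (x, t) + G 5 (x, t) * Δx + G 6 (x, t) * Δx ^ 2 / 2 + G 7 (x, t) * Δx ^ 3 / 6 := by
      simp only [Finset.sum_range_succ, Finset.sum_range_zero]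
      norm_num [Nat.factorial]
      try ring
    rw [hexp] at h0
    have hb : M * |(Δx : ℝ)| ^ 4 / ((4 : ℕ).factorial : ℝ) = M * Δx ^ 4 / 24 := by
      rw [abs_of_pos hΔx0]; norm_num [Nat.factorial]
    rwa [hb] at h0
  have S4m : |G 4 (x + -Δx, t) - (G 4 (x, t) + G 5 (x, t) * (-Δx) + G 6 (x, t) * (-Δx) ^ 2 / 2 + G 7 (x, t) * (-Δx) ^ 3 / 6)| ≤ M * Δx ^ 4 / 24 := by
    have h0 := ES 4 4 (by norm_num) (by norm_num) x (-Δx) t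
    have hexp : (∑ k ∈ Finset.range 4, G (k + 4) (x, t) * (-Δx) ^ k / (k.factorial : ℝ))
        = G 4 (x, t) + G 5 (x, t) * (-Δx) + G 6 (x, t) * (-Δx) ^ 2 / 2 + G 7 (x, t) * (-Δx) ^ 3 / 6 := by
      simp only [Finset.sum_range_succ, Finset.sum_range_zero]
      norm_num [Nat.factorial]
      try ring
    rw [hexp] at h0
    have hb : M * |(-Δx : ℝ)| ^ 4 / ((4 : ℕ).factorial : ℝ) = M * Δx ^ 4 / 24 := by
      rw [abs_neg, abs_of_pos hΔx0]; norm_num [Nat.factorial]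
    rwa [hb] at h0
  have S6p : |G 6 (x + Δx, t) - (G 6 (x, t) + G 7 (x, t) * Δx)| ≤ M * Δx ^ 2 / 2 := by
    have h0 := ES 6 2 (by norm_num) (by norm_num) x (Δx) t
    have hexp : (∑ k ∈ Finset.range 2, G (k + 6) (x, t) * (Δx) ^ k / (k.factorial : ℝ))
        = G 6 (x, t) + G 7 (x, t) * Δx := by
      simp only [Finset.sum_range_succ, Finset.sum_range_zero]
      norm_num [Nat.factorial]
      try ring
    rw [hexp] at h0
    have hb : M * |(Δx : ℝ)| ^ 2 / ((2 : ℕ).factorial : ℝ) = M * Δx ^ 2 / 2 := by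
      rw [abs_of_pos hΔx0]; norm_num [Nat.factorial]
    rwa [hb] at h0
  have S6m : |G 6 (x + -Δx, t) - (G 6 (x, t) + G 7 (x, t) * (-Δx))| ≤ M * Δx ^ 2 / 2 := by
    have h0 := ES 6 2 (by norm_num) (by norm_num) x (-Δx) t
    have hexp : (∑ k ∈ Finset.range 2, G (k + 6) (x, t) * (-Δx) ^ k / (k.factorial : ℝ))
        = G 6 (x, t) + G 7 (x, t) * (-Δx) := by
      simp only [Finset.sum_range_succ, Finset.sum_range_zero]
      norm_num [Nat.factorial]
      try ring
    rw [hexp] at h0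
    have hb : M * |(-Δx : ℝ)| ^ 2 / ((2 : ℕ).factorial : ℝ) = M * Δx ^ 2 / 2 := by
      rw [abs_neg, abs_of_pos hΔx0]; norm_num [Nat.factorial]
    rwa [hb] at h0
  have key : (G 0 (x, t + 1 * ε * Δx ^ 2 / κ) -
        ((1 - s₁ / 2 - ω₀ * s₂ / 2) * G 0 (x + -Δx, t) + ((ω₀ - 1) * s₂ + 1) * G 0 (x, t) +
                    (1 - s₁ / 2 - ω₀ * s₂ / 2) * G 0 (x + Δx, t) +
                  (ω₀ * s₁ * s₂ / 2 - s₁ * s₂ / 2 - ω₀ * s₂ / 2 + s₁ / 2 + s₂ - 1) *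
                    G 0 (x + -Δx, t + -1 * ε * Δx ^ 2 / κ) +
                (-(ω₀ * s₁ * s₂) + ω₀ * s₂ + s₁ - 1) * G 0 (x, t + -1 * ε * Δx ^ 2 / κ) +
              (ω₀ * s₁ * s₂ / 2 - s₁ * s₂ / 2 - ω₀ * s₂ / 2 + s₁ / 2 + s₂ - 1) * G 0 (x + Δx, t + -1 * ε * Δx ^ 2 / κ) +
            (s₁ - 1) * (s₂ - 1) * G 0 (x, t + -2 * ε * Δx ^ 2 / κ) +
          s₁ * s₂ * (ε * Δx ^ 2 / κ) * R))
      = (G 0 (x, t + 1 * ε * Δx ^ 2 / κ) - (G 0 (x, t) + 1 * ε * Δx ^ 2 * G 2 (x, t) + 1 * ε * Δx ^ 2 / κ * R + (1 * ε * Δx ^ 2) ^ 2 / 2 * G 4 (x, t) + (1 * ε * Δx ^ 2) ^ 3 / 6 * G 6 (x, t))) + (-((ω₀ * s₁ * s₂ / 2 - s₁ * s₂ / 2 - ω₀ * s₂ / 2 + s₁ / 2 + s₂ - 1) * ((G 0 (x + Δx, t + -1 * ε * Δx ^ 2 / κ) - (G 0 (x + Δx, t) + -1 * ε * Δx ^ 2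 * G 2 (x + Δx, t) + -1 * ε * Δx ^ 2 / κ * R + (-1 * ε * Δx ^ 2) ^ 2 / 2 * G 4 (x + Δx, t) + (-1 * ε * Δx ^ 2) ^ 3 / 6 * G 6 (x + Δx, t))) + (G 0 (x + -Δx, t + -1 * ε * Δx ^ 2 / κ) - (G 0 (x + -Δx, t) + -1 * ε * Δx ^ 2 * G 2 (x + -Δx, t) + -1 * ε * Δx ^ 2 / κ * R + (-1 * ε * Δx ^ 2) ^ 2 / 2 * G 4 (x + -Δx, t) + (-1 * ε * Δx ^ 2) ^ 3 / 6 * G 6 (x + -Δx, t)))))) + (-((-(ω₀ * s₁ * s₂) + ω₀ * s₂ + s₁ - 1) * (G 0 (x, t + -1 * ε * Δx ^ 2 / κ) - (G 0 (x, t) + -1 * ε * Δx ^ 2 * G 2 (x, t) + -1 * ε * Δx ^ 2 / κ * R + (-1 * ε * Δx ^ 2) ^ 2 / 2 * G 4 (x, t) + (-1 * ε * Δx ^ 2) ^ 3 / 6 * G 6 (x, t))))) + (-((s₁ - 1) * (s₂ - 1) * (G 0 (x, t + -2 * ε * Δx ^ 2 / κ) - (G 0 (x, t) + -2 * ε * Δx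 ^ 2 * G 2 (x, t) + -2 * ε * Δx ^ 2 / κ * R + (-2 * ε * Δx ^ 2) ^ 2 / 2 * G 4 (x, t) + (-2 * ε * Δx ^ 2) ^ 3 / 6 * G 6 (x, t))))) + (-((1 - s₁ / 2 - ω₀ * s₂ / 2 + (ω₀ * s₁ * s₂ / 2 - s₁ * s₂ / 2 - ω₀ * s₂ / 2 + s₁ / 2 + s₂ - 1)) * ((G 0 (x + Δx, t) - (G 0 (x, t) + G 1 (x, t) * Δx + G 2 (x, t) * Δx ^ 2 / 2 + G 3 (x, t) * Δx ^ 3 / 6 + G 4 (x, t) * Δx ^ 4 / 24 + G 5 (x, t) * Δx ^ 5 / 120 + G 6 (x, t) * Δx ^ 6 / 720 + G 7 (x, t) * Δx ^ 7 / 5040)) + (G 0 (x + (-Δx), t) - (G 0 (x, t) + G 1 (x, t) * (-Δx) + G 2 (x, t) * (-Δx) ^ 2 / 2 + G 3 (x, t) * (-Δx) ^ 3 / 6 + G 4 (x, t) * (-Δx) ^ 4 / 24 + G 5 (x, t) * (-Δx) ^ 5 / 120 + G 6 (x, t) * (-Δx) ^ 6 / 720 + G 7 (x, t) * (-Δx)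 ^ 7 / 5040))))) + ((ω₀ * s₁ * s₂ / 2 - s₁ * s₂ / 2 - ω₀ * s₂ / 2 + s₁ / 2 + s₂ - 1) * (ε * Δx ^ 2) * ((G 2 (x + Δx, t) - (G 2 (x, t) + G 3 (x, t) * Δx + G 4 (x, t) * Δx ^ 2 / 2 + G 5 (x, t) * Δx ^ 3 / 6 + G 6 (x, t) * Δx ^ 4 / 24 + G 7 (x, t) * Δx ^ 5 / 120)) + (G 2 (x + (-Δx), t) - (G 2 (x, t) + G 3 (x, t) * (-Δx) + G 4 (x, t) * (-Δx) ^ 2 / 2 + G 5 (x, t) * (-Δx) ^ 3 / 6 + G 6 (x, t) * (-Δx) ^ 4 / 24 + G 7 (x, t) * (-Δx) ^ 5 / 120)))) + (-((ω₀ * s₁ * s₂ / 2 - s₁ * s₂ / 2 - ω₀ * s₂ / 2 + s₁ / 2 + s₂ - 1) * (ε ^ 2 * Δx ^ 4 / 2) * ((G 4 (x + Δx, t) - (G 4 (x, t) + G 5 (x, t) * Δx + G 6 (x, t) * Δx ^ 2 / 2 + G 7 (x, t) * Δx ^ 3 / 6)) + (G 4 (x + (-Δx), t) - (G 4 (x,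 t) + G 5 (x, t) * (-Δx) + G 6 (x, t) * (-Δx) ^ 2 / 2 + G 7 (x, t) * (-Δx) ^ 3 / 6))))) + ((ω₀ * s₁ * s₂ / 2 - s₁ * s₂ / 2 - ω₀ * s₂ / 2 + s₁ / 2 + s₂ - 1) * (ε ^ 3 * Δx ^ 6 / 6) * ((G 6 (x + Δx, t) - (G 6 (x, t) + G 7 (x, t) * Δx)) + (G 6 (x + (-Δx), t) - (G 6 (x, t) + G 7 (x, t) * (-Δx))))) := by
    linear_combination (s₂ * G 2 (x, t) * Δx ^ 2 + (s₂ / 12 - ε * s₂) * G 4 (x, t) * Δx ^ 4 + (s₂ / 360 - ε * s₂ / 12 + ε ^ 2 * s₂ / 2) * G 6 (x, t) * Δx ^ 6) * hA1 - ε * G 4 (x, t) * Δx ^ 4 * hord1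
      - ε * G 6 (x, t) * Δx ^ 6 * hord2
  rw [key]
  refine le_trans (abs_add8 _ _ _ _ _ _ _ _) ?_
  have hT2 : |-((ω₀ * s₁ * s₂ / 2 - s₁ * s₂ / 2 - ω₀ * s₂ / 2 + s₁ / 2 + s₂ - 1) * ((G 0 (x + Δx, t + -1 * ε * Δx ^ 2 / κ) - (G 0 (x + Δx, t) + -1 * ε * Δx ^ 2 * G 2 (x + Δx, t) + -1 * ε * Δx ^ 2 / κ * R + (-1 * ε * Δx ^ 2) ^ 2 / 2 * G 4 (x + Δx, t) + (-1 * ε * Δx ^ 2) ^ 3 / 6 * G 6 (x + Δx, t))) + (G 0 (x + -Δx, t + -1 * ε * Δx ^ 2 / κ) - (G 0 (x + -Δx, t) + -1 * ε * Δx ^ 2 * G 2 (x + -Δx, t) + -1 * ε * Δx ^ 2 / κ * R + (-1 * ε * Δx ^ 2) ^ 2 / 2 * G 4 (x + -Δx, t) + (-1 * ε * Δx ^ 2) ^ 3 / 6 * G 6 (x + -Δx, t)))))| ≤ |ω₀ * s₁ * s₂ / 2 - s₁ * s₂ / 2 - ω₀ * s₂ / 2 + s₁ / 2 + s₂ - 1|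 * (M / 24 * (-1 * ε * Δx ^ 2) ^ 4 + M / 24 * (-1 * ε * Δx ^ 2) ^ 4) := by
    rw [abs_neg, abs_mul]
    exact mul_le_mul_of_nonneg_left ((abs_add_le _ _).trans (add_le_add F2p F2m)) (abs_nonneg _)
  have hT3 : |-((-(ω₀ * s₁ * s₂) + ω₀ * s₂ + s₁ - 1) * (G 0 (x, t + -1 * ε * Δx ^ 2 / κ) - (G 0 (x, t) + -1 * ε * Δx ^ 2 * G 2 (x, t) + -1 * ε * Δx ^ 2 / κ * R + (-1 * ε * Δx ^ 2) ^ 2 / 2 * G 4 (x, t) + (-1 * ε * Δx ^ 2) ^ 3 / 6 * G 6 (x, t))))| ≤ |-(ω₀ * s₁ * s₂) + ω₀ * s₂ + s₁ - 1| * (M / 24 * (-1 * ε * Δx ^ 2) ^ 4) := by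
    rw [abs_neg, abs_mul]
    exact mul_le_mul_of_nonneg_left F3 (abs_nonneg _)
  have hT4 : |-((s₁ - 1) * (s₂ - 1) * (G 0 (x, t + -2 * ε * Δx ^ 2 / κ) - (G 0 (x, t) + -2 * ε * Δx ^ 2 * G 2 (x, t) + -2 * ε * Δx ^ 2 / κ * R + (-2 * ε * Δx ^ 2) ^ 2 / 2 * G 4 (x, t) + (-2 * ε * Δx ^ 2) ^ 3 / 6 * G 6 (x, t))))| ≤ |(s₁ - 1) * (s₂ - 1)| * (M / 24 * (-2 * ε * Δx ^ 2) ^ 4) := by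
    rw [abs_neg, abs_mul]
    exact mul_le_mul_of_nonneg_left F4 (abs_nonneg _)
  have hT5 : |-((1 - s₁ / 2 - ω₀ * s₂ / 2 + (ω₀ * s₁ * s₂ / 2 - s₁ * s₂ / 2 - ω₀ * s₂ / 2 + s₁ / 2 + s₂ - 1)) * ((G 0 (x + Δx, t) - (G 0 (x, t) + G 1 (x, t) * Δx + G 2 (x, t) * Δx ^ 2 / 2 + G 3 (x, t) * Δx ^ 3 / 6 + G 4 (x, t) * Δx ^ 4 / 24 + G 5 (x, t) * Δx ^ 5 / 120 + G 6 (x, t) * Δx ^ 6 / 720 + G 7 (x, t) * Δx ^ 7 / 5040)) + (G 0 (x + (-Δx), t) - (G 0 (x, t) + G 1 (x, t) * (-Δx) + G 2 (x, t) * (-Δx) ^ 2 / 2 + G 3 (x, t) * (-Δx) ^ 3 / 6 + G 4 (x, t) * (-Δx) ^ 4 / 24 + G 5 (x, t) * (-Δx) ^ 5 / 120 + G 6 (x, t) * (-Δx) ^ 6 / 720 + G 7 (x, t) * (-Δx) ^ 7 / 5040))))| ≤ |1 - s₁ / 2 - ω₀ * s₂ / 2 + (ω₀ * s₁ * s₂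 / 2 - s₁ * s₂ / 2 - ω₀ * s₂ / 2 + s₁ / 2 + s₂ - 1)| * (M * Δx ^ 8 / 40320 + M * Δx ^ 8 / 40320) := by
    rw [abs_neg, abs_mul]
    exact mul_le_mul_of_nonneg_left ((abs_add_le _ _).trans (add_le_add S0p S0m)) (abs_nonneg _)
  have hT6 : |(ω₀ * s₁ * s₂ / 2 - s₁ * s₂ / 2 - ω₀ * s₂ / 2 + s₁ / 2 + s₂ - 1) * (ε * Δx ^ 2) * ((G 2 (x + Δx, t) - (G 2 (x, t) + G 3 (x, t) * Δx + G 4 (x, t) * Δx ^ 2 / 2 + G 5 (x, t) * Δx ^ 3 / 6 + G 6 (x, t) * Δx ^ 4 / 24 + G 7 (x, t) * Δx ^ 5 / 120)) + (G 2 (x + (-Δx), t) - (G 2 (x, t) + G 3 (x, t) * (-Δx) + G 4 (x, t) * (-Δx) ^ 2 / 2 + G 5 (x, t) * (-Δx) ^ 3 / 6 + G 6 (x, t) * (-Δx) ^ 4 / 24 + G 7 (x, t) * (-Δx) ^ 5 / 120)))| ≤ |ω₀ * s₁ * s₂ / 2 - s₁ * s₂ / 2 - ω₀ * s₂ / 2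 + s₁ / 2 + s₂ - 1| * (ε * Δx ^ 2) * (M * Δx ^ 6 / 720 + M * Δx ^ 6 / 720) := by
    rw [abs_mul, abs_mul, abs_of_pos (mul_pos hε (pow_pos hΔx0 2))]
    exact mul_le_mul_of_nonneg_left ((abs_add_le _ _).trans (add_le_add S2p S2m))
      (mul_nonneg (abs_nonneg _) (mul_pos hε (pow_pos hΔx0 2)).le)
  have hT7 : |-((ω₀ * s₁ * s₂ / 2 - s₁ * s₂ / 2 - ω₀ * s₂ / 2 + s₁ / 2 + s₂ - 1) * (ε ^ 2 * Δx ^ 4 / 2) * ((G 4 (x + Δx, t) - (G 4 (x, t) + G 5 (x, t) * Δx + G 6 (x, t) * Δx ^ 2 / 2 + G 7 (x, t) * Δx ^ 3 / 6)) + (G 4 (x + (-Δx), t) - (G 4 (x, t) + G 5 (x, t) * (-Δx) + G 6 (x, t) * (-Δx) ^ 2 / 2 + G 7 (x, t) * (-Δx) ^ 3 / 6))))| ≤ |ω₀ * s₁ * s₂ / 2 - s₁ * s₂ / 2 - ω₀ * s₂ / 2 + s₁ / 2 + s₂ - 1| * (ε ^ 2 * Δx ^ 4 / 2) * (M * Δx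 ^ 4 / 24 + M * Δx ^ 4 / 24) := by
    rw [abs_neg, abs_mul, abs_mul,
      abs_of_pos (by positivity : (0:ℝ) < ε ^ 2 * Δx ^ 4 / 2)]
    exact mul_le_mul_of_nonneg_left ((abs_add_le _ _).trans (add_le_add S4p S4m))
      (mul_nonneg (abs_nonneg _) (by positivity))
  have hT8 : |(ω₀ * s₁ * s₂ / 2 - s₁ * s₂ / 2 - ω₀ * s₂ / 2 + s₁ / 2 + s₂ - 1) * (ε ^ 3 * Δx ^ 6 / 6) * ((G 6 (x + Δx, t) - (G 6 (x, t) + G 7 (x, t) * Δx)) + (G 6 (x + (-Δx), t) - (G 6 (x, t) + G 7 (x, t) * (-Δx))))| ≤ |ω₀ * s₁ * s₂ / 2 - s₁ * s₂ / 2 - ω₀ * s₂ / 2 + s₁ / 2 + s₂ - 1| * (ε ^ 3 * Δx ^ 6 / 6) * (M * Δx ^ 2 / 2 + M * Δx ^ 2 / 2) := by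
    rw [abs_mul, abs_mul,
      abs_of_pos (show (0:ℝ) < ε ^ 3 * Δx ^ 6 / 6 by
        exact div_pos (mul_pos (pow_pos hε 3) (pow_pos hΔx0 6)) (by norm_num))]
    exact mul_le_mul_of_nonneg_left ((abs_add_le _ _).trans (add_le_add S6p S6m))
      (mul_nonneg (abs_nonneg _)
        (div_pos (mul_pos (pow_pos hε 3) (pow_pos hΔx0 6)) (by norm_num)).le)
  refine le_trans (add_le_add (add_le_add (add_le_add (add_le_add (add_le_add
    (add_le_add (add_le_add F1 hT2) hT3) hT4) hT5) hT6) hT7) hT8) ?_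
  have hpow : (0:ℝ) ≤ Δx ^ 8 := by positivity
  nlinarith [hpow]
end

section
/- (Fourth-order spatial accuracy.) Let κ > 0, R ∈ ℝ, ω₀ ∈ (0,1), s₁, s₂ ∈ (0,2) and ε > 0 satisfy ε = (1−ω₀)(1/s₁ − 1/2) together with the order condition s₁s₂/12 − (ω₀s₂/2 + s₁/2 − 1) + (s₁s₂/2 − s₁ − s₂)ε = 0. Let φ : ℝ × ℝ → ℝ be C^∞ with all partial derivatives of total order at most 6 bounded on ℝ², and suppose φ solves the diffusion equation ∂φ/∂t (x,t) = κ·∂²φ/∂x² (x,t) + R for all (x,t). Then there exists a constant C > 0 such that for every Δx ∈ (0,1], setting Δt = εΔx²/κ, the local residual of the four-level scheme satisfies |φ(x, t+Δt) − [α₁φ(x−Δx, t) + α₂φ(x, t) + α₁φ(x+Δx, t) + β₁φ(x−Δx, t−Δt) + β₂φ(x, t−Δt) + β₁φ(x+Δx, t−Δt) + γφ(x, t−2Δt) + s₁s₂·Δt·R]| ≤ C·Δx⁶ for all (x,t) ∈ ℝ². -/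
noncomputable def pdv (v : ℝ × ℝ) (f : ℝ × ℝ → ℝ) : ℝ × ℝ → ℝ := fun p => fderiv ℝ f p v

lemma pdv_contDiff {f : ℝ × ℝ → ℝ} (hf : ContDiff ℝ (⊤ : ℕ∞) f) (v : ℝ × ℝ) :
    ContDiff ℝ (⊤ : ℕ∞) (pdv v f) :=
  (hf.fderiv_right (m := (⊤:ℕ∞)) (by simp)).clm_apply contDiff_const

lemma pdv_bound {f : ℝ × ℝ → ℝ} (hf : ContDiff ℝ (⊤ : ℕ∞) f) {n : ℕ} {M : ℝ} {v : ℝ × ℝ}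
    (hv : ‖v‖ ≤ 1) (hM : ∀ p, ‖iteratedFDeriv ℝ (n + 1) f p‖ ≤ M) :
    ∀ p, ‖iteratedFDeriv ℝ n (pdv v f) p‖ ≤ M := by
  intro p
  have h1 : ‖iteratedFDeriv ℝ n (pdv v f) p‖ ≤ ‖v‖ * ‖iteratedFDeriv ℝ n (fderiv ℝ f) p‖ :=
    norm_iteratedFDeriv_clm_apply_const (hf.fderiv_right (m := (⊤:ℕ∞)) (by simp)).contDiffAt (by exact_mod_cast le_top)
  rw [norm_iteratedFDeriv_fderiv] at h1
  calc ‖iteratedFDeriv ℝ n (pdv v f) p‖ ≤ ‖v‖ * ‖iteratedFDeriv ℝ (n+1) f p‖ := h1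
    _ ≤ 1 * ‖iteratedFDeriv ℝ (n+1) f p‖ := by
        exact mul_le_mul_of_nonneg_right hv (norm_nonneg _)
    _ = ‖iteratedFDeriv ℝ (n+1) f p‖ := one_mul _
    _ ≤ M := hM p

lemma pdv_iter_bound {v : ℝ × ℝ} (hv : ‖v‖ ≤ 1) :
    ∀ (k : ℕ) {f : ℝ × ℝ → ℝ}, ContDiff ℝ (⊤ : ℕ∞) f → ∀ {n : ℕ} {M : ℝ},
      (∀ p, ‖iteratedFDeriv ℝ (n + k) f p‖ ≤ M) →
      ∀ p, ‖iteratedFDeriv ℝ n ((pdv v)^[k] f) p‖ ≤ M := by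
  intro k
  induction k with
  | zero => intro f hf n M hM p; simpa using hM p
  | succ k ih =>
    intro f hf n M hM p
    rw [Function.iterate_succ_apply]
    exact ih (pdv_contDiff hf v) (fun q => pdv_bound hf hv (n := n + k)
      (fun q' => by rw [Nat.add_assoc]; exact hM q') q) p

lemma abs_pdv_iter_bound {v : ℝ × ℝ} (hv : ‖v‖ ≤ 1) (k : ℕ) {f : ℝ × ℝ → ℝ}
    (hf : ContDiff ℝ (⊤ : ℕ∞) f) {M : ℝ}
    (hM : ∀ p, ‖iteratedFDeriv ℝ k f p‖ ≤ M) (p : ℝ × ℝ) : |((pdv v)^[k] f) p| ≤ M := by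
  have := pdv_iter_bound hv k hf (n := 0) (M := M) (fun q => by rw [Nat.zero_add]; exact hM q) p
  simpa [norm_iteratedFDeriv_zero] using this

lemma sect1_contDiff {f : ℝ × ℝ → ℝ} (hf : ContDiff ℝ (⊤ : ℕ∞) f) (t : ℝ) :
    ContDiff ℝ (⊤ : ℕ∞) (fun y => f (y, t)) :=
  hf.comp (contDiff_id.prodMk contDiff_const)

lemma sect2_contDiff {f : ℝ × ℝ → ℝ} (hf : ContDiff ℝ (⊤ : ℕ∞) f) (x : ℝ) :
    ContDiff ℝ (⊤ : ℕ∞) (fun s => f (x, s)) :=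
  hf.comp (contDiff_const.prodMk contDiff_id)

lemma deriv_sect1 {f : ℝ × ℝ → ℝ} (hf : ContDiff ℝ (⊤ : ℕ∞) f) (x t : ℝ) :
    deriv (fun y => f (y, t)) x = pdv (1, 0) f (x, t) := by
  have h1 : HasDerivAt (fun y : ℝ => ((y, t) : ℝ × ℝ)) ((1 : ℝ), (0 : ℝ)) x :=
    (hasDerivAt_id x).prodMk (hasDerivAt_const x t)
  have h2 : HasFDerivAt f (fderiv ℝ f (x, t)) (x, t) :=
    (hf.differentiable (by simp)).differentiableAt.hasFDerivAt
  exact (h2.comp_hasDerivAt x h1).deriv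

lemma deriv_sect2 {f : ℝ × ℝ → ℝ} (hf : ContDiff ℝ (⊤ : ℕ∞) f) (x t : ℝ) :
    deriv (fun s => f (x, s)) t = pdv (0, 1) f (x, t) := by
  have h1 : HasDerivAt (fun s : ℝ => ((x, s) : ℝ × ℝ)) ((0 : ℝ), (1 : ℝ)) t :=
    (hasDerivAt_const t x).prodMk (hasDerivAt_id t)
  have h2 : HasFDerivAt f (fderiv ℝ f (x, t)) (x, t) :=
    (hf.differentiable (by simp)).differentiableAt.hasFDerivAt
  exact (h2.comp_hasDerivAt t h1).deriv

lemma iteratedDeriv_sect1 (k : ℕ) :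
    ∀ {f : ℝ × ℝ → ℝ}, ContDiff ℝ (⊤ : ℕ∞) f → ∀ (x t : ℝ),
      iteratedDeriv k (fun y => f (y, t)) x = ((pdv (1, 0))^[k] f) (x, t) := by
  induction k with
  | zero => intro f _ x t; simp
  | succ k ih =>
    intro f hf x t
    rw [iteratedDeriv_succ']
    have : deriv (fun y => f (y, t)) = fun y => pdv (1, 0) f (y, t) :=
      funext fun y => deriv_sect1 hf y t
    rw [this, ih (pdv_contDiff hf _) x t, ← Function.iterate_succ_apply]

lemma iteratedDeriv_sect2 (k : ℕ) :
    ∀ {f : ℝ × ℝ → ℝ}, ContDiff ℝ (⊤ : ℕ∞) f → ∀ (x t : ℝ),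
      iteratedDeriv k (fun s => f (x, s)) t = ((pdv (0, 1))^[k] f) (x, t) := by
  induction k with
  | zero => intro f _ x t; simp
  | succ k ih =>
    intro f hf x t
    rw [iteratedDeriv_succ']
    have : deriv (fun s => f (x, s)) = fun s => pdv (0, 1) f (x, s) :=
      funext fun s => deriv_sect2 hf x s
    rw [this, ih (pdv_contDiff hf _) x t, ← Function.iterate_succ_apply]

lemma pdv_eq_snd {f : ℝ × ℝ → ℝ} (hf : ContDiff ℝ (⊤ : ℕ∞) f) (v w : ℝ × ℝ) (p : ℝ × ℝ) :
    pdv v (pdv w f) p = fderiv ℝ (fderiv ℝ f) p v w := by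
  have hd : DifferentiableAt ℝ (fderiv ℝ f) p :=
    ((hf.fderiv_right (m := (⊤ : ℕ∞)) (by simp)).differentiable
      (by simp)).differentiableAt
  have : pdv w f = fun q => (fderiv ℝ f q) w := rfl
  rw [show pdv v (pdv w f) p = fderiv ℝ (fun q => (fderiv ℝ f q) w) p v from rfl]
  rw [fderiv_clm_apply hd (differentiableAt_const w)]
  simp

lemma pdv_comm {f : ℝ × ℝ → ℝ} (hf : ContDiff ℝ (⊤ : ℕ∞) f) (v w : ℝ × ℝ) (p : ℝ × ℝ) :
    pdv v (pdv w f) p = pdv w (pdv v f) p := by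
  rw [pdv_eq_snd hf, pdv_eq_snd hf]
  exact (hf.contDiffAt.isSymmSndFDerivAt (by simp; exact WithTop.coe_le_coe.mpr (le_top : (2:ℕ∞) ≤ ⊤))).eq v w

lemma pdv_lin {g : ℝ × ℝ → ℝ} (hg : ContDiff ℝ (⊤ : ℕ∞) g) (c r : ℝ) (v : ℝ × ℝ) (p : ℝ × ℝ) :
    pdv v (fun q => c * g q + r) p = c * pdv v g p := by
  show fderiv ℝ (fun q => c * g q + r) p v = c * fderiv ℝ g p v
  rw [fderiv_add_const, fderiv_const_mul ((hg.differentiable (by simp)).differentiableAt)]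
  simp

lemma itDW_eq {g : ℝ → ℝ} (hg : ContDiff ℝ (⊤ : ℕ∞) g) {s : Set ℝ} (hs : UniqueDiffOn ℝ s)
    (k : ℕ) {y : ℝ} (hy : y ∈ s) : iteratedDerivWithin k g s y = iteratedDeriv k g y := by
  rw [iteratedDerivWithin_eq_iteratedFDerivWithin, iteratedDeriv_eq_iteratedFDeriv]
  congr 1
  have h1 : HasFTaylorSeriesUpTo (⊤ : ℕ∞) g (ftaylorSeries ℝ g) :=
    contDiff_iff_ftaylorSeries.mp hg
  exact ((h1.hasFTaylorSeriesUpToOn s).eq_iteratedFDerivWithin_of_uniqueDiffOn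
    (by exact_mod_cast le_top) hs hy).symm

lemma taylor_est_nonneg {g : ℝ → ℝ} {n : ℕ} (hg : ContDiff ℝ (⊤ : ℕ∞) g) {M : ℝ}
    (hM : ∀ y, |iteratedDeriv (n + 1) g y| ≤ M) (a h : ℝ) (hh : 0 ≤ h) :
    |g (a + h) - ∑ k ∈ Finset.range (n + 1), h ^ k / (Nat.factorial k : ℝ) * iteratedDeriv k g a| ≤
      M * |h| ^ (n + 1) / (Nat.factorial n : ℝ) := by
  rcases eq_or_lt_of_le hh with rfl | hh'
  · simp only [add_zero]
    have : ∑ k ∈ Finset.range (n + 1), (0:ℝ) ^ k / (Nat.factorial k : ℝ) * iteratedDeriv k g a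
        = g a := by
      rw [Finset.sum_eq_single 0]
      · simp
      · intro b _ hb
        rcases Nat.exists_eq_succ_of_ne_zero hb with ⟨c, rfl⟩
        simp [zero_pow]
      · simp
    rw [this]
    simp
  · have hab : a ≤ a + h := by linarith
    have hcd : ContDiffOn ℝ (↑(n + 1)) g (Set.Icc a (a + h)) :=
      (hg.of_le (by exact_mod_cast le_top)).contDiffOn
    have hud : UniqueDiffOn ℝ (Set.Icc a (a + h)) := uniqueDiffOn_Icc (by linarith)
    have hC : ∀ y ∈ Set.Icc a (a + h),
        ‖iteratedDerivWithin (n + 1) g (Set.Icc a (a + h)) y‖ ≤ M := by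
      intro y hy
      rw [itDW_eq hg hud (n + 1) hy, Real.norm_eq_abs]
      exact hM y
    have := taylor_mean_remainder_bound hab hcd (Set.right_mem_Icc.mpr hab) hC
    rw [taylor_within_apply] at this
    have hsum : ∑ k ∈ Finset.range (n + 1),
        (((Nat.factorial k : ℝ))⁻¹ * (a + h - a) ^ k) • iteratedDerivWithin k g (Set.Icc a (a + h)) a
        = ∑ k ∈ Finset.range (n + 1), h ^ k / (Nat.factorial k : ℝ) * iteratedDeriv k g a := by
      refine Finset.sum_congr rfl fun k _ => ?_
      rw [itDW_eq hg hud k (Set.left_mem_Icc.mpr hab)]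
      rw [smul_eq_mul]
      ring_nf
    rw [hsum] at this
    rw [Real.norm_eq_abs] at this
    calc |g (a + h) - ∑ k ∈ Finset.range (n + 1), h ^ k / (Nat.factorial k : ℝ) * iteratedDeriv k g a|
        ≤ M * (a + h - a) ^ (n + 1) / (Nat.factorial n : ℝ) := this
      _ = M * |h| ^ (n + 1) / (Nat.factorial n : ℝ) := by
          rw [add_sub_cancel_left, abs_of_nonneg hh]

lemma taylor_est {g : ℝ → ℝ} {n : ℕ} (hg : ContDiff ℝ (⊤ : ℕ∞) g) {M : ℝ}
    (hM : ∀ y, |iteratedDeriv (n + 1) g y| ≤ M) (a h : ℝ) :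
    |g (a + h) - ∑ k ∈ Finset.range (n + 1), h ^ k / (Nat.factorial k : ℝ) * iteratedDeriv k g a| ≤
      M * |h| ^ (n + 1) / (Nat.factorial n : ℝ) := by
  rcases le_or_gt 0 h with hh | hh
  · exact taylor_est_nonneg hg hM a h hh
  · have hg' : ContDiff ℝ (⊤ : ℕ∞) (fun y => g (-y)) := hg.comp contDiff_neg
    have hM' : ∀ y, |iteratedDeriv (n + 1) (fun y => g (-y)) y| ≤ M := by
      intro y
      rw [iteratedDeriv_comp_neg]
      rw [smul_eq_mul, abs_mul, abs_pow, abs_neg, abs_one, one_pow, one_mul]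
      exact hM (-y)
    have key := taylor_est_nonneg hg' hM' (-a) (-h) (by linarith)
    have h1 : -(-a + -h) = a + h := by ring
    have h2 : ∑ k ∈ Finset.range (n + 1),
        (-h) ^ k / (Nat.factorial k : ℝ) * iteratedDeriv k (fun y => g (-y)) (-a)
        = ∑ k ∈ Finset.range (n + 1), h ^ k / (Nat.factorial k : ℝ) * iteratedDeriv k g a := by
      refine Finset.sum_congr rfl fun k _ => ?_
      rw [iteratedDeriv_comp_neg, neg_neg, smul_eq_mul, neg_pow]
      have h3 : (-1 : ℝ) ^ k * (-1 : ℝ) ^ k = 1 := by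
        rw [← mul_pow]; norm_num
      linear_combination (h ^ k / (Nat.factorial k : ℝ) * iteratedDeriv k g a) * h3
    rw [h1, h2, abs_neg] at key
    exact key

lemma taylor5 {g : ℝ → ℝ} (hg : ContDiff ℝ (⊤ : ℕ∞) g) {M : ℝ}
    (hM : ∀ y, |iteratedDeriv 6 g y| ≤ M) (a h : ℝ) :
    |g (a + h) - (g a + h * iteratedDeriv 1 g a + h ^ 2 / 2 * iteratedDeriv 2 g a
      + h ^ 3 / 6 * iteratedDeriv 3 g a + h ^ 4 / 24 * iteratedDeriv 4 g a
      + h ^ 5 / 120 * iteratedDeriv 5 g a)| ≤ M * |h| ^ 6 / 120 := by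
  have := taylor_est (n := 5) hg hM a h
  have hsum : ∑ k ∈ Finset.range 6, h ^ k / (Nat.factorial k : ℝ) * iteratedDeriv k g a
      = g a + h * iteratedDeriv 1 g a + h ^ 2 / 2 * iteratedDeriv 2 g a
      + h ^ 3 / 6 * iteratedDeriv 3 g a + h ^ 4 / 24 * iteratedDeriv 4 g a
      + h ^ 5 / 120 * iteratedDeriv 5 g a := by
    simp [Finset.sum_range_succ, Nat.factorial]
  rw [hsum] at this
  have h5 : (Nat.factorial 5 : ℝ) = 120 := by norm_num [Nat.factorial]
  rw [h5] at this
  simpa using this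

lemma taylor3 {g : ℝ → ℝ} (hg : ContDiff ℝ (⊤ : ℕ∞) g) {M : ℝ}
    (hM : ∀ y, |iteratedDeriv 4 g y| ≤ M) (a h : ℝ) :
    |g (a + h) - (g a + h * iteratedDeriv 1 g a + h ^ 2 / 2 * iteratedDeriv 2 g a
      + h ^ 3 / 6 * iteratedDeriv 3 g a)| ≤ M * |h| ^ 4 / 6 := by
  have := taylor_est (n := 3) hg hM a h
  have hsum : ∑ k ∈ Finset.range 4, h ^ k / (Nat.factorial k : ℝ) * iteratedDeriv k g a
      = g a + h * iteratedDeriv 1 g a + h ^ 2 / 2 * iteratedDeriv 2 g a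
      + h ^ 3 / 6 * iteratedDeriv 3 g a := by
    simp [Finset.sum_range_succ, Nat.factorial]
  rw [hsum] at this
  have h3 : (Nat.factorial 3 : ℝ) = 6 := by norm_num [Nat.factorial]
  rw [h3] at this
  simpa using this

lemma taylor2 {g : ℝ → ℝ} (hg : ContDiff ℝ (⊤ : ℕ∞) g) {M : ℝ}
    (hM : ∀ y, |iteratedDeriv 3 g y| ≤ M) (a h : ℝ) :
    |g (a + h) - (g a + h * iteratedDeriv 1 g a + h ^ 2 / 2 * iteratedDeriv 2 g a)|
      ≤ M * |h| ^ 3 / 2 := by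
  have := taylor_est (n := 2) hg hM a h
  have hsum : ∑ k ∈ Finset.range 3, h ^ k / (Nat.factorial k : ℝ) * iteratedDeriv k g a
      = g a + h * iteratedDeriv 1 g a + h ^ 2 / 2 * iteratedDeriv 2 g a := by
    simp [Finset.sum_range_succ, Nat.factorial]
  rw [hsum] at this
  have h2 : (Nat.factorial 2 : ℝ) = 2 := by norm_num [Nat.factorial]
  rw [h2] at this
  simpa using this

lemma taylor1 {g : ℝ → ℝ} (hg : ContDiff ℝ (⊤ : ℕ∞) g) {M : ℝ}
    (hM : ∀ y, |iteratedDeriv 2 g y| ≤ M) (a h : ℝ) :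
    |g (a + h) - (g a + h * iteratedDeriv 1 g a)| ≤ M * |h| ^ 2 := by
  have := taylor_est (n := 1) hg hM a h
  have hsum : ∑ k ∈ Finset.range 2, h ^ k / (Nat.factorial k : ℝ) * iteratedDeriv k g a
      = g a + h * iteratedDeriv 1 g a := by
    simp [Finset.sum_range_succ, Nat.factorial]
  rw [hsum] at this
  simpa using this

lemma pdv_smul {g : ℝ × ℝ → ℝ} (hg : ContDiff ℝ (⊤ : ℕ∞) g) (c : ℝ) (v : ℝ × ℝ) (p : ℝ × ℝ) :
    pdv v (fun q => c * g q) p = c * pdv v g p := by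
  show fderiv ℝ (fun q => c * g q) p v = c * fderiv ℝ g p v
  rw [fderiv_const_mul ((hg.differentiable (by simp)).differentiableAt)]
  simp

set_option maxHeartbeats 2000000 in
/-- Fourth-order spatial accuracy: when the mesh Fourier number
relation and the first order condition hold, the local residual of the
four-level scheme applied to a smooth bounded solution of the diffusion
equation is `O(Δx⁶)` (i.e. the truncation error is `O(Δx⁴)`). -/
theorem four_level_scheme_fourth_order_accuracy
    (κ R ω₀ s₁ s₂ ε : ℝ)
    (hκ : 0 < κ)
    (hω₀ : ω₀ ∈ Set.Ioo (0 : ℝ) 1)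
    (hs₁ : s₁ ∈ Set.Ioo (0 : ℝ) 2)
    (hs₂ : s₂ ∈ Set.Ioo (0 : ℝ) 2)
    (hε : 0 < ε)
    (hεdef : ε = (1 - ω₀) * (1 / s₁ - 1 / 2))
    (hord1 : s₁ * s₂ / 12 - (ω₀ * s₂ / 2 + s₁ / 2 - 1)
      + (s₁ * s₂ / 2 - s₁ - s₂) * ε = 0)
    (φ : ℝ × ℝ → ℝ)
    (hsmooth : ContDiff ℝ (⊤ : ℕ∞) φ)
    (hbdd : ∀ n : ℕ, n ≤ 6 → ∃ M : ℝ, ∀ p : ℝ × ℝ, ‖iteratedFDeriv ℝ n φ p‖ ≤ M)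
    (hpde : ∀ x t : ℝ,
      deriv (fun s => φ (x, s)) t
        = κ * deriv (fun y => deriv (fun z => φ (z, t)) y) x + R) :
    ∃ C > 0, ∀ Δx ∈ Set.Ioc (0 : ℝ) 1, ∀ x t : ℝ,
      |φ (x, t + ε * Δx ^ 2 / κ)
        - ((1 - s₁ / 2 - ω₀ * s₂ / 2) * φ (x - Δx, t)
          + ((ω₀ - 1) * s₂ + 1) * φ (x, t)
          + (1 - s₁ / 2 - ω₀ * s₂ / 2) * φ (x + Δx, t)
          + (ω₀ * s₁ * s₂ / 2 - s₁ * s₂ / 2 - ω₀ * s₂ / 2 + s₁ / 2 + s₂ - 1) *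
              φ (x - Δx, t - ε * Δx ^ 2 / κ)
          + (-(ω₀ * s₁ * s₂) + ω₀ * s₂ + s₁ - 1) * φ (x, t - ε * Δx ^ 2 / κ)
          + (ω₀ * s₁ * s₂ / 2 - s₁ * s₂ / 2 - ω₀ * s₂ / 2 + s₁ / 2 + s₂ - 1) *
              φ (x + Δx, t - ε * Δx ^ 2 / κ)
          + (s₁ - 1) * (s₂ - 1) * φ (x, t - 2 * (ε * Δx ^ 2 / κ))
          + s₁ * s₂ * (ε * Δx ^ 2 / κ) * R)|
        ≤ C * Δx ^ 6 := by

  have hφ : ContDiff ℝ (⊤ : ℕ∞) φ := hsmooth.of_le (by simp)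
  have hs1ne : s₁ ≠ 0 := ne_of_gt hs₁.1
  have h1 : ε * s₁ * 2 = (1 - ω₀) * (2 - s₁) := by
    rw [hεdef]; field_simp
  have hC2 : (1 - s₁ / 2 - ω₀ * s₂ / 2) + (ω₀ * s₁ * s₂ / 2 - s₁ * s₂ / 2 - ω₀ * s₂ / 2 + s₁ / 2 + s₂ - 1)
      - (2 * (ω₀ * s₁ * s₂ / 2 - s₁ * s₂ / 2 - ω₀ * s₂ / 2 + s₁ / 2 + s₂ - 1) + (-(ω₀ * s₁ * s₂) + ω₀ * s₂ + s₁ - 1) + 2 * ((s₁ - 1) * (s₂ - 1))) * ε - ε = 0 := by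
    linear_combination (-(s₂) / 2) * h1
  have hC4 : ((1 - s₁ / 2 - ω₀ * s₂ / 2) + (ω₀ * s₁ * s₂ / 2 - s₁ * s₂ / 2 - ω₀ * s₂ / 2 + s₁ / 2 + s₂ - 1)) / 12 - (ω₀ * s₁ * s₂ / 2 - s₁ * s₂ / 2 - ω₀ * s₂ / 2 + s₁ / 2 + s₂ - 1) * ε
      + ((ω₀ * s₁ * s₂ / 2 - s₁ * s₂ / 2 - ω₀ * s₂ / 2 + s₁ / 2 + s₂ - 1) + (-(ω₀ * s₁ * s₂) + ω₀ * s₂ + s₁ - 1) / 2 + 2 * ((s₁ - 1) * (s₂ - 1))) * ε ^ 2 - ε ^ 2 / 2 = 0 := by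
    linear_combination (-(s₂) / 24 + s₂ * ε / 2) * h1 + ε * hord1
  obtain ⟨M0, hM0⟩ := hbdd 0 (by norm_num)
  obtain ⟨M1, hM1⟩ := hbdd 1 (by norm_num)
  obtain ⟨M2, hM2⟩ := hbdd 2 (by norm_num)
  obtain ⟨M3, hM3⟩ := hbdd 3 (by norm_num)
  obtain ⟨M4, hM4⟩ := hbdd 4 (by norm_num)
  obtain ⟨M5, hM5⟩ := hbdd 5 (by norm_num)
  obtain ⟨M6, hM6⟩ := hbdd 6 (by norm_num)
  set M : ℝ := |M0| + |M1| + |M2| + |M3| + |M4| + |M5| + |M6| with hMdef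
  have habs : ∀ i : Fin 7, True := fun _ => trivial
  have hMnn : 0 ≤ M := by rw [hMdef]; positivity
  have hM : ∀ n : ℕ, n ≤ 6 → ∀ p, ‖iteratedFDeriv ℝ n φ p‖ ≤ M := by
    intro n hn p
    have l0 := le_abs_self M0; have l1 := le_abs_self M1; have l2 := le_abs_self M2
    have l3 := le_abs_self M3; have l4 := le_abs_self M4; have l5 := le_abs_self M5
    have l6 := le_abs_self M6
    have a0 := abs_nonneg M0; have a1 := abs_nonneg M1; have a2 := abs_nonneg M2
    have a3 := abs_nonneg M3; have a4 := abs_nonneg M4; have a5 := abs_nonneg M5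
    have a6 := abs_nonneg M6
    interval_cases n
    · have := hM0 p; rw [hMdef]; linarith
    · have := hM1 p; rw [hMdef]; linarith
    · have := hM2 p; rw [hMdef]; linarith
    · have := hM3 p; rw [hMdef]; linarith
    · have := hM4 p; rw [hMdef]; linarith
    · have := hM5 p; rw [hMdef]; linarith
    · have := hM6 p; rw [hMdef]; linarith
  have he1n : ‖((1 : ℝ), (0 : ℝ))‖ ≤ 1 := by norm_num [Prod.norm_def]
  have he2n : ‖((0 : ℝ), (1 : ℝ))‖ ≤ 1 := by norm_num [Prod.norm_def]
  set K : ℝ := ε / κ with hKdef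
  have hK : 0 < K := div_pos hε hκ
  refine ⟨M * (K ^ 3 / 2 + |(-(ω₀ * s₁ * s₂) + ω₀ * s₂ + s₁ - 1)| * K ^ 3 / 2 + 4 * |((s₁ - 1) * (s₂ - 1))| * K ^ 3 + |(ω₀ * s₁ * s₂ / 2 - s₁ * s₂ / 2 - ω₀ * s₂ / 2 + s₁ / 2 + s₂ - 1)| * K ^ 3 + |(1 - s₁ / 2 - ω₀ * s₂ / 2) + (ω₀ * s₁ * s₂ / 2 - s₁ * s₂ / 2 - ω₀ * s₂ / 2 + s₁ / 2 + s₂ - 1)| / 60 + |(ω₀ * s₁ * s₂ / 2 - s₁ * s₂ / 2 - ω₀ * s₂ / 2 + s₁ / 2 + s₂ - 1)| * K / 3 + |(ω₀ * s₁ * s₂ / 2 - s₁ * s₂ / 2 - ω₀ * s₂ / 2 + s₁ / 2 + s₂ - 1)| * K ^ 2) + 1, ?_, ?_⟩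
  · have hK0 : 0 ≤ K := hK.le
    have h3 : 0 ≤ K ^ 3 := pow_nonneg hK0 3
    have h2 : 0 ≤ K ^ 2 := pow_nonneg hK0 2
    have p1 : 0 ≤ |(-(ω₀ * s₁ * s₂) + ω₀ * s₂ + s₁ - 1)| * K ^ 3 := mul_nonneg (abs_nonneg _) h3
    have p2 : 0 ≤ |((s₁ - 1) * (s₂ - 1))| * K ^ 3 := mul_nonneg (abs_nonneg _) h3
    have p3 : 0 ≤ |(ω₀ * s₁ * s₂ / 2 - s₁ * s₂ / 2 - ω₀ * s₂ / 2 + s₁ / 2 + s₂ - 1)| * K ^ 3 := mul_nonneg (abs_nonneg _) h3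
    have p4 : 0 ≤ |(1 - s₁ / 2 - ω₀ * s₂ / 2) + (ω₀ * s₁ * s₂ / 2 - s₁ * s₂ / 2 - ω₀ * s₂ / 2 + s₁ / 2 + s₂ - 1)| := abs_nonneg _
    have p5 : 0 ≤ |(ω₀ * s₁ * s₂ / 2 - s₁ * s₂ / 2 - ω₀ * s₂ / 2 + s₁ / 2 + s₂ - 1)| * K := mul_nonneg (abs_nonneg _) hK0
    have p6 : 0 ≤ |(ω₀ * s₁ * s₂ / 2 - s₁ * s₂ / 2 - ω₀ * s₂ / 2 + s₁ / 2 + s₂ - 1)| * K ^ 2 := mul_nonneg (abs_nonneg _) h2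
    have hS : 0 ≤ (K ^ 3 / 2 + |(-(ω₀ * s₁ * s₂) + ω₀ * s₂ + s₁ - 1)| * K ^ 3 / 2 + 4 * |((s₁ - 1) * (s₂ - 1))| * K ^ 3 + |(ω₀ * s₁ * s₂ / 2 - s₁ * s₂ / 2 - ω₀ * s₂ / 2 + s₁ / 2 + s₂ - 1)| * K ^ 3 + |(1 - s₁ / 2 - ω₀ * s₂ / 2) + (ω₀ * s₁ * s₂ / 2 - s₁ * s₂ / 2 - ω₀ * s₂ / 2 + s₁ / 2 + s₂ - 1)| / 60 + |(ω₀ * s₁ * s₂ / 2 - s₁ * s₂ / 2 - ω₀ * s₂ / 2 + s₁ / 2 + s₂ - 1)| * K / 3 + |(ω₀ * s₁ * s₂ / 2 - s₁ * s₂ / 2 - ω₀ * s₂ / 2 + s₁ / 2 + s₂ - 1)| * K ^ 2) := by linarith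
    linarith [mul_nonneg hMnn hS]
  intro Δx hΔx x t
  obtain ⟨hx1, _hx2⟩ := hΔx
  set δ : ℝ := ε * Δx ^ 2 / κ with hδdef
  have hδpos : 0 < δ := by rw [hδdef]; exact div_pos (mul_pos hε (pow_pos hx1 2)) hκ
  have hδK : δ = K * Δx ^ 2 := by rw [hδdef, hKdef]; ring
  have habsd : |δ| = K * Δx ^ 2 := by rw [abs_of_pos hδpos, hδK]
  have h2d : |2 * δ| = 2 * (K * Δx ^ 2) := by
    rw [abs_of_pos (by linarith), hδK]
  have habsx : |Δx| = Δx := abs_of_pos hx1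
  have hδκ : κ * δ = ε * Δx ^ 2 := by rw [hδdef]; field_simp
  have hM3t : ∀ x' s, |iteratedDeriv 3 (fun s' => φ (x', s')) s| ≤ M := fun x' s => by
    rw [iteratedDeriv_sect2 3 hφ]
    exact abs_pdv_iter_bound he2n 3 hφ (hM 3 (by norm_num)) (x', s)
  have hM6x : ∀ y, |iteratedDeriv 6 (fun y' => φ (y', t)) y| ≤ M := fun y => by
    rw [iteratedDeriv_sect1 6 hφ]
    exact abs_pdv_iter_bound he1n 6 hφ (hM 6 (by norm_num)) (y, t)
  have hM4T : ∀ y, |iteratedDeriv 4 (fun y' => pdv (0, 1) φ (y', t)) y| ≤ M := fun y => by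
    rw [iteratedDeriv_sect1 4 (pdv_contDiff hφ _)]
    exact abs_pdv_iter_bound he1n 4 (pdv_contDiff hφ _)
      (pdv_bound hφ he2n (fun q' => hM 5 (by norm_num) q')) (y, t)
  have hM2TT : ∀ y, |iteratedDeriv 2 (fun y' => pdv (0, 1) (pdv (0, 1) φ) (y', t)) y| ≤ M := fun y => by
    rw [iteratedDeriv_sect1 2 (pdv_contDiff (pdv_contDiff hφ _) _)]
    exact abs_pdv_iter_bound he1n 2 (pdv_contDiff (pdv_contDiff hφ _) _)
      (pdv_bound (pdv_contDiff hφ _) he2n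
        (pdv_bound hφ he2n (fun q' => hM 4 (by norm_num) q'))) (y, t)
  have hTfun : ∀ p : ℝ × ℝ, pdv (0, 1) φ p = κ * pdv (1, 0) (pdv (1, 0) φ) p + R := by
    rintro ⟨a, b⟩
    have h0 := hpde a b
    rw [deriv_sect2 hφ a b] at h0
    have hin : (fun y => deriv (fun z => φ (z, b)) y) = fun y => pdv (1, 0) φ (y, b) :=
      funext fun y => deriv_sect1 hφ y b
    rw [hin, deriv_sect1 (pdv_contDiff hφ _) a b] at h0
    exact h0
  have hT : pdv (0, 1) φ = fun q' => κ * pdv (1, 0) (pdv (1, 0) φ) q' + R := funext hTfun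
  have hX3fun : pdv (1, 0) (pdv (0, 1) φ)
      = fun q' => κ * (pdv (1, 0) (pdv (1, 0) (pdv (1, 0) φ))) q' := by
    funext p
    rw [hT]
    exact pdv_lin (pdv_contDiff (pdv_contDiff hφ _) _) κ R _ p
  have hXXTfun : ∀ p, (pdv (1, 0) (pdv (1, 0) (pdv (0, 1) φ))) p = κ * (pdv (1, 0) (pdv (1, 0) (pdv (1, 0) (pdv (1, 0) φ)))) p := by
    intro p
    rw [hX3fun]
    exact pdv_smul (pdv_contDiff (pdv_contDiff (pdv_contDiff hφ _) _) _) κ _ p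
  have hTTfun : ∀ p, pdv (0, 1) (pdv (0, 1) φ) p
      = κ * pdv (0, 1) (pdv (1, 0) (pdv (1, 0) φ)) p := by
    intro p
    rw [hT]
    exact pdv_lin (pdv_contDiff (pdv_contDiff hφ _) _) κ R _ p
  have hcomm1 : ∀ p, pdv (0, 1) (pdv (1, 0) (pdv (1, 0) φ)) p
      = (pdv (1, 0) (pdv (1, 0) (pdv (0, 1) φ))) p := by
    intro p
    rw [pdv_comm (pdv_contDiff hφ (1, 0)) (0, 1) (1, 0) p]
    have hc : pdv (0, 1) (pdv (1, 0) φ) = pdv (1, 0) (pdv (0, 1) φ) :=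
      funext fun q' => pdv_comm hφ (0, 1) (1, 0) q'
    rw [hc]
  have hu0 : (pdv (0, 1) φ) (x, t) = κ * (pdv (1, 0) (pdv (1, 0) φ)) (x, t) + R := hTfun (x, t)
  have hm2 : (pdv (1, 0) (pdv (1, 0) (pdv (0, 1) φ))) (x, t) = κ * (pdv (1, 0) (pdv (1, 0) (pdv (1, 0) (pdv (1, 0) φ)))) (x, t) := hXXTfun (x, t)
  have hw0 : (pdv (0, 1) (pdv (0, 1) φ)) (x, t) = κ * (κ * (pdv (1, 0) (pdv (1, 0) (pdv (1, 0) (pdv (1, 0) φ)))) (x, t)) := by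
    rw [hTTfun (x, t), hcomm1 (x, t), hXXTfun (x, t)]
  have B1 : |(φ (x, t + δ) - (φ (x, t) + δ * (pdv (0, 1) φ) (x, t) + δ ^ 2 / 2 * (pdv (0, 1) (pdv (0, 1) φ)) (x, t)))| ≤ M * (K * Δx ^ 2) ^ 3 / 2 := by
    have t0 := taylor2 (sect2_contDiff hφ x) (hM3t x) t δ
    rw [iteratedDeriv_sect2 1 hφ, iteratedDeriv_sect2 2 hφ, habsd] at t0
    exact t0
  have B2 : |(φ (x, t - δ) - (φ (x, t) + -δ * (pdv (0, 1) φ) (x, t) + (-δ) ^ 2 / 2 * (pdv (0, 1) (pdv (0, 1) φ)) (x, t)))| ≤ M * (K * Δx ^ 2) ^ 3 / 2 := by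
    have t0 := taylor2 (sect2_contDiff hφ x) (hM3t x) t (-δ)
    rw [iteratedDeriv_sect2 1 hφ, iteratedDeriv_sect2 2 hφ, abs_neg, habsd,
      show t + -δ = t - δ from by ring] at t0
    exact t0
  have B3 : |(φ (x, t - 2 * δ) - (φ (x, t) + -(2 * δ) * (pdv (0, 1) φ) (x, t) + (-(2 * δ)) ^ 2 / 2 * (pdv (0, 1) (pdv (0, 1) φ)) (x, t)))| ≤ M * (2 * (K * Δx ^ 2)) ^ 3 / 2 := by
    have t0 := taylor2 (sect2_contDiff hφ x) (hM3t x) t (-(2 * δ))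
    rw [iteratedDeriv_sect2 1 hφ, iteratedDeriv_sect2 2 hφ, abs_neg, h2d,
      show t + -(2 * δ) = t - 2 * δ from by ring] at t0
    exact t0
  have B4p : |(φ (x + Δx, t - δ) - (φ (x + Δx, t) + -δ * (pdv (0, 1) φ) (x + Δx, t) + (-δ) ^ 2 / 2 * (pdv (0, 1) (pdv (0, 1) φ)) (x + Δx, t)))| ≤ M * (K * Δx ^ 2) ^ 3 / 2 := by
    have t0 := taylor2 (sect2_contDiff hφ (x + Δx)) (hM3t (x + Δx)) t (-δ)
    rw [iteratedDeriv_sect2 1 hφ, iteratedDeriv_sect2 2 hφ, abs_neg, habsd,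
      show t + -δ = t - δ from by ring] at t0
    exact t0
  have B4m : |(φ (x - Δx, t - δ) - (φ (x - Δx, t) + -δ * (pdv (0, 1) φ) (x - Δx, t) + (-δ) ^ 2 / 2 * (pdv (0, 1) (pdv (0, 1) φ)) (x - Δx, t)))| ≤ M * (K * Δx ^ 2) ^ 3 / 2 := by
    have t0 := taylor2 (sect2_contDiff hφ (x - Δx)) (hM3t (x - Δx)) t (-δ)
    rw [iteratedDeriv_sect2 1 hφ, iteratedDeriv_sect2 2 hφ, abs_neg, habsd,
      show t + -δ = t - δ from by ring] at t0
    exact t0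
  have B5p : |(φ (x + Δx, t) - (φ (x, t) + Δx * (pdv (1, 0) φ) (x, t) + Δx ^ 2 / 2 * (pdv (1, 0) (pdv (1, 0) φ)) (x, t) + Δx ^ 3 / 6 * (pdv (1, 0) (pdv (1, 0) (pdv (1, 0) φ))) (x, t) + Δx ^ 4 / 24 * (pdv (1, 0) (pdv (1, 0) (pdv (1, 0) (pdv (1, 0) φ)))) (x, t) + Δx ^ 5 / 120 * (pdv (1, 0) (pdv (1, 0) (pdv (1, 0) (pdv (1, 0) (pdv (1, 0) φ))))) (x, t)))| ≤ M * Δx ^ 6 / 120 := by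
    have t0 := taylor5 (sect1_contDiff hφ t) hM6x x Δx
    rw [iteratedDeriv_sect1 1 hφ, iteratedDeriv_sect1 2 hφ, iteratedDeriv_sect1 3 hφ,
      iteratedDeriv_sect1 4 hφ, iteratedDeriv_sect1 5 hφ, habsx] at t0
    exact t0
  have B5m : |(φ (x - Δx, t) - (φ (x, t) + -Δx * (pdv (1, 0) φ) (x, t) + (-Δx) ^ 2 / 2 * (pdv (1, 0) (pdv (1, 0) φ)) (x, t) + (-Δx) ^ 3 / 6 * (pdv (1, 0) (pdv (1, 0) (pdv (1, 0) φ))) (x, t) + (-Δx) ^ 4 / 24 * (pdv (1, 0) (pdv (1, 0) (pdv (1, 0) (pdv (1, 0) φ)))) (x, t) + (-Δx) ^ 5 / 120 * (pdv (1, 0) (pdv (1, 0) (pdv (1, 0) (pdv (1, 0) (pdv (1, 0) φ))))) (x, t)))| ≤ M * Δx ^ 6 / 120 := by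
    have t0 := taylor5 (sect1_contDiff hφ t) hM6x x (-Δx)
    rw [iteratedDeriv_sect1 1 hφ, iteratedDeriv_sect1 2 hφ, iteratedDeriv_sect1 3 hφ,
      iteratedDeriv_sect1 4 hφ, iteratedDeriv_sect1 5 hφ, abs_neg, habsx,
      show x + -Δx = x - Δx from by ring] at t0
    exact t0
  have B6p : |((pdv (0, 1) φ) (x + Δx, t) - ((pdv (0, 1) φ) (x, t) + Δx * (pdv (1, 0) (pdv (0, 1) φ)) (x, t) + Δx ^ 2 / 2 * (pdv (1, 0) (pdv (1, 0) (pdv (0, 1) φ))) (x, t) + Δx ^ 3 / 6 * (pdv (1, 0) (pdv (1, 0) (pdv (1, 0) (pdv (0, 1) φ)))) (x, t)))| ≤ M * Δx ^ 4 / 6 := by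
    have t0 := taylor3 (sect1_contDiff (pdv_contDiff hφ _) t) hM4T x Δx
    rw [iteratedDeriv_sect1 1 (pdv_contDiff hφ _), iteratedDeriv_sect1 2 (pdv_contDiff hφ _),
      iteratedDeriv_sect1 3 (pdv_contDiff hφ _), habsx] at t0
    exact t0
  have B6m : |((pdv (0, 1) φ) (x - Δx, t) - ((pdv (0, 1) φ) (x, t) + -Δx * (pdv (1, 0) (pdv (0, 1) φ)) (x, t) + (-Δx) ^ 2 / 2 * (pdv (1, 0) (pdv (1, 0) (pdv (0, 1) φ))) (x, t) + (-Δx) ^ 3 / 6 * (pdv (1, 0) (pdv (1, 0) (pdv (1, 0) (pdv (0, 1) φ)))) (x, t)))| ≤ M * Δx ^ 4 / 6 := by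
    have t0 := taylor3 (sect1_contDiff (pdv_contDiff hφ _) t) hM4T x (-Δx)
    rw [iteratedDeriv_sect1 1 (pdv_contDiff hφ _), iteratedDeriv_sect1 2 (pdv_contDiff hφ _),
      iteratedDeriv_sect1 3 (pdv_contDiff hφ _), abs_neg, habsx,
      show x + -Δx = x - Δx from by ring] at t0
    exact t0
  have B7p : |((pdv (0, 1) (pdv (0, 1) φ)) (x + Δx, t) - ((pdv (0, 1) (pdv (0, 1) φ)) (x, t) + Δx * (pdv (1, 0) (pdv (0, 1) (pdv (0, 1) φ))) (x, t)))| ≤ M * Δx ^ 2 := by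
    have t0 := taylor1 (sect1_contDiff (pdv_contDiff (pdv_contDiff hφ _) _) t) hM2TT x Δx
    rw [iteratedDeriv_sect1 1 (pdv_contDiff (pdv_contDiff hφ _) _), habsx] at t0
    exact t0
  have B7m : |((pdv (0, 1) (pdv (0, 1) φ)) (x - Δx, t) - ((pdv (0, 1) (pdv (0, 1) φ)) (x, t) + -Δx * (pdv (1, 0) (pdv (0, 1) (pdv (0, 1) φ))) (x, t)))| ≤ M * Δx ^ 2 := by
    have t0 := taylor1 (sect1_contDiff (pdv_contDiff (pdv_contDiff hφ _) _) t) hM2TT x (-Δx)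
    rw [iteratedDeriv_sect1 1 (pdv_contDiff (pdv_contDiff hφ _) _), abs_neg, habsx,
      show x + -Δx = x - Δx from by ring] at t0
    exact t0
  have key : φ (x, t + δ)
        - ((1 - s₁ / 2 - ω₀ * s₂ / 2) * φ (x - Δx, t)
          + ((ω₀ - 1) * s₂ + 1) * φ (x, t)
          + (1 - s₁ / 2 - ω₀ * s₂ / 2) * φ (x + Δx, t)
          + (ω₀ * s₁ * s₂ / 2 - s₁ * s₂ / 2 - ω₀ * s₂ / 2 + s₁ / 2 + s₂ - 1) *
              φ (x - Δx, t - δ)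
          + (-(ω₀ * s₁ * s₂) + ω₀ * s₂ + s₁ - 1) * φ (x, t - δ)
          + (ω₀ * s₁ * s₂ / 2 - s₁ * s₂ / 2 - ω₀ * s₂ / 2 + s₁ / 2 + s₂ - 1) *
              φ (x + Δx, t - δ)
          + (s₁ - 1) * (s₂ - 1) * φ (x, t - 2 * δ)
          + s₁ * s₂ * δ * R)
      = (φ (x, t + δ) - (φ (x, t) + δ * (pdv (0, 1) φ) (x, t) + δ ^ 2 / 2 * (pdv (0, 1) (pdv (0, 1) φ)) (x, t)))
      - (-(ω₀ * s₁ * s₂) + ω₀ * s₂ + s₁ - 1) * (φ (x, t - δ) - (φ (x, t) + -δ * (pdv (0, 1) φ) (x, t) + (-δ) ^ 2 / 2 * (pdv (0, 1) (pdv (0, 1) φ)) (x, t)))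
      - ((s₁ - 1) * (s₂ - 1)) * (φ (x, t - 2 * δ) - (φ (x, t) + -(2 * δ) * (pdv (0, 1) φ) (x, t) + (-(2 * δ)) ^ 2 / 2 * (pdv (0, 1) (pdv (0, 1) φ)) (x, t)))
      - (ω₀ * s₁ * s₂ / 2 - s₁ * s₂ / 2 - ω₀ * s₂ / 2 + s₁ / 2 + s₂ - 1) * ((φ (x + Δx, t - δ) - (φ (x + Δx, t) + -δ * (pdv (0, 1) φ) (x + Δx, t) + (-δ) ^ 2 / 2 * (pdv (0, 1) (pdv (0, 1) φ)) (x + Δx, t))) + (φ (x - Δx, t - δ) - (φ (x - Δx, t) + -δ * (pdv (0, 1) φ) (x - Δx, t) + (-δ) ^ 2 / 2 * (pdv (0, 1) (pdv (0, 1) φ)) (x - Δx, t))))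
      - ((1 - s₁ / 2 - ω₀ * s₂ / 2) + (ω₀ * s₁ * s₂ / 2 - s₁ * s₂ / 2 - ω₀ * s₂ / 2 + s₁ / 2 + s₂ - 1)) * ((φ (x + Δx, t) - (φ (x, t) + Δx * (pdv (1, 0) φ) (x, t) + Δx ^ 2 / 2 * (pdv (1, 0) (pdv (1, 0) φ)) (x, t) + Δx ^ 3 / 6 * (pdv (1, 0) (pdv (1, 0) (pdv (1, 0) φ))) (x, t) + Δx ^ 4 / 24 * (pdv (1, 0) (pdv (1, 0) (pdv (1, 0) (pdv (1, 0) φ)))) (x, t) + Δx ^ 5 / 120 * (pdv (1, 0) (pdv (1, 0) (pdv (1, 0) (pdv (1, 0) (pdv (1, 0) φ))))) (x, t))) + (φ (x - Δx, t) - (φ (x, t) + -Δx * (pdv (1, 0) φ) (x, t) + (-Δx) ^ 2 / 2 * (pdv (1, 0) (pdv (1, 0) φ)) (x, t) + (-Δx) ^ 3 / 6 * (pdv (1, 0) (pdv (1, 0) (pdv (1, 0) φ))) (x, t) + (-Δx) ^ 4 / 24 * (pdv (1, 0) (pdv (1, 0) (pdv (1, 0) (pdv (1, 0) φ)))) (x,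 t) + (-Δx) ^ 5 / 120 * (pdv (1, 0) (pdv (1, 0) (pdv (1, 0) (pdv (1, 0) (pdv (1, 0) φ))))) (x, t))))
      + (ω₀ * s₁ * s₂ / 2 - s₁ * s₂ / 2 - ω₀ * s₂ / 2 + s₁ / 2 + s₂ - 1) * δ * (((pdv (0, 1) φ) (x + Δx, t) - ((pdv (0, 1) φ) (x, t) + Δx * (pdv (1, 0) (pdv (0, 1) φ)) (x, t) + Δx ^ 2 / 2 * (pdv (1, 0) (pdv (1, 0) (pdv (0, 1) φ))) (x, t) + Δx ^ 3 / 6 * (pdv (1, 0) (pdv (1, 0) (pdv (1, 0) (pdv (0, 1) φ)))) (x, t))) + ((pdv (0, 1) φ) (x - Δx, t) - ((pdv (0, 1) φ) (x, t) + -Δx * (pdv (1, 0) (pdv (0, 1) φ)) (x, t) + (-Δx) ^ 2 / 2 * (pdv (1, 0) (pdv (1, 0) (pdv (0, 1) φ))) (x, t) + (-Δx) ^ 3 / 6 * (pdv (1, 0) (pdv (1, 0) (pdv (1, 0) (pdv (0, 1) φ)))) (x, t))))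
      - (ω₀ * s₁ * s₂ / 2 - s₁ * s₂ / 2 - ω₀ * s₂ / 2 + s₁ / 2 + s₂ - 1) * (δ ^ 2 / 2) * (((pdv (0, 1) (pdv (0, 1) φ)) (x + Δx, t) - ((pdv (0, 1) (pdv (0, 1) φ)) (x, t) + Δx * (pdv (1, 0) (pdv (0, 1) (pdv (0, 1) φ))) (x, t))) + ((pdv (0, 1) (pdv (0, 1) φ)) (x - Δx, t) - ((pdv (0, 1) (pdv (0, 1) φ)) (x, t) + -Δx * (pdv (1, 0) (pdv (0, 1) (pdv (0, 1) φ))) (x, t)))) := by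
    linear_combination (s₁ * s₂ * δ) * hu0 + (s₂ * δ * δ + s₁ * δ * δ - 3 / 2 * s₁ * s₂ * δ * δ) * hw0 + (δ * Δx * Δx * (-1 + s₂ - s₂ * ω₀ / 2 + s₁ / 2 - s₁ * s₂ / 2 + s₁ * s₂ * ω₀ / 2)) * hm2 + (-(Δx * Δx * (pdv (1, 0) (pdv (1, 0) (pdv (1, 0) (pdv (1, 0) φ)))) (x, t)) + s₂ * Δx * Δx * (pdv (1, 0) (pdv (1, 0) (pdv (1, 0) (pdv (1, 0) φ)))) (x, t) + s₂ * κ * δ * (pdv (1, 0) (pdv (1, 0) (pdv (1, 0) (pdv (1, 0) φ)))) (x, t) + s₂ * ε * Δx * Δx * (pdv (1, 0) (pdv (1, 0) (pdv (1, 0) (pdv (1, 0) φ)))) (x, t) - s₂ * ω₀ / 2 * Δx * Δx * (pdv (1, 0) (pdv (1, 0) (pdv (1, 0) (pdv (1, 0) φ)))) (x, t) + s₁ / 2 * Δx * Δx * (pdv (1, 0) (pdv (1, 0) (pdv (1, 0) (pdv (1, 0) φ)))) (x, t) + s₁ * κ * δ * (pdv (1, 0) (pdv (1, 0) (pdv (1,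 0) (pdv (1, 0) φ)))) (x, t) + s₁ * ε * Δx * Δx * (pdv (1, 0) (pdv (1, 0) (pdv (1, 0) (pdv (1, 0) φ)))) (x, t) + s₁ * s₂ * (pdv (1, 0) (pdv (1, 0) φ)) (x, t) - s₁ * s₂ / 2 * Δx * Δx * (pdv (1, 0) (pdv (1, 0) (pdv (1, 0) (pdv (1, 0) φ)))) (x, t) - 3 / 2 * s₁ * s₂ * κ * δ * (pdv (1, 0) (pdv (1, 0) (pdv (1, 0) (pdv (1, 0) φ)))) (x, t) - 3 / 2 * s₁ * s₂ * ε * Δx * Δx * (pdv (1, 0) (pdv (1, 0) (pdv (1, 0) (pdv (1, 0) φ)))) (x, t) + s₁ * s₂ * ω₀ / 2 * Δx * Δx * (pdv (1, 0) (pdv (1, 0) (pdv (1, 0) (pdv (1, 0) φ)))) (x, t)) * hδκ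
      + (-(Δx ^ 2) * (pdv (1, 0) (pdv (1, 0) φ)) (x, t)) * hC2 + (-(Δx ^ 4) * (pdv (1, 0) (pdv (1, 0) (pdv (1, 0) (pdv (1, 0) φ)))) (x, t)) * hC4
  rw [key]
  set r1 : ℝ := φ (x, t + δ) - (φ (x, t) + δ * (pdv (0, 1) φ) (x, t) + δ ^ 2 / 2 * (pdv (0, 1) (pdv (0, 1) φ)) (x, t)) with hr1def
  set r2 : ℝ := φ (x, t - δ) - (φ (x, t) + -δ * (pdv (0, 1) φ) (x, t) + (-δ) ^ 2 / 2 * (pdv (0, 1) (pdv (0, 1) φ)) (x, t)) with hr2def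
  set r3 : ℝ := φ (x, t - 2 * δ) - (φ (x, t) + -(2 * δ) * (pdv (0, 1) φ) (x, t) + (-(2 * δ)) ^ 2 / 2 * (pdv (0, 1) (pdv (0, 1) φ)) (x, t)) with hr3def
  set r4p : ℝ := φ (x + Δx, t - δ) - (φ (x + Δx, t) + -δ * (pdv (0, 1) φ) (x + Δx, t) + (-δ) ^ 2 / 2 * (pdv (0, 1) (pdv (0, 1) φ)) (x + Δx, t)) with hr4pdef
  set r4m : ℝ := φ (x - Δx, t - δ) - (φ (x - Δx, t) + -δ * (pdv (0, 1) φ) (x - Δx, t) + (-δ) ^ 2 / 2 * (pdv (0, 1) (pdv (0, 1) φ)) (x - Δx, t)) with hr4mdef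
  set r5p : ℝ := φ (x + Δx, t) - (φ (x, t) + Δx * (pdv (1, 0) φ) (x, t) + Δx ^ 2 / 2 * (pdv (1, 0) (pdv (1, 0) φ)) (x, t) + Δx ^ 3 / 6 * (pdv (1, 0) (pdv (1, 0) (pdv (1, 0) φ))) (x, t) + Δx ^ 4 / 24 * (pdv (1, 0) (pdv (1, 0) (pdv (1, 0) (pdv (1, 0) φ)))) (x, t) + Δx ^ 5 / 120 * (pdv (1, 0) (pdv (1, 0) (pdv (1, 0) (pdv (1, 0) (pdv (1, 0) φ))))) (x, t)) with hr5pdef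
  set r5m : ℝ := φ (x - Δx, t) - (φ (x, t) + -Δx * (pdv (1, 0) φ) (x, t) + (-Δx) ^ 2 / 2 * (pdv (1, 0) (pdv (1, 0) φ)) (x, t) + (-Δx) ^ 3 / 6 * (pdv (1, 0) (pdv (1, 0) (pdv (1, 0) φ))) (x, t) + (-Δx) ^ 4 / 24 * (pdv (1, 0) (pdv (1, 0) (pdv (1, 0) (pdv (1, 0) φ)))) (x, t) + (-Δx) ^ 5 / 120 * (pdv (1, 0) (pdv (1, 0) (pdv (1, 0) (pdv (1, 0) (pdv (1, 0) φ))))) (x, t)) with hr5mdef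
  set r6p : ℝ := (pdv (0, 1) φ) (x + Δx, t) - ((pdv (0, 1) φ) (x, t) + Δx * (pdv (1, 0) (pdv (0, 1) φ)) (x, t) + Δx ^ 2 / 2 * (pdv (1, 0) (pdv (1, 0) (pdv (0, 1) φ))) (x, t) + Δx ^ 3 / 6 * (pdv (1, 0) (pdv (1, 0) (pdv (1, 0) (pdv (0, 1) φ)))) (x, t)) with hr6pdef
  set r6m : ℝ := (pdv (0, 1) φ) (x - Δx, t) - ((pdv (0, 1) φ) (x, t) + -Δx * (pdv (1, 0) (pdv (0, 1) φ)) (x, t) + (-Δx) ^ 2 / 2 * (pdv (1, 0) (pdv (1, 0) (pdv (0, 1) φ))) (x, t) + (-Δx) ^ 3 / 6 * (pdv (1, 0) (pdv (1, 0) (pdv (1, 0) (pdv (0, 1) φ)))) (x, t)) with hr6mdef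
  set r7p : ℝ := (pdv (0, 1) (pdv (0, 1) φ)) (x + Δx, t) - ((pdv (0, 1) (pdv (0, 1) φ)) (x, t) + Δx * (pdv (1, 0) (pdv (0, 1) (pdv (0, 1) φ))) (x, t)) with hr7pdef
  set r7m : ℝ := (pdv (0, 1) (pdv (0, 1) φ)) (x - Δx, t) - ((pdv (0, 1) (pdv (0, 1) φ)) (x, t) + -Δx * (pdv (1, 0) (pdv (0, 1) (pdv (0, 1) φ))) (x, t)) with hr7mdef
  have t2 : |(-(ω₀ * s₁ * s₂) + ω₀ * s₂ + s₁ - 1) * r2| ≤ |(-(ω₀ * s₁ * s₂) + ω₀ * s₂ + s₁ - 1)| * (M * (K * Δx ^ 2) ^ 3 / 2) := by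
    rw [abs_mul]
    exact mul_le_mul_of_nonneg_left B2 (abs_nonneg _)
  have t3 : |((s₁ - 1) * (s₂ - 1)) * r3| ≤ |((s₁ - 1) * (s₂ - 1))| * (M * (2 * (K * Δx ^ 2)) ^ 3 / 2) := by
    rw [abs_mul]
    exact mul_le_mul_of_nonneg_left B3 (abs_nonneg _)
  have t4 : |(ω₀ * s₁ * s₂ / 2 - s₁ * s₂ / 2 - ω₀ * s₂ / 2 + s₁ / 2 + s₂ - 1) * (r4p + r4m)|
      ≤ |(ω₀ * s₁ * s₂ / 2 - s₁ * s₂ / 2 - ω₀ * s₂ / 2 + s₁ / 2 + s₂ - 1)| * (M * (K * Δx ^ 2) ^ 3 / 2 + M * (K * Δx ^ 2) ^ 3 / 2) := by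
    rw [abs_mul]
    exact mul_le_mul_of_nonneg_left ((abs_add_le _ _).trans (add_le_add B4p B4m)) (abs_nonneg _)
  have t5 : |((1 - s₁ / 2 - ω₀ * s₂ / 2) + (ω₀ * s₁ * s₂ / 2 - s₁ * s₂ / 2 - ω₀ * s₂ / 2 + s₁ / 2 + s₂ - 1)) * (r5p + r5m)|
      ≤ |(1 - s₁ / 2 - ω₀ * s₂ / 2) + (ω₀ * s₁ * s₂ / 2 - s₁ * s₂ / 2 - ω₀ * s₂ / 2 + s₁ / 2 + s₂ - 1)| * (M * Δx ^ 6 / 120 + M * Δx ^ 6 / 120) := by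
    rw [abs_mul]
    exact mul_le_mul_of_nonneg_left ((abs_add_le _ _).trans (add_le_add B5p B5m)) (abs_nonneg _)
  have t6 : |(ω₀ * s₁ * s₂ / 2 - s₁ * s₂ / 2 - ω₀ * s₂ / 2 + s₁ / 2 + s₂ - 1) * δ * (r6p + r6m)|
      ≤ |(ω₀ * s₁ * s₂ / 2 - s₁ * s₂ / 2 - ω₀ * s₂ / 2 + s₁ / 2 + s₂ - 1)| * (K * Δx ^ 2) * (M * Δx ^ 4 / 6 + M * Δx ^ 4 / 6) := by
    rw [abs_mul, abs_mul, habsd]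
    exact mul_le_mul_of_nonneg_left ((abs_add_le _ _).trans (add_le_add B6p B6m))
      (mul_nonneg (abs_nonneg _) (mul_nonneg hK.le (by positivity)))
  have t7 : |(ω₀ * s₁ * s₂ / 2 - s₁ * s₂ / 2 - ω₀ * s₂ / 2 + s₁ / 2 + s₂ - 1) * (δ ^ 2 / 2) * (r7p + r7m)|
      ≤ |(ω₀ * s₁ * s₂ / 2 - s₁ * s₂ / 2 - ω₀ * s₂ / 2 + s₁ / 2 + s₂ - 1)| * ((K * Δx ^ 2) ^ 2 / 2) * (M * Δx ^ 2 + M * Δx ^ 2) := by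
    rw [abs_mul, abs_mul, abs_of_nonneg (by positivity : (0:ℝ) ≤ δ ^ 2 / 2), hδK]
    exact mul_le_mul_of_nonneg_left ((abs_add_le _ _).trans (add_le_add B7p B7m))
      (mul_nonneg (abs_nonneg _) (by positivity))
  have tri : |r1 - (-(ω₀ * s₁ * s₂) + ω₀ * s₂ + s₁ - 1) * r2 - ((s₁ - 1) * (s₂ - 1)) * r3
        - (ω₀ * s₁ * s₂ / 2 - s₁ * s₂ / 2 - ω₀ * s₂ / 2 + s₁ / 2 + s₂ - 1) * (r4p + r4m)
        - ((1 - s₁ / 2 - ω₀ * s₂ / 2) + (ω₀ * s₁ * s₂ / 2 - s₁ * s₂ / 2 - ω₀ * s₂ / 2 + s₁ / 2 + s₂ - 1)) * (r5p + r5m)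
        + (ω₀ * s₁ * s₂ / 2 - s₁ * s₂ / 2 - ω₀ * s₂ / 2 + s₁ / 2 + s₂ - 1) * δ * (r6p + r6m)
        - (ω₀ * s₁ * s₂ / 2 - s₁ * s₂ / 2 - ω₀ * s₂ / 2 + s₁ / 2 + s₂ - 1) * (δ ^ 2 / 2) * (r7p + r7m)|
      ≤ |r1| + |(-(ω₀ * s₁ * s₂) + ω₀ * s₂ + s₁ - 1) * r2| + |((s₁ - 1) * (s₂ - 1)) * r3|
        + |(ω₀ * s₁ * s₂ / 2 - s₁ * s₂ / 2 - ω₀ * s₂ / 2 + s₁ / 2 + s₂ - 1) * (r4p + r4m)|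
        + |((1 - s₁ / 2 - ω₀ * s₂ / 2) + (ω₀ * s₁ * s₂ / 2 - s₁ * s₂ / 2 - ω₀ * s₂ / 2 + s₁ / 2 + s₂ - 1)) * (r5p + r5m)|
        + |(ω₀ * s₁ * s₂ / 2 - s₁ * s₂ / 2 - ω₀ * s₂ / 2 + s₁ / 2 + s₂ - 1) * δ * (r6p + r6m)|
        + |(ω₀ * s₁ * s₂ / 2 - s₁ * s₂ / 2 - ω₀ * s₂ / 2 + s₁ / 2 + s₂ - 1) * (δ ^ 2 / 2) * (r7p + r7m)| := by
    calc |r1 - (-(ω₀ * s₁ * s₂) + ω₀ * s₂ + s₁ - 1) * r2 - ((s₁ - 1) * (s₂ - 1)) * r3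
        - (ω₀ * s₁ * s₂ / 2 - s₁ * s₂ / 2 - ω₀ * s₂ / 2 + s₁ / 2 + s₂ - 1) * (r4p + r4m)
        - ((1 - s₁ / 2 - ω₀ * s₂ / 2) + (ω₀ * s₁ * s₂ / 2 - s₁ * s₂ / 2 - ω₀ * s₂ / 2 + s₁ / 2 + s₂ - 1)) * (r5p + r5m)
        + (ω₀ * s₁ * s₂ / 2 - s₁ * s₂ / 2 - ω₀ * s₂ / 2 + s₁ / 2 + s₂ - 1) * δ * (r6p + r6m)
        - (ω₀ * s₁ * s₂ / 2 - s₁ * s₂ / 2 - ω₀ * s₂ / 2 + s₁ / 2 + s₂ - 1) * (δ ^ 2 / 2) * (r7p + r7m)|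
        ≤ |r1 - (-(ω₀ * s₁ * s₂) + ω₀ * s₂ + s₁ - 1) * r2 - ((s₁ - 1) * (s₂ - 1)) * r3
        - (ω₀ * s₁ * s₂ / 2 - s₁ * s₂ / 2 - ω₀ * s₂ / 2 + s₁ / 2 + s₂ - 1) * (r4p + r4m)
        - ((1 - s₁ / 2 - ω₀ * s₂ / 2) + (ω₀ * s₁ * s₂ / 2 - s₁ * s₂ / 2 - ω₀ * s₂ / 2 + s₁ / 2 + s₂ - 1)) * (r5p + r5m)
        + (ω₀ * s₁ * s₂ / 2 - s₁ * s₂ / 2 - ω₀ * s₂ / 2 + s₁ / 2 + s₂ - 1) * δ * (r6p + r6m)| + |(ω₀ * s₁ * s₂ / 2 - s₁ * s₂ / 2 - ω₀ * s₂ / 2 + s₁ / 2 + s₂ - 1) * (δ ^ 2 / 2) * (r7p + r7m)| := abs_sub _ _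
      _ ≤ (|r1 - (-(ω₀ * s₁ * s₂) + ω₀ * s₂ + s₁ - 1) * r2 - ((s₁ - 1) * (s₂ - 1)) * r3
        - (ω₀ * s₁ * s₂ / 2 - s₁ * s₂ / 2 - ω₀ * s₂ / 2 + s₁ / 2 + s₂ - 1) * (r4p + r4m)
        - ((1 - s₁ / 2 - ω₀ * s₂ / 2) + (ω₀ * s₁ * s₂ / 2 - s₁ * s₂ / 2 - ω₀ * s₂ / 2 + s₁ / 2 + s₂ - 1)) * (r5p + r5m)| + |(ω₀ * s₁ * s₂ / 2 - s₁ * s₂ / 2 - ω₀ * s₂ / 2 + s₁ / 2 + s₂ - 1) * δ * (r6p + r6m)|)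
          + |(ω₀ * s₁ * s₂ / 2 - s₁ * s₂ / 2 - ω₀ * s₂ / 2 + s₁ / 2 + s₂ - 1) * (δ ^ 2 / 2) * (r7p + r7m)| := by
          gcongr
          exact abs_add_le _ _
      _ ≤ ((|r1 - (-(ω₀ * s₁ * s₂) + ω₀ * s₂ + s₁ - 1) * r2 - ((s₁ - 1) * (s₂ - 1)) * r3
        - (ω₀ * s₁ * s₂ / 2 - s₁ * s₂ / 2 - ω₀ * s₂ / 2 + s₁ / 2 + s₂ - 1) * (r4p + r4m)| + |((1 - s₁ / 2 - ω₀ * s₂ / 2) + (ω₀ * s₁ * s₂ / 2 - s₁ * s₂ / 2 - ω₀ * s₂ / 2 + s₁ / 2 + s₂ - 1)) * (r5p + r5m)|) + |(ω₀ * s₁ * s₂ / 2 - s₁ * s₂ / 2 - ω₀ * s₂ / 2 + s₁ / 2 + s₂ - 1) * δ * (r6p + r6m)|)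
          + |(ω₀ * s₁ * s₂ / 2 - s₁ * s₂ / 2 - ω₀ * s₂ / 2 + s₁ / 2 + s₂ - 1) * (δ ^ 2 / 2) * (r7p + r7m)| := by
          gcongr
          exact abs_sub _ _
      _ ≤ (((|r1 - (-(ω₀ * s₁ * s₂) + ω₀ * s₂ + s₁ - 1) * r2 - ((s₁ - 1) * (s₂ - 1)) * r3| + |(ω₀ * s₁ * s₂ / 2 - s₁ * s₂ / 2 - ω₀ * s₂ / 2 + s₁ / 2 + s₂ - 1) * (r4p + r4m)|)
          + |((1 - s₁ / 2 - ω₀ * s₂ / 2) + (ω₀ * s₁ * s₂ / 2 - s₁ * s₂ / 2 - ω₀ * s₂ / 2 + s₁ / 2 + s₂ - 1)) * (r5p + r5m)|) + |(ω₀ * s₁ * s₂ / 2 - s₁ * s₂ / 2 - ω₀ * s₂ / 2 + s₁ / 2 + s₂ - 1) * δ * (r6p + r6m)|)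
          + |(ω₀ * s₁ * s₂ / 2 - s₁ * s₂ / 2 - ω₀ * s₂ / 2 + s₁ / 2 + s₂ - 1) * (δ ^ 2 / 2) * (r7p + r7m)| := by
          gcongr
          exact abs_sub _ _
      _ ≤ ((((|r1 - (-(ω₀ * s₁ * s₂) + ω₀ * s₂ + s₁ - 1) * r2| + |((s₁ - 1) * (s₂ - 1)) * r3|) + |(ω₀ * s₁ * s₂ / 2 - s₁ * s₂ / 2 - ω₀ * s₂ / 2 + s₁ / 2 + s₂ - 1) * (r4p + r4m)|)
          + |((1 - s₁ / 2 - ω₀ * s₂ / 2) + (ω₀ * s₁ * s₂ / 2 - s₁ * s₂ / 2 - ω₀ * s₂ / 2 + s₁ / 2 + s₂ - 1)) * (r5p + r5m)|) + |(ω₀ * s₁ * s₂ / 2 - s₁ * s₂ / 2 - ω₀ * s₂ / 2 + s₁ / 2 + s₂ - 1) * δ * (r6p + r6m)|)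
          + |(ω₀ * s₁ * s₂ / 2 - s₁ * s₂ / 2 - ω₀ * s₂ / 2 + s₁ / 2 + s₂ - 1) * (δ ^ 2 / 2) * (r7p + r7m)| := by
          gcongr
          exact abs_sub _ _
      _ ≤ (((((|r1| + |(-(ω₀ * s₁ * s₂) + ω₀ * s₂ + s₁ - 1) * r2|) + |((s₁ - 1) * (s₂ - 1)) * r3|) + |(ω₀ * s₁ * s₂ / 2 - s₁ * s₂ / 2 - ω₀ * s₂ / 2 + s₁ / 2 + s₂ - 1) * (r4p + r4m)|)
          + |((1 - s₁ / 2 - ω₀ * s₂ / 2) + (ω₀ * s₁ * s₂ / 2 - s₁ * s₂ / 2 - ω₀ * s₂ / 2 + s₁ / 2 + s₂ - 1)) * (r5p + r5m)|) + |(ω₀ * s₁ * s₂ / 2 - s₁ * s₂ / 2 - ω₀ * s₂ / 2 + s₁ / 2 + s₂ - 1) * δ * (r6p + r6m)|)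
          + |(ω₀ * s₁ * s₂ / 2 - s₁ * s₂ / 2 - ω₀ * s₂ / 2 + s₁ / 2 + s₂ - 1) * (δ ^ 2 / 2) * (r7p + r7m)| := by
          gcongr
          exact abs_sub _ _
      _ = |r1| + |(-(ω₀ * s₁ * s₂) + ω₀ * s₂ + s₁ - 1) * r2| + |((s₁ - 1) * (s₂ - 1)) * r3|
        + |(ω₀ * s₁ * s₂ / 2 - s₁ * s₂ / 2 - ω₀ * s₂ / 2 + s₁ / 2 + s₂ - 1) * (r4p + r4m)|
        + |((1 - s₁ / 2 - ω₀ * s₂ / 2) + (ω₀ * s₁ * s₂ / 2 - s₁ * s₂ / 2 - ω₀ * s₂ / 2 + s₁ / 2 + s₂ - 1)) * (r5p + r5m)|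
        + |(ω₀ * s₁ * s₂ / 2 - s₁ * s₂ / 2 - ω₀ * s₂ / 2 + s₁ / 2 + s₂ - 1) * δ * (r6p + r6m)|
        + |(ω₀ * s₁ * s₂ / 2 - s₁ * s₂ / 2 - ω₀ * s₂ / 2 + s₁ / 2 + s₂ - 1) * (δ ^ 2 / 2) * (r7p + r7m)| := by ring
  have hsum : M * (K * Δx ^ 2) ^ 3 / 2
      + |(-(ω₀ * s₁ * s₂) + ω₀ * s₂ + s₁ - 1)| * (M * (K * Δx ^ 2) ^ 3 / 2)
      + |((s₁ - 1) * (s₂ - 1))| * (M * (2 * (K * Δx ^ 2)) ^ 3 / 2)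
      + |(ω₀ * s₁ * s₂ / 2 - s₁ * s₂ / 2 - ω₀ * s₂ / 2 + s₁ / 2 + s₂ - 1)| * (M * (K * Δx ^ 2) ^ 3 / 2 + M * (K * Δx ^ 2) ^ 3 / 2)
      + |(1 - s₁ / 2 - ω₀ * s₂ / 2) + (ω₀ * s₁ * s₂ / 2 - s₁ * s₂ / 2 - ω₀ * s₂ / 2 + s₁ / 2 + s₂ - 1)| * (M * Δx ^ 6 / 120 + M * Δx ^ 6 / 120)
      + |(ω₀ * s₁ * s₂ / 2 - s₁ * s₂ / 2 - ω₀ * s₂ / 2 + s₁ / 2 + s₂ - 1)| * (K * Δx ^ 2) * (M * Δx ^ 4 / 6 + M * Δx ^ 4 / 6)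
      + |(ω₀ * s₁ * s₂ / 2 - s₁ * s₂ / 2 - ω₀ * s₂ / 2 + s₁ / 2 + s₂ - 1)| * ((K * Δx ^ 2) ^ 2 / 2) * (M * Δx ^ 2 + M * Δx ^ 2)
      = M * (K ^ 3 / 2 + |(-(ω₀ * s₁ * s₂) + ω₀ * s₂ + s₁ - 1)| * K ^ 3 / 2 + 4 * |((s₁ - 1) * (s₂ - 1))| * K ^ 3 + |(ω₀ * s₁ * s₂ / 2 - s₁ * s₂ / 2 - ω₀ * s₂ / 2 + s₁ / 2 + s₂ - 1)| * K ^ 3 + |(1 - s₁ / 2 - ω₀ * s₂ / 2) + (ω₀ * s₁ * s₂ / 2 - s₁ * s₂ / 2 - ω₀ * s₂ / 2 + s₁ / 2 + s₂ - 1)| / 60 + |(ω₀ * s₁ * s₂ / 2 - s₁ * s₂ / 2 - ω₀ * s₂ / 2 + s₁ / 2 + s₂ - 1)| * K / 3 + |(ω₀ * s₁ * s₂ / 2 - s₁ * s₂ / 2 - ω₀ * s₂ / 2 + s₁ / 2 + s₂ - 1)| * K ^ 2) * Δx ^ 6 := by ring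
  have h6 : (0:ℝ) ≤ Δx ^ 6 := by positivity
  linarith [tri, B1, t2, t3, t4, t5, t6, t7, hsum]
end
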